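/- arXiv:2105.13666 — 11 statements merged into one kernel-verified Lean document; each statement's English description precedes it below -/
import Mathlib

section
/- Let D be a finite-dimensional graded-division algebra over a field F with abelian support T and D_e = F·1. Suppose D admits a degree-preserving F-linear involution φ₀ (an antiautomorphism of order 2 with φ₀(D_t) = D_t for all t) such that (D, φ₀) is central simple as an algebra with involution. Then the commutation bicharacter β takes values in {±1}, and T modulo the radical of β is an elementary abelian 2-group. Moreover, if char F = 2 then T is trivial, i.e., D = F. -/
private lemma smul_cancel_aux {F D : Type*} [Field F] [AddCommGroup D] [Module F D]
    {a : F} {w : D} (hw : w ≠ 0) (h : a • w = w) : a = 1 := by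
  have h0 : (a - 1) • w = 0 := by rw [sub_smul, one_smul, h, sub_self]
  rcases smul_eq_zero.mp h0 with h1 | h1
  · exact sub_eq_zero.mp h1
  · exact absurd h1 hw

/-- Lemma on graded-division algebras with involution (central simple as an algebra with
involution, identity component `F·1`): the commutation bicharacter `β` takes values in
`{±1}`, the support modulo the radical of `β` is an elementary abelian 2-group
(i.e. `β(s², t) = 1` for all `s, t` in the support), and if `char F = 2` then the
support is trivial, i.e. `D_g = 0` for `g ≠ e`. -/
theorem stmt_3 {F : Type*} [Field F] {G : Type*} [CommGroup G] [DecidableEq G]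
    {D : Type*} [Ring D] [Algebra F D] [FiniteDimensional F D]
    (𝒜 : G → Submodule F D)
    (hdecomp : DirectSum.IsInternal 𝒜)
    (hone : (1 : D) ∈ 𝒜 1)
    (hmul : ∀ g h : G, ∀ x ∈ 𝒜 g, ∀ y ∈ 𝒜 h, x * y ∈ 𝒜 (g * h))
    (hdiv : ∀ g : G, ∀ x ∈ 𝒜 g, x ≠ 0 → IsUnit x)
    (hDe : 𝒜 (1 : G) = Submodule.span F {(1 : D)})
    (φ₀ : D →ₗ[F] D)
    (hanti : ∀ x y : D, φ₀ (x * y) = φ₀ y * φ₀ x)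
    (hinv : ∀ x : D, φ₀ (φ₀ x) = x)
    (hdeg : ∀ g : G, ∀ x ∈ 𝒜 g, φ₀ x ∈ 𝒜 g)
    (hsimple : ∀ I : TwoSidedIdeal D, (∀ x ∈ I, φ₀ x ∈ I) → I = ⊥ ∨ I = ⊤)
    (hcentral : ∀ x : D, (∀ y : D, x * y = y * x) → φ₀ x = x →
      ∃ r : F, x = algebraMap F D r)
    (β : G → G → Fˣ)
    (hβ : ∀ s t : G, ∀ x ∈ 𝒜 s, ∀ y ∈ 𝒜 t, x * y = (β s t : F) • (y * x)) :
    (∀ s t : G, 𝒜 s ≠ ⊥ → 𝒜 t ≠ ⊥ → (β s t : F) = 1 ∨ (β s t : F) = -1) ∧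
    (∀ s t : G, 𝒜 s ≠ ⊥ → 𝒜 t ≠ ⊥ → β (s * s) t = 1) ∧
    ((2 : F) = 0 → ∀ g : G, g ≠ 1 → 𝒜 g = ⊥) := by
  -- φ₀ is injective
  have hφinj : ∀ x : D, φ₀ x = 0 → x = 0 := by
    intro x hx
    have := hinv x
    rw [hx, map_zero] at this
    exact this.symm
  -- Part 1
  have part1 : ∀ s t : G, 𝒜 s ≠ ⊥ → 𝒜 t ≠ ⊥ → (β s t : F) = 1 ∨ (β s t : F) = -1 := by
    intro s t hs ht
    obtain ⟨x, hx, hx0⟩ := Submodule.exists_mem_ne_zero_of_ne_bot hs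
    obtain ⟨y, hy, hy0⟩ := Submodule.exists_mem_ne_zero_of_ne_bot ht
    haveI : Nontrivial D := ⟨⟨x, 0, hx0⟩⟩
    have hfx : φ₀ x ∈ 𝒜 s := hdeg s x hx
    have hfy : φ₀ y ∈ 𝒜 t := hdeg t y hy
    have hfx0 : φ₀ x ≠ 0 := fun h => hx0 (hφinj x h)
    have hfy0 : φ₀ y ≠ 0 := fun h => hy0 (hφinj y h)
    have hw0 : φ₀ y * φ₀ x ≠ 0 :=
      ((hdiv t _ hfy hfy0).mul (hdiv s _ hfx hfx0)).ne_zero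
    -- apply φ₀ to x*y = β • (y*x)
    have e1 : φ₀ (x * y) = (β s t : F) • φ₀ (y * x) := by
      rw [hβ s t x hx y hy, map_smul]
    rw [hanti x y, hanti y x] at e1
    rw [hβ s t _ hfx _ hfy] at e1
    rw [smul_smul] at e1
    have hsq : ((β s t : F) * (β s t : F)) = 1 :=
      smul_cancel_aux hw0 e1.symm
    exact mul_self_eq_one_iff.mp hsq
  refine ⟨part1, ?_, ?_⟩
  -- Part 2
  · intro s t hs ht
    obtain ⟨x, hx, hx0⟩ := Submodule.exists_mem_ne_zero_of_ne_bot hs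
    obtain ⟨y, hy, hy0⟩ := Submodule.exists_mem_ne_zero_of_ne_bot ht
    haveI : Nontrivial D := ⟨⟨x, 0, hx0⟩⟩
    have hx2 : x * x ∈ 𝒜 (s * s) := hmul s s x hx x hx
    have hw0 : y * (x * x) ≠ 0 :=
      ((hdiv t _ hy hy0).mul ((hdiv s _ hx hx0).mul (hdiv s _ hx hx0))).ne_zero
    set c : F := (β s t : F) with hc
    have hcsq : c * c = 1 := by
      rcases part1 s t hs ht with h | h <;> rw [← hc] at * <;> rw [h] <;> ring
    have hxy : x * y = c • (y * x) := hβ s t x hx y hy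
    have e2 : (x * x) * y = y * (x * x) := by
      calc (x * x) * y = x * (x * y) := by rw [mul_assoc]
        _ = c • (x * (y * x)) := by rw [hxy, mul_smul_comm]
        _ = c • ((x * y) * x) := by rw [mul_assoc]
        _ = c • ((c • (y * x)) * x) := by rw [hxy]
        _ = (c * c) • (y * (x * x)) := by
            rw [smul_mul_assoc, smul_smul, mul_assoc]
        _ = y * (x * x) := by rw [hcsq, one_smul]
    have e3 : (β (s * s) t : F) • (y * (x * x)) = y * (x * x) := by
      rw [← hβ (s * s) t _ hx2 y hy, e2]
    exact Units.ext (smul_cancel_aux hw0 e3)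
  -- Part 3
  · intro h2 g hg
    have hneg : (-1 : F) = 1 := by
      have : (1 : F) + 1 = 0 := by rw [one_add_one_eq_two, h2]
      linear_combination -this
    -- homogeneous elements commute
    have hhom : ∀ g h : G, ∀ x ∈ 𝒜 g, ∀ y ∈ 𝒜 h, x * y = y * x := by
      intro g h x hx y hy
      by_cases hx0 : x = 0
      · simp [hx0]
      by_cases hy0 : y = 0
      · simp [hy0]
      have hgb : 𝒜 g ≠ ⊥ := fun hb => hx0 (by simpa [hb] using hx)
      have hhb : 𝒜 h ≠ ⊥ := fun hb => hy0 (by simpa [hb] using hy)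
      have hb1 : (β g h : F) = 1 := by
        rcases part1 g h hgb hhb with h1 | h1
        · exact h1
        · rw [h1, hneg]
      rw [hβ g h x hx y hy, hb1, one_smul]
    have hsup := hdecomp.submodule_iSup_eq_top
    have hcomm : ∀ x y : D, x * y = y * x := by
      have step : ∀ (g : G), ∀ x ∈ 𝒜 g, ∀ y : D, x * y = y * x := by
        intro g x hx y
        have hy : y ∈ ⨆ h, 𝒜 h := hsup ▸ Submodule.mem_top
        refine Submodule.iSup_induction 𝒜 (motive := fun y => x * y = y * x) hy ?_ ?_ ?_
        · intro h z hz; exact hhom g h x hx z hz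
        · simp
        · intro a b ha hb; rw [mul_add, add_mul, ha, hb]
      intro x y
      have hx : x ∈ ⨆ g, 𝒜 g := hsup ▸ Submodule.mem_top
      refine Submodule.iSup_induction 𝒜 (motive := fun x => x * y = y * x) hx ?_ ?_ ?_
      · intro g z hz; exact step g z hz y
      · simp
      · intro a b ha hb; rw [mul_add, add_mul, ha, hb]
    -- independence
    have hdisj : Disjoint (𝒜 g) (𝒜 1) :=
      hdecomp.submodule_iSupIndep.pairwiseDisjoint hg
    have hmem1 : ∀ r : F, algebraMap F D r ∈ 𝒜 (1 : G) := by
      intro r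
      rw [Algebra.algebraMap_eq_smul_one]
      exact Submodule.smul_mem _ r hone
    rw [Submodule.eq_bot_iff]
    intro x hx
    have hself : ∀ z : D, z + z = 0 := by
      intro z
      have : z + z = (2 : F) • z := by rw [two_smul]
      rw [this, h2, zero_smul]
    -- z = x + φ₀ x is symmetric and central, hence in 𝒜 1 ∩ 𝒜 g = ⊥
    have hzsym : φ₀ (x + φ₀ x) = x + φ₀ x := by
      rw [map_add, hinv x, add_comm]
    obtain ⟨r, hr⟩ := hcentral (x + φ₀ x) (fun y => hcomm _ y) hzsym
    have hz1 : x + φ₀ x ∈ 𝒜 (1 : G) := hr ▸ hmem1 r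
    have hzg : x + φ₀ x ∈ 𝒜 g := Submodule.add_mem _ hx (hdeg g x hx)
    have hz0 : x + φ₀ x = 0 := by
      have := hdisj.le_bot ⟨hzg, hz1⟩
      simpa using this
    have hφx : φ₀ x = x := by
      have h1 : φ₀ x = -x := eq_neg_of_add_eq_zero_right hz0
      have h2' : -x = x := neg_eq_of_add_eq_zero_left (hself x)
      rw [h1, h2']
    obtain ⟨r', hr'⟩ := hcentral x (fun y => hcomm _ y) hφx
    have hx1 : x ∈ 𝒜 (1 : G) := hr' ▸ hmem1 r'
    have := hdisj.le_bot ⟨hx, hx1⟩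
    simpa using this
end

section
/- Let D be a graded-division algebra over ℝ with elementary abelian 2-group support T (viewed as a GF(2)-vector space) and D_e = ℝ. Define the quadratic form μ : T → {±1} by x² ∈ μ(t)·ℝ_{>0} for 0 ≠ x ∈ D_t. Then the Weyl group of the grading (the group of permutations of T induced by algebra automorphisms of D that permute the homogeneous components) equals Aut(T, μ) = {α ∈ Aut(T) | μ(α(t)) = μ(t) for all t ∈ T}. -/
/-- Carrier for the central extension used in the splitting argument. -/
structure TwExt (G : Type*) where
  g : G
  a : ZMod 2

private lemma zmod2_cases (a : ZMod 2) : a = 0 ∨ a = 1 := by revert a; decide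

private lemma zmod2_one_ne_zero : (1 : ZMod 2) ≠ 0 := by decide

private lemma zmod2_two : (1 + 1 : ZMod 2) = 0 := by decide

private lemma chi_add (a b : ZMod 2) :
    (if a + b = 0 then (1:ℝ) else -1)
      = (if a = 0 then (1:ℝ) else -1) * (if b = 0 then (1:ℝ) else -1) := by
  rcases zmod2_cases a with ha | ha <;> rcases zmod2_cases b with hb | hb <;>
      subst ha <;> subst hb
  · norm_num
  · norm_num [zmod2_one_ne_zero]
  · norm_num [zmod2_one_ne_zero]
  · rw [if_pos zmod2_two]
    norm_num

theorem exists_split {G : Type*} [CommGroup G] (hsq : ∀ g : G, g * g = 1)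
    (τ : G → G → ℝ)
    (hval : ∀ s t, τ s t = 1 ∨ τ s t = -1)
    (h1t : ∀ t, τ 1 t = 1) (ht1 : ∀ t, τ t 1 = 1)
    (hsymm : ∀ s t, τ s t = τ t s)
    (hdiag : ∀ t, τ t t = 1)
    (hcoc : ∀ s t u, τ s t * τ (s*t) u = τ t u * τ s (t*u)) :
    ∃ lam : G → ℝ, lam 1 = 1 ∧ (∀ t, lam t ≠ 0) ∧
      ∀ s t, lam s * lam t = τ s t * lam (s*t) := by
  classical
  set ν : G → G → ZMod 2 := fun s t => if τ s t = 1 then 0 else 1 with hν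
  set χ : ZMod 2 → ℝ := fun a => if a = 0 then 1 else -1 with hχ
  have hχ0 : χ 0 = 1 := by simp [hχ]
  have hχ1 : χ 1 = -1 := by simp [hχ, zmod2_one_ne_zero]
  have hχν : ∀ s t, χ (ν s t) = τ s t := by
    intro s t
    by_cases h : τ s t = 1
    · have hh : ν s t = 0 := by simp [hν, h]
      rw [hh, hχ0, h]
    · rcases hval s t with h' | h'
      · exact absurd h' h
      · have hh : ν s t = 1 := by simp [hν, h]
        rw [hh, hχ1, h']
  have hχadd : ∀ a b, χ (a + b) = χ a * χ b := by
    intro a b; simpa [hχ] using chi_add a b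
  have hχinj : ∀ a b, χ a = χ b → a = b := by
    intro a b hab
    rcases zmod2_cases a with ha | ha <;> rcases zmod2_cases b with hb | hb <;>
      subst ha <;> subst hb <;> first
        | rfl
        | (exfalso; rw [hχ0, hχ1] at hab; norm_num at hab)
        | (exfalso; rw [hχ1, hχ0] at hab; norm_num at hab)
  have hν1t : ∀ t, ν 1 t = 0 := by intro t; simp [hν, h1t]
  have hνt1 : ∀ t, ν t 1 = 0 := by intro t; simp [hν, ht1]
  have hνsymm : ∀ s t, ν s t = ν t s := by intro s t; simp [hν, hsymm s t]
  have hνdiag : ∀ t, ν t t = 0 := by intro t; simp [hν, hdiag]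
  have hνcoc : ∀ s t u, ν s t + ν (s*t) u = ν t u + ν s (t*u) := by
    intro s t u
    apply hχinj
    rw [hχadd, hχadd, hχν, hχν, hχν, hχν]
    exact hcoc s t u
  letI zeroI : Zero (TwExt G) := ⟨⟨1, 0⟩⟩
  letI addI : Add (TwExt G) := ⟨fun x y => ⟨x.g * y.g, x.a + y.a + ν x.g y.g⟩⟩
  letI negI : Neg (TwExt G) := ⟨fun x => x⟩
  letI : AddCommGroup (TwExt G) :=
    { add := (· + ·)
      zero := 0
      neg := Neg.neg
      nsmul := nsmulRec
      zsmul := zsmulRec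
      add_assoc := by
        rintro ⟨s, a⟩ ⟨t, b⟩ ⟨u, c⟩
        show (⟨(s*t)*u, (a+b+ν s t)+c+ν (s*t) u⟩ : TwExt G)
            = ⟨s*(t*u), a+(b+c+ν t u)+ν s (t*u)⟩
        congr 1
        · exact mul_assoc s t u
        · linear_combination (hνcoc s t u)
      add_comm := by
        rintro ⟨s, a⟩ ⟨t, b⟩
        show (⟨s*t, a+b+ν s t⟩ : TwExt G) = ⟨t*s, b+a+ν t s⟩
        rw [mul_comm, add_comm a b, hνsymm]
      zero_add := by
        rintro ⟨s, a⟩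
        show (⟨1*s, 0+a+ν 1 s⟩ : TwExt G) = ⟨s, a⟩
        rw [one_mul, hν1t, zero_add, add_zero]
      add_zero := by
        rintro ⟨s, a⟩
        show (⟨s*1, a+0+ν s 1⟩ : TwExt G) = ⟨s, a⟩
        rw [mul_one, hνt1, add_zero, add_zero]
      neg_add_cancel := by
        rintro ⟨s, a⟩
        show (⟨s*s, a+a+ν s s⟩ : TwExt G) = ⟨1, 0⟩
        rw [hsq, hνdiag, add_zero]
        congr 1
        rcases zmod2_cases a with h | h <;> subst h <;> decide }
  have haddself : ∀ x : TwExt G, (2 : ℕ) • x = 0 := by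
    intro x
    rw [two_nsmul]
    exact neg_add_cancel x
  letI : Module (ZMod 2) (TwExt G) := AddCommGroup.zmodModule haddself
  set K : Submodule (ZMod 2) (TwExt G) :=
    { carrier := {x : TwExt G | x.g = 1}
      add_mem' := by
        rintro ⟨s, a⟩ ⟨t, b⟩ hs ht
        have hs' : s = 1 := hs
        have ht' : t = 1 := ht
        show s * t = 1
        rw [hs', ht', one_mul]
      zero_mem' := rfl
      smul_mem' := by
        intro c x hx
        rcases zmod2_cases c with h | h
        · rw [h, zero_smul]; exact rfl
        · rw [h, one_smul]; exact hx } with hK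
  obtain ⟨H, hH⟩ := Submodule.exists_isCompl K
  set proj := K.linearProjOfIsCompl H hH with hproj
  set coord : K →ₗ[ZMod 2] ZMod 2 :=
    AddMonoidHom.toZModLinearMap 2
      { toFun := fun x => x.1.a
        map_zero' := rfl
        map_add' := by
          rintro ⟨⟨s, a⟩, hs⟩ ⟨⟨t, b⟩, ht⟩
          have hs' : s = 1 := hs
          have ht' : t = 1 := ht
          show a + b + ν s t = a + b
          rw [hs', ht', hν1t, add_zero] } with hcoord
  set f : TwExt G →ₗ[ZMod 2] ZMod 2 := coord.comp proj with hf
  have hfK : ∀ a : ZMod 2, f ⟨1, a⟩ = a := by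
    intro a
    have hmem : (⟨1, a⟩ : TwExt G) ∈ K := rfl
    have h1 : proj ⟨1, a⟩ = ⟨⟨1, a⟩, hmem⟩ :=
      Submodule.linearProjOfIsCompl_apply_left hH ⟨⟨1, a⟩, hmem⟩
    show coord (proj ⟨1, a⟩) = a
    rw [h1]
    rfl
  refine ⟨fun t => χ (f ⟨t, 0⟩), ?_, ?_, ?_⟩
  · show χ (f ⟨1, 0⟩) = 1
    rw [hfK 0, hχ0]
  · intro t
    show χ (f ⟨t, 0⟩) ≠ 0
    rcases zmod2_cases (f ⟨t, 0⟩) with h | h <;> rw [h] <;>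
      first | (rw [hχ0]; norm_num) | (rw [hχ1]; norm_num)
  · intro s t
    show χ (f ⟨s, 0⟩) * χ (f ⟨t, 0⟩) = τ s t * χ (f ⟨s*t, 0⟩)
    have h1 : (⟨s, 0⟩ : TwExt G) + ⟨t, 0⟩ = ⟨s*t, ν s t⟩ := by
      show (⟨s*t, 0+0+ν s t⟩ : TwExt G) = _
      rw [add_zero, zero_add]
    have h2 : (⟨s*t, 0⟩ : TwExt G) + ⟨1, ν s t⟩ = ⟨s*t, ν s t⟩ := by
      show (⟨(s*t)*1, 0+ν s t+ν (s*t) 1⟩ : TwExt G) = _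
      rw [mul_one, hνt1, add_zero, zero_add]
    have key := congrArg f h1
    have key2 := congrArg f h2
    rw [map_add] at key key2
    rw [hfK] at key2
    have key3 : f ⟨s, 0⟩ + f ⟨t, 0⟩ = f ⟨s*t, 0⟩ + ν s t := by rw [key, key2]
    rw [← hχadd, key3, hχadd, hχν, mul_comm (χ (f ⟨s*t, 0⟩)) (τ s t)]

/-- Weyl group of a real graded-division algebra with 2-elementary support `T` and
`D_e = ℝ·1`: an automorphism `α` of the support group is induced by an algebra
automorphism of `D` permuting the homogeneous components if and only if `α` preserves the
quadratic form `μ : T → {±1}` defined by `x² ∈ μ(t)·ℝ_{>0}` for `0 ≠ x ∈ D_t`. -/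
theorem stmt_5 {G : Type*} [CommGroup G] [DecidableEq G]
    {D : Type*} [Ring D] [Algebra ℝ D]
    (𝒜 : G → Submodule ℝ D)
    (hdecomp : DirectSum.IsInternal 𝒜)
    (hone : (1 : D) ∈ 𝒜 1)
    (hmul : ∀ g h : G, ∀ x ∈ 𝒜 g, ∀ y ∈ 𝒜 h, x * y ∈ 𝒜 (g * h))
    (hdiv : ∀ g : G, ∀ x ∈ 𝒜 g, x ≠ 0 → IsUnit x)
    (hsupp : ∀ g : G, 𝒜 g ≠ ⊥)
    (h2elem : ∀ g : G, g * g = 1)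
    (hDe : 𝒜 (1 : G) = Submodule.span ℝ {(1 : D)})
    (μ : G → ℝ)
    (hμval : ∀ t : G, μ t = 1 ∨ μ t = -1)
    (hμ : ∀ t : G, ∀ x ∈ 𝒜 t, x ≠ 0 → ∃ c : ℝ, x * x = c • (1 : D) ∧ 0 < μ t * c) :
    ∀ α : G ≃* G,
      (∃ ψ : D ≃ₐ[ℝ] D, ∀ g : G, (𝒜 g).map ψ.toLinearMap = 𝒜 (α g)) ↔
      ∀ t : G, μ (α t) = μ t := by
  classical
  -- nontriviality
  have h1ne : (1 : D) ≠ 0 := by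
    intro h
    apply hsupp 1
    rw [hDe, h, Submodule.span_zero_singleton]
  haveI : Nontrivial D := ⟨1, 0, h1ne⟩
  have hsmul1 : ∀ c d : ℝ, c • (1:D) = d • 1 → c = d :=
    fun c d h => smul_left_injective ℝ h1ne h
  have hμs : ∀ t, μ t * μ t = 1 := by
    intro t; rcases hμval t with h | h <;> rw [h] <;> norm_num
  have hμne : ∀ t, μ t ≠ 0 := by
    intro t h
    have := hμs t; rw [h, mul_zero] at this; norm_num at this
  have hμ1 : μ 1 = 1 := by
    obtain ⟨c, hc1, hc2⟩ := hμ 1 1 (by rw [hDe]; exact Submodule.mem_span_singleton_self 1) h1ne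
    have he : c • (1:D) = (1:ℝ) • 1 := by rw [one_smul, ← hc1, one_mul]
    have hc : c = 1 := hsmul1 c 1 he
    rcases hμval 1 with h | h
    · exact h
    · rw [h, hc] at hc2; norm_num at hc2
  -- normalized homogeneous elements
  have hex : ∀ t : G, ∃ z : D, z ∈ 𝒜 t ∧ z ≠ 0 ∧ z * z = μ t • (1:D) ∧ (t = 1 → z = 1) := by
    intro t
    by_cases ht : t = 1
    · subst ht
      exact ⟨1, by rw [hDe]; exact Submodule.mem_span_singleton_self 1, h1ne,
        by rw [hμ1, one_smul, one_mul], fun _ => rfl⟩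
    · obtain ⟨y, hy, hyne⟩ := (Submodule.ne_bot_iff _).mp (hsupp t)
      obtain ⟨c, hc1, hc2⟩ := hμ t y hy hyne
      have hc0 : c ≠ 0 := by
        intro h; rw [h, mul_zero] at hc2; exact lt_irrefl 0 hc2
      set l := Real.sqrt ((μ t * c)⁻¹) with hl
      have hlpos : 0 < l := Real.sqrt_pos.mpr (inv_pos.mpr hc2)
      have hll : l * l = (μ t * c)⁻¹ := Real.mul_self_sqrt (le_of_lt (inv_pos.mpr hc2))
      refine ⟨l • y, Submodule.smul_mem _ _ hy, smul_ne_zero (ne_of_gt hlpos) hyne, ?_,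
        fun h => absurd h ht⟩
      rw [smul_mul_assoc, mul_smul_comm, smul_smul, hc1, smul_smul, hll]
      congr 1
      rw [mul_inv, mul_assoc, inv_mul_cancel₀ hc0, mul_one,
        inv_eq_of_mul_eq_one_right (hμs t)]
  choose x hxmem hxne hxsq hx1 using hex
  have hx1' : x 1 = 1 := hx1 1 rfl
  -- each component is spanned by x t
  have hspan : ∀ t, 𝒜 t = Submodule.span ℝ {x t} := by
    intro t
    refine le_antisymm ?_ ((Submodule.span_singleton_le_iff_mem _ _).mpr (hxmem t))
    intro y hy
    have hyx : y * x t ∈ 𝒜 1 := by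
      have := hmul t t y hy (x t) (hxmem t); rwa [h2elem t] at this
    rw [hDe] at hyx
    obtain ⟨d, hd⟩ := Submodule.mem_span_singleton.mp hyx
    have key : μ t • y = d • x t := by
      calc μ t • y = y * (x t * x t) := by rw [hxsq t, mul_smul_comm, mul_one]
        _ = (y * x t) * x t := (mul_assoc _ _ _).symm
        _ = (d • 1) * x t := by rw [← hd]
        _ = d • x t := by rw [smul_mul_assoc, one_mul]
    have hy' : y = (μ t * d) • x t := by
      have h2 := congrArg (fun z => μ t • z) key
      rwa [smul_smul, hμs t, one_smul, smul_smul] at h2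
    rw [hy']
    exact Submodule.smul_mem _ _ (Submodule.mem_span_singleton_self _)
  -- structure constants
  have hsigex : ∀ s t : G, ∃ c : ℝ, x s * x t = c • x (s*t) := by
    intro s t
    have h := hmul s t _ (hxmem s) _ (hxmem t)
    rw [hspan (s*t)] at h
    obtain ⟨c, hc⟩ := Submodule.mem_span_singleton.mp h
    exact ⟨c, hc.symm⟩
  choose σ hσ using hsigex
  have hxu : ∀ t, IsUnit (x t) := fun t => hdiv t _ (hxmem t) (hxne t)
  have hprodne : ∀ s t, x s * x t ≠ 0 := fun s t => ((hxu s).mul (hxu t)).ne_zero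
  have hσne : ∀ s t, σ s t ≠ 0 := by
    intro s t h; exact hprodne s t (by rw [hσ, h, zero_smul])
  have hcancel : ∀ (u : G) (a b : ℝ), a • x u = b • x u → a = b :=
    fun u a b h => smul_left_injective ℝ (hxne u) h
  have hσ1t : ∀ t, σ 1 t = 1 := by
    intro t
    have h := hσ 1 t
    rw [one_mul t, hx1', one_mul] at h
    exact (hcancel t _ _ (by rw [one_smul]; exact h)).symm
  have hσt1 : ∀ t, σ t 1 = 1 := by
    intro t
    have h := hσ t 1
    rw [mul_one t, hx1', mul_one] at h
    exact (hcancel t _ _ (by rw [one_smul]; exact h)).symm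
  have hσtt : ∀ t, σ t t = μ t := by
    intro t
    have h := hσ t t
    rw [h2elem t, hx1', hxsq t] at h
    exact (hsmul1 _ _ h).symm
  -- the cocycle identity
  have hcoc : ∀ s t u, σ s t * σ (s*t) u = σ t u * σ s (t*u) := by
    intro s t u
    have h1 : (x s * x t) * x u = (σ s t * σ (s*t) u) • x (s*t*u) := by
      rw [hσ s t, smul_mul_assoc, hσ (s*t) u, smul_smul]
    have h2 : x s * (x t * x u) = (σ t u * σ s (t*u)) • x (s*(t*u)) := by
      rw [hσ t u, mul_smul_comm, hσ s (t*u), smul_smul]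
    rw [mul_assoc] at h1
    rw [mul_assoc s t u] at h1
    exact hcancel _ _ _ (h1.symm.trans h2)
  -- the commutation relation
  have hσswap : ∀ s t, σ s t * σ t s = μ s * μ t * μ (s*t) := by
    intro s t
    have h1 : (x s * x t) * (x t * x s) = (μ t * μ s) • (1:D) := by
      rw [mul_assoc, ← mul_assoc (x t) (x t) (x s), hxsq t, smul_mul_assoc, one_mul,
        mul_smul_comm, hxsq s, smul_smul]
    have e := hσ t s
    rw [mul_comm t s] at e
    have h2 : (x s * x t) * (x t * x s) = (σ s t * σ t s * μ (s*t)) • (1:D) := by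
      rw [hσ s t, e, smul_mul_assoc, mul_smul_comm, smul_smul, hxsq (s*t), smul_smul]
    have h3 : μ t * μ s = σ s t * σ t s * μ (s*t) := hsmul1 _ _ (h1.symm.trans h2)
    linear_combination (-(μ (s*t))) * h3 - (σ s t * σ t s) * (hμs (s*t))
  -- the structure constants square to one
  have hσsq : ∀ s t, σ s t * σ s t = 1 := by
    intro s t
    have hB := hcoc s s t
    rw [h2elem s, hσtt s, hσ1t t, mul_one] at hB
    have hC := hcoc t s s
    rw [h2elem s, hσtt s, hσt1 t, mul_one] at hC
    rw [mul_comm t s] at hC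
    have hstar := hcoc s t s
    rw [mul_comm t s] at hstar
    have hab := hσswap s t
    have hpq := hσswap (s*t) s
    rw [show (s*t)*s = t from by rw [mul_comm s t, mul_assoc, h2elem, mul_one]] at hpq
    have hp0 : σ (s*t) s ≠ 0 := hσne _ _
    have hq0 : σ s (s*t) ≠ 0 := hσne _ _
    have h2 : σ s t * σ s t = σ t s * σ t s := by
      apply mul_right_cancel₀ (mul_ne_zero hp0 hq0)
      calc σ s t * σ s t * (σ (s*t) s * σ s (s*t))
          = (σ s t * σ (s*t) s) * (σ s t * σ s (s*t)) := by ring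
        _ = (σ t s * σ s (s*t)) * (μ s) := by rw [hstar, ← hB]
        _ = (σ t s * σ s (s*t)) * (σ t s * σ (s*t) s) := by rw [← hC]
        _ = σ t s * σ t s * (σ (s*t) s * σ s (s*t)) := by ring
    have h4 : (σ s t * σ s t) * (σ s t * σ s t) = 1 := by
      calc (σ s t * σ s t) * (σ s t * σ s t) = (σ s t * σ s t) * (σ t s * σ t s) := by rw [h2]
        _ = (σ s t * σ t s) * (σ s t * σ t s) := by ring
        _ = (μ s * μ t * μ (s*t)) * (μ s * μ t * μ (s*t)) := by rw [hab]
        _ = 1 := by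
            linear_combination (μ t * μ t * μ (s*t) * μ (s*t)) * hμs s
              + (μ (s*t) * μ (s*t)) * hμs t + hμs (s*t)
    have h5 : (σ s t * σ s t - 1) * (σ s t * σ s t + 1) = 0 := by linear_combination h4
    rcases mul_eq_zero.mp h5 with h | h
    · linarith
    · exfalso; nlinarith [mul_self_nonneg (σ s t)]
  have hσpm : ∀ s t, σ s t = 1 ∨ σ s t = -1 := fun s t => mul_self_eq_one_iff.mp (hσsq s t)
  have pm_eq : ∀ u v : ℝ, u * u = 1 → v * v = 1 → u * v = 1 → u = v := by
    intro u v hu hv huv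
    linear_combination v * hu - u * huv
  -- now the main equivalence
  intro α
  constructor
  · rintro ⟨ψ, hψ⟩ t
    have h1 : ψ (x t) ∈ 𝒜 (α t) := by
      rw [← hψ t]
      exact Submodule.mem_map_of_mem (hxmem t)
    have hne : ψ (x t) ≠ 0 := by
      intro h
      exact hxne t (ψ.injective (by rw [h, map_zero]))
    obtain ⟨c, hc1, hc2⟩ := hμ (α t) _ h1 hne
    have h2 : ψ (x t) * ψ (x t) = μ t • 1 := by
      rw [← map_mul, hxsq t, ← Algebra.algebraMap_eq_smul_one, AlgEquiv.commutes,
        Algebra.algebraMap_eq_smul_one]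
    have hc : c = μ t := hsmul1 c (μ t) (by rw [← hc1, h2])
    rw [hc] at hc2
    rcases hμval (α t) with h | h <;> rcases hμval t with h' | h' <;> rw [h, h'] <;>
      rw [h, h'] at hc2 <;> first | rfl | (exfalso; norm_num at hc2)
  · intro hα
    -- split the comparison cocycle
    obtain ⟨lam, hlam1, hlamne, hlamrel⟩ :=
      exists_split h2elem (fun s t => σ s t * σ (α s) (α t))
        (by
          intro s t
          show σ s t * σ (α s) (α t) = 1 ∨ σ s t * σ (α s) (α t) = -1
          rcases hσpm s t with h | h <;> rcases hσpm (α s) (α t) with h' | h' <;>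
            rw [h, h'] <;> norm_num)
        (by
          intro t
          show σ 1 t * σ (α 1) (α t) = 1
          rw [map_one, hσ1t, hσ1t, mul_one])
        (by
          intro t
          show σ t 1 * σ (α t) (α 1) = 1
          rw [map_one, hσt1, hσt1, mul_one])
        (by
          intro s t
          show σ s t * σ (α s) (α t) = σ t s * σ (α t) (α s)
          have hprod : (σ s t * σ (α s) (α t)) * (σ t s * σ (α t) (α s)) = 1 := by
            have e1 := hσswap s t
            have e2 := hσswap (α s) (α t)
            rw [← map_mul, hα s, hα t, hα (s*t)] at e2
            calc (σ s t * σ (α s) (α t)) * (σ t s * σ (α t) (α s))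
                = (σ s t * σ t s) * (σ (α s) (α t) * σ (α t) (α s)) := by ring
              _ = (μ s * μ t * μ (s*t)) * (μ s * μ t * μ (s*t)) := by rw [e1, e2]
              _ = 1 := by
                  linear_combination (μ t * μ t * μ (s*t) * μ (s*t)) * hμs s
                    + (μ (s*t) * μ (s*t)) * hμs t + hμs (s*t)
          have hu : (σ s t * σ (α s) (α t)) * (σ s t * σ (α s) (α t)) = 1 := by
            linear_combination (σ (α s) (α t) * σ (α s) (α t)) * hσsq s t + hσsq (α s) (α t)
          have hv : (σ t s * σ (α t) (α s)) * (σ t s * σ (α t) (α s)) = 1 := by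
            linear_combination (σ (α t) (α s) * σ (α t) (α s)) * hσsq t s + hσsq (α t) (α s)
          exact pm_eq _ _ hu hv hprod)
        (by
          intro t
          show σ t t * σ (α t) (α t) = 1
          rw [hσtt, hσtt, hα t]
          exact hμs t)
        (by
          intro s t u
          show (σ s t * σ (α s) (α t)) * (σ (s*t) u * σ (α (s*t)) (α u))
              = (σ t u * σ (α t) (α u)) * (σ s (t*u) * σ (α s) (α (t*u)))
          have e1 := hcoc s t u
          have e2 := hcoc (α s) (α t) (α u)
          rw [← map_mul, ← map_mul] at e2
          linear_combination (σ (α s) (α t) * σ (α (s*t)) (α u)) * e1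
            + (σ t u * σ s (t*u)) * e2)
    -- build the algebra automorphism from a rescaled, permuted basis
    have hLI : LinearIndependent ℝ x :=
      hdecomp.submodule_iSupIndep.linearIndependent 𝒜 hxmem hxne
    have hsp : ⊤ ≤ Submodule.span ℝ (Set.range x) := by
      rw [← hdecomp.submodule_iSup_eq_top]
      refine iSup_le fun t => ?_
      rw [hspan t]
      exact Submodule.span_mono (Set.singleton_subset_iff.mpr ⟨t, rfl⟩)
    set B : Module.Basis G ℝ D := Module.Basis.mk hLI hsp with hBdef
    have hB : ∀ t, B t = x t := fun t => Module.Basis.mk_apply hLI hsp t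
    set u : G → ℝˣ := fun t => Units.mk0 (lam t) (hlamne t) with hu
    set B' : Module.Basis G ℝ D := (B.reindex α.toEquiv.symm).unitsSMul u with hB'def
    have hB' : ∀ t, B' t = lam t • x (α t) := by
      intro t
      rw [hB'def, Module.Basis.unitsSMul_apply, Module.Basis.reindex_apply]
      simp only [Equiv.symm_symm]
      rw [hB]
      rfl
    set ψlin : D ≃ₗ[ℝ] D := B.equiv B' (Equiv.refl G) with hψdef
    have hψx : ∀ t, ψlin (x t) = lam t • x (α t) := by
      intro t
      rw [← hB t, hψdef, B.equiv_apply, Equiv.refl_apply, hB' t]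
    have hψ1 : ψlin 1 = 1 := by
      rw [← hx1', hψx 1, hlam1, map_one, hx1', one_smul]
    have hmulbasis : ∀ s t : G, ψlin (x s * x t) = ψlin (x s) * ψlin (x t) := by
      intro s t
      rw [hσ s t, map_smul, hψx, hψx, hψx, smul_mul_assoc, mul_smul_comm, hσ (α s) (α t),
        ← map_mul α s t, smul_smul, smul_smul, smul_smul]
      congr 1
      linear_combination (-(σ (α s) (α t))) * (hlamrel s t)
        - (σ s t * lam (s*t)) * (hσsq (α s) (α t))
    have hψmul : ∀ a b : D, ψlin (a * b) = ψlin a * ψlin b := by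
      have key : (LinearMap.mul ℝ D).compr₂ (ψlin : D →ₗ[ℝ] D)
          = (LinearMap.mul ℝ D).compl₁₂ (ψlin : D →ₗ[ℝ] D) (ψlin : D →ₗ[ℝ] D) := by
        apply Module.Basis.ext B
        intro s
        apply Module.Basis.ext B
        intro t
        simp only [LinearMap.compr₂_apply, LinearMap.compl₁₂_apply, LinearMap.mul_apply',
          LinearEquiv.coe_coe, hB]
        exact hmulbasis s t
      intro a b
      have h := LinearMap.congr_fun (LinearMap.congr_fun key a) b
      simpa only [LinearMap.compr₂_apply, LinearMap.compl₁₂_apply, LinearMap.mul_apply',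
        LinearEquiv.coe_coe] using h
    set ψ : D ≃ₐ[ℝ] D := AlgEquiv.ofLinearEquiv ψlin hψ1 hψmul with hψdef'
    refine ⟨ψ, fun g => ?_⟩
    have happ : (ψ.toLinearMap) (x g) = lam g • x (α g) := by
      show ψ (x g) = _
      rw [hψdef', AlgEquiv.ofLinearEquiv_apply]
      exact hψx g
    rw [hspan g, hspan (α g), Submodule.map_span, Set.image_singleton, happ]
    exact Submodule.span_singleton_smul_eq (isUnit_iff_ne_zero.mpr (hlamne g)) _
end

section
/- Let I be a nilpotent ideal in a commutative unital ring K and n an even positive integer. Then the ring homomorphism Mₙ(K) → Mₙ(K/I) of entrywise reduction modulo I maps the symplectic group Sp(n, K) onto Sp(n, K/I). (Here Sp(n, R) = {a ∈ Mₙ(R) | σ(a)·a = 1} for the standard symplectic involution σ(a) = Jₙ⁻¹aᵀJₙ.) -/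
open Matrix

/-- The standard symplectic matrix `J = [[0, 1], [-1, 0]]` of even size `2m`. -/
def Jmat (m : ℕ) (K : Type*) [CommRing K] :
    Matrix (Fin m ⊕ Fin m) (Fin m ⊕ Fin m) K :=
  Matrix.fromBlocks 0 1 (-1) 0

/-- The standard symplectic involution `a ↦ J⁻¹ aᵀ J` on `M_{2m}(K)`, as a `K`-linear map. -/
noncomputable def sympInvo (m : ℕ) (K : Type*) [CommRing K] :
    Matrix (Fin m ⊕ Fin m) (Fin m ⊕ Fin m) K →ₗ[K]
      Matrix (Fin m ⊕ Fin m) (Fin m ⊕ Fin m) K where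
  toFun a := (Jmat m K)⁻¹ * aᵀ * (Jmat m K)
  map_add' a b := by
    simp [Matrix.transpose_add, Matrix.mul_add, Matrix.add_mul]
  map_smul' c a := by
    simp [Matrix.transpose_smul, Matrix.mul_smul, Matrix.smul_mul]

/-- The submodule `Symd(A) = {a + σ(a) | a ∈ A}` for the standard symplectic involution. -/
noncomputable def Symd (m : ℕ) (K : Type*) [CommRing K] :
    Submodule K (Matrix (Fin m ⊕ Fin m) (Fin m ⊕ Fin m) K) :=
  LinearMap.range (LinearMap.id + sympInvo m K)

section Aux

set_option linter.unusedSectionVars false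

variable {m : ℕ} {K : Type*} [CommRing K]

lemma negJ_mul_J : (-Jmat m K) * Jmat m K = 1 := by
  simp [Jmat, Matrix.fromBlocks_neg, Matrix.fromBlocks_multiply, ← Matrix.fromBlocks_one]

lemma J_mul_J : Jmat m K * Jmat m K = -1 := by
  have := negJ_mul_J (m := m) (K := K)
  rw [neg_mul] at this; linear_combination (norm := noncomm_ring) -this

lemma Jinv : (Jmat m K)⁻¹ = -Jmat m K :=
  Matrix.inv_eq_left_inv negJ_mul_J

lemma Jmat_transpose : (Jmat m K)ᵀ = -Jmat m K := by
  simp [Jmat, Matrix.fromBlocks_transpose, Matrix.fromBlocks_neg]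

lemma J_diag (i : Fin m ⊕ Fin m) : Jmat m K i i = 0 := by
  cases i <;> simp [Jmat, Matrix.fromBlocks]

lemma sympInvo_apply (a : Matrix (Fin m ⊕ Fin m) (Fin m ⊕ Fin m) K) :
    sympInvo m K a = -(Jmat m K * aᵀ * Jmat m K) := by
  simp [sympInvo, Jinv, neg_mul]

lemma sympInvo_one : sympInvo m K 1 = 1 := by
  simp [sympInvo_apply, negJ_mul_J]
  rw [← neg_mul, negJ_mul_J]

lemma diag_conj_J (a : Matrix (Fin m ⊕ Fin m) (Fin m ⊕ Fin m) K) (i : Fin m ⊕ Fin m) :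
    (aᵀ * Jmat m K * a) i i = 0 := by
  simp [Matrix.mul_apply, Jmat, Fintype.sum_sum_type, Matrix.fromBlocks,
    Matrix.one_apply, Finset.sum_ite_eq, Finset.mul_sum, Finset.sum_mul, mul_comm]

/-- Entrywise membership in an ideal. -/
def EntriesIn (P : Ideal K) {ι : Type*} (M : Matrix ι ι K) : Prop := ∀ i j, M i j ∈ P

variable {ι : Type*} [Fintype ι]

lemma EntriesIn.add {P : Ideal K} {M N : Matrix ι ι K} (hM : EntriesIn P M)
    (hN : EntriesIn P N) : EntriesIn P (M + N) := fun i j => P.add_mem (hM i j) (hN i j)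

lemma EntriesIn.neg {P : Ideal K} {M : Matrix ι ι K} (hM : EntriesIn P M) :
    EntriesIn P (-M) := fun i j => P.neg_mem (hM i j)

lemma EntriesIn.sub {P : Ideal K} {M N : Matrix ι ι K} (hM : EntriesIn P M)
    (hN : EntriesIn P N) : EntriesIn P (M - N) := fun i j => P.sub_mem (hM i j) (hN i j)

lemma EntriesIn.mul {P Q : Ideal K} {M N : Matrix ι ι K} (hM : EntriesIn P M)
    (hN : EntriesIn Q N) : EntriesIn (P * Q) (M * N) := fun i j => by
  rw [Matrix.mul_apply]
  exact Ideal.sum_mem _ fun k _ => Ideal.mul_mem_mul (hM i k) (hN k j)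

lemma EntriesIn.mul_left {P : Ideal K} (M : Matrix ι ι K) {N : Matrix ι ι K}
    (hN : EntriesIn P N) : EntriesIn P (M * N) := fun i j => by
  rw [Matrix.mul_apply]
  exact Ideal.sum_mem _ fun k _ => P.mul_mem_left _ (hN k j)

lemma EntriesIn.mul_right {P : Ideal K} {M : Matrix ι ι K} (N : Matrix ι ι K)
    (hM : EntriesIn P M) : EntriesIn P (M * N) := fun i j => by
  rw [Matrix.mul_apply]
  exact Ideal.sum_mem _ fun k _ => P.mul_mem_right _ (hM i k)

lemma EntriesIn.mono {P Q : Ideal K} (h : P ≤ Q) {M : Matrix ι ι K}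
    (hM : EntriesIn P M) : EntriesIn Q M := fun i j => h (hM i j)

lemma EntriesIn.transpose {P : Ideal K} {M : Matrix ι ι K} (hM : EntriesIn P M) :
    EntriesIn P Mᵀ := fun i j => hM j i

variable [Encodable ι]

/-- The strict upper-triangular part with respect to an encoding into `ℕ`. -/
def upperPart (M : Matrix ι ι K) : Matrix ι ι K :=
  fun i j => if Encodable.encode i < Encodable.encode j then M i j else 0

lemma upperPart_entries {P : Ideal K} {M : Matrix ι ι K} (hM : EntriesIn P M) :
    EntriesIn P (upperPart M) := fun i j => by
  unfold upperPart; split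
  · exact hM i j
  · exact P.zero_mem

lemma upperPart_sub_transpose {M : Matrix ι ι K} (h1 : Mᵀ = -M) (h2 : ∀ i, M i i = 0) :
    upperPart M - (upperPart M)ᵀ = M := by
  ext i j
  rcases lt_trichotomy (Encodable.encode i) (Encodable.encode j) with h | h | h
  · simp [upperPart, h, not_lt.2 h.le, Matrix.sub_apply, Matrix.transpose_apply]
  · have : i = j := Encodable.encode_injective h
    subst this
    simp [upperPart, Matrix.sub_apply, Matrix.transpose_apply, h2 i]
  · have hMji : M j i = -M i j := by
      have := congrFun (congrFun h1 j) i
      simp only [Matrix.transpose_apply, Matrix.neg_apply] at this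
      linear_combination this
    simp [upperPart, h, not_lt.2 h.le, Matrix.sub_apply, Matrix.transpose_apply, hMji]

/-- Key decomposition: if `σ(a)a - 1` has entries in `P`, it equals `η + σ(η)` with
`η` having entries in `P`. -/
lemma exists_eta (P : Ideal K) (a : Matrix (Fin m ⊕ Fin m) (Fin m ⊕ Fin m) K)
    (h : EntriesIn P (sympInvo m K a * a - 1)) :
    ∃ η, EntriesIn P η ∧ η + sympInvo m K η = sympInvo m K a * a - 1 := by
  set ε := sympInvo m K a * a - 1 with hε
  set M := Jmat m K * ε with hM
  have hMform : M = aᵀ * Jmat m K * a - Jmat m K := by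
    rw [hM, hε, sympInvo_apply]
    calc Jmat m K * (-(Jmat m K * aᵀ * Jmat m K) * a - 1)
        = -(Jmat m K * Jmat m K) * (aᵀ * Jmat m K * a) - Jmat m K := by noncomm_ring
      _ = aᵀ * Jmat m K * a - Jmat m K := by rw [J_mul_J]; noncomm_ring
  have hMt : Mᵀ = -M := by
    rw [hMform, Matrix.transpose_sub, Matrix.transpose_mul, Matrix.transpose_mul,
      Matrix.transpose_transpose, Jmat_transpose]
    noncomm_ring
  have hMd : ∀ i, M i i = 0 := by
    intro i
    rw [hMform]
    simp [Matrix.sub_apply, diag_conj_J, J_diag]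
  have hMent : EntriesIn P M := EntriesIn.mul_left _ h
  set N := upperPart M with hN
  have hNent : EntriesIn P N := upperPart_entries hMent
  have hNM : N - Nᵀ = M := upperPart_sub_transpose hMt hMd
  refine ⟨-(Jmat m K * N), (EntriesIn.mul_left _ hNent).neg, ?_⟩
  have hσ : sympInvo m K (-(Jmat m K * N)) = Jmat m K * Nᵀ := by
    rw [map_neg, sympInvo_apply]
    simp only [Matrix.transpose_mul, Jmat_transpose]
    calc - -(Jmat m K * (Nᵀ * -Jmat m K) * Jmat m K)
        = -(Jmat m K * Nᵀ * (Jmat m K * Jmat m K)) := by noncomm_ring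
      _ = Jmat m K * Nᵀ := by rw [J_mul_J]; noncomm_ring
  rw [hσ]
  have : -(Jmat m K * N) + Jmat m K * Nᵀ = -(Jmat m K * (N - Nᵀ)) := by noncomm_ring
  rw [this, hNM, hM, show Jmat m K * (Jmat m K * ε) = (Jmat m K * Jmat m K) * ε by
    noncomm_ring, J_mul_J]
  noncomm_ring

/-- One step of the approximation: from accuracy `P` to accuracy `P * P`. -/
lemma step (P : Ideal K) (a : Matrix (Fin m ⊕ Fin m) (Fin m ⊕ Fin m) K)
    (h : EntriesIn P (sympInvo m K a * a - 1)) :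
    ∃ a₁, EntriesIn P (a₁ - a) ∧ EntriesIn (P * P) (sympInvo m K a₁ * a₁ - 1) := by
  obtain ⟨η, hηP, hηε⟩ := exists_eta P a h
  set s := sympInvo m K η with hs
  have hsP : EntriesIn P s := by
    rw [hs, sympInvo_apply]
    exact ((EntriesIn.mul_left _ hηP.transpose).mul_right _).neg
  refine ⟨a * (1 - η), ?_, ?_⟩
  · have : a * (1 - η) - a = -(a * η) := by noncomm_ring
    rw [this]
    exact (EntriesIn.mul_left _ hηP).neg
  · have hσu : sympInvo m K (a * (1 - η)) = (1 - s) * sympInvo m K a := by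
      have : sympInvo m K (a * (1 - η)) = sympInvo m K (a - a * η) := by
        congr 1; noncomm_ring
      rw [this, map_sub]
      have hmul : sympInvo m K (a * η) = s * sympInvo m K a := by
        simp only [hs, sympInvo_apply, Matrix.transpose_mul]
        have h1 := J_mul_J (m := m) (K := K)
        rw [show Jmat m K * (ηᵀ * aᵀ) * Jmat m K
            = Jmat m K * ηᵀ * (aᵀ * Jmat m K) by noncomm_ring]
        rw [show -(Jmat m K * ηᵀ * Jmat m K) * -(Jmat m K * aᵀ * Jmat m K)
            = Jmat m K * ηᵀ * (Jmat m K * Jmat m K) * (aᵀ * Jmat m K) by noncomm_ring, h1]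
        noncomm_ring
      rw [hmul]
      noncomm_ring
    have key : sympInvo m K (a * (1 - η)) * (a * (1 - η)) - 1
        = -(s * η) - s * s - η * η + s * (η * η) + s * (s * η) := by
      rw [hσu]
      have haa : sympInvo m K a * a = 1 + (η + s) := by
        rw [hηε]; noncomm_ring
      rw [show (1 - s) * sympInvo m K a * (a * (1 - η))
          = (1 - s) * (sympInvo m K a * a) * (1 - η) by noncomm_ring, haa]
      noncomm_ring
    rw [key]
    exact (((((hsP.mul hηP).neg.sub (hsP.mul hsP)).sub (hηP.mul hηP)).add
      (EntriesIn.mul_left s (hηP.mul hηP))).add (EntriesIn.mul_left s (hsP.mul hηP)))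

/-- The main induction. -/
lemma lift_aux (I : Ideal K) : ∀ d t : ℕ, 1 ≤ t → I ^ (t + d) = ⊥ →
    ∀ a : Matrix (Fin m ⊕ Fin m) (Fin m ⊕ Fin m) K,
    EntriesIn (I ^ t) (sympInvo m K a * a - 1) →
    ∃ a', sympInvo m K a' * a' = 1 ∧ EntriesIn (I ^ t) (a' - a) := by
  intro d
  induction d with
  | zero =>
    intro t _ hbot a ha
    refine ⟨a, ?_, ?_⟩
    · have : sympInvo m K a * a - 1 = 0 := by
        ext i j
        have := ha i j
        rw [Nat.add_zero] at hbot
        rw [hbot, Ideal.mem_bot] at this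
        simpa using this
      rw [sub_eq_zero] at this
      exact this
    · intro i j; simp
  | succ d ih =>
    intro t ht hbot a ha
    obtain ⟨a₁, ha₁a, ha₁⟩ := step (I ^ t) a ha
    have hpow : I ^ t * I ^ t ≤ I ^ (t + 1) := by
      rw [← pow_add]
      exact Ideal.pow_le_pow_right (by omega)
    have hbot' : I ^ ((t + 1) + d) = ⊥ := by
      rw [show (t + 1) + d = t + (d + 1) by omega]; exact hbot
    obtain ⟨a', ha'1, ha'2⟩ := ih (t + 1) (by omega) hbot' a₁ (ha₁.mono hpow)
    refine ⟨a', ha'1, ?_⟩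
    have : a' - a = (a' - a₁) + (a₁ - a) := by noncomm_ring
    rw [this]
    exact (ha'2.mono (Ideal.pow_le_pow_right (by omega))).add ha₁a

lemma Jmat_map (I : Ideal K) :
    (Jmat m K).map (Ideal.Quotient.mk I) = Jmat m (K ⧸ I) := by
  ext i j
  cases i <;> cases j <;>
    simp [Jmat, Matrix.fromBlocks, Matrix.map_apply, Matrix.one_apply, apply_ite] <;>
    split <;> simp_all

lemma sympInvo_map (I : Ideal K) (a : Matrix (Fin m ⊕ Fin m) (Fin m ⊕ Fin m) K) :
    (sympInvo m K a).map (Ideal.Quotient.mk I)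
      = sympInvo m (K ⧸ I) (a.map (Ideal.Quotient.mk I)) := by
  rw [sympInvo_apply, sympInvo_apply]
  have h1 : ∀ M N : Matrix (Fin m ⊕ Fin m) (Fin m ⊕ Fin m) K,
      (M * N).map (Ideal.Quotient.mk I) = M.map (Ideal.Quotient.mk I) * N.map (Ideal.Quotient.mk I) :=
    fun M N => Matrix.map_mul
  have h2 : aᵀ.map (Ideal.Quotient.mk I) = (a.map (Ideal.Quotient.mk I))ᵀ := by
    ext i j; simp [Matrix.map_apply]
  have h3 : ∀ M : Matrix (Fin m ⊕ Fin m) (Fin m ⊕ Fin m) K,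
      (-M).map (Ideal.Quotient.mk I) = -(M.map (Ideal.Quotient.mk I)) := by
    intro M; ext i j; simp [Matrix.map_apply]
  rw [h3, h1, h1, h2, Jmat_map]

end Aux

/-- if `I` is a nilpotent ideal of `K`, entrywise reduction mod `I` maps
`Sp(2m, K)` onto `Sp(2m, K/I)`. -/
theorem stmt_9 (m : ℕ) (hm : 0 < m) (K : Type*) [CommRing K] (I : Ideal K)
    (hI : IsNilpotent I)
    (b : Matrix (Fin m ⊕ Fin m) (Fin m ⊕ Fin m) (K ⧸ I))
    (hb : sympInvo m (K ⧸ I) b * b = 1) :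
    ∃ a : Matrix (Fin m ⊕ Fin m) (Fin m ⊕ Fin m) K,
      sympInvo m K a * a = 1 ∧ a.map (Ideal.Quotient.mk I) = b := by
  obtain ⟨N, hN⟩ := hI
  -- choose an entrywise lift of b
  set f := Ideal.Quotient.mk I with hf
  have hsurj : ∀ x : K ⧸ I, ∃ y : K, f y = x := Ideal.Quotient.mk_surjective
  choose g hg using hsurj
  set a₀ : Matrix (Fin m ⊕ Fin m) (Fin m ⊕ Fin m) K := fun i j => g (b i j) with ha₀
  have ha₀map : a₀.map f = b := by
    ext i j; rw [Matrix.map_apply]; exact hg (b i j)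
  -- the error term has entries in I
  have hεmap : (sympInvo m K a₀ * a₀ - 1).map f = 0 := by
    have hsub : ∀ M N : Matrix (Fin m ⊕ Fin m) (Fin m ⊕ Fin m) K,
        (M - N).map f = M.map f - N.map f := by
      intro M N; ext i j; simp [Matrix.map_apply]
    rw [hsub, Matrix.map_mul, sympInvo_map, ha₀map, Matrix.map_one f f.map_zero f.map_one, hb,
      sub_self]
  have hε : EntriesIn (I ^ 1) (sympInvo m K a₀ * a₀ - 1) := by
    intro i j
    rw [pow_one, ← Ideal.Quotient.eq_zero_iff_mem]
    have := congrFun (congrFun hεmap i) j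
    simpa [Matrix.map_apply] using this
  have hbot : I ^ (1 + N) = ⊥ := by
    rw [pow_add, pow_one, hN, mul_zero]
    rfl
  obtain ⟨a, ha1, ha2⟩ := lift_aux I N 1 le_rfl hbot a₀ hε
  refine ⟨a, ha1, ?_⟩
  rw [← ha₀map]
  ext i j
  simp only [Matrix.map_apply]
  have : a i j - a₀ i j ∈ I := by
    have := ha2 i j
    simpa [Matrix.sub_apply] using this
  exact (Ideal.Quotient.mk_eq_mk_iff_sub_mem (a i j) (a₀ i j)).2 this
end

section
/- Let I be a nilpotent ideal in a commutative unital ring K, n even, σ the standard symplectic involution on A = Mₙ(K). Then the map a ↦ σ(a)·a sends 1 + I·A onto 1 + Symd(I·A): every element of 1 + Symd(I·A) is of the form σ(a)a for some a ∈ 1 + I·A. -/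
open Matrix

/-- The submodule `I·A = Mₙ(I)` of matrices with all entries in the ideal `I`. -/
def matIdeal (m : ℕ) (K : Type*) [CommRing K] (I : Ideal K) :
    Submodule K (Matrix (Fin m ⊕ Fin m) (Fin m ⊕ Fin m) K) where
  carrier := {a | ∀ i j, a i j ∈ I}
  add_mem' := by
    intro a b ha hb i j
    simpa using I.add_mem (ha i j) (hb i j)
  zero_mem' := by
    intro i j
    simpa using I.zero_mem
  smul_mem' := by
    intro c a ha i j
    simpa using I.smul_mem c (ha i j)

namespace S10

variable {m : ℕ} {K : Type*} [CommRing K]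

lemma JmulJ : Jmat m K * Jmat m K = -1 := by
  simp only [Jmat, Matrix.fromBlocks_multiply]
  ext (i|i) (j|j) <;> simp [Matrix.one_apply]

lemma Jinv : (Jmat m K)⁻¹ = -Jmat m K := by
  apply inv_eq_right_inv
  rw [mul_neg, JmulJ, neg_neg]

lemma Jtrans : (Jmat m K)ᵀ = -Jmat m K := by
  simp only [Jmat, Matrix.fromBlocks_transpose]
  ext (i|i) (j|j) <;> simp [Matrix.one_apply]

lemma invo_apply (a : Matrix (Fin m ⊕ Fin m) (Fin m ⊕ Fin m) K) :
    sympInvo m K a = -(Jmat m K * aᵀ * Jmat m K) := by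
  show (Jmat m K)⁻¹ * aᵀ * (Jmat m K) = _
  rw [Jinv]
  simp [Matrix.neg_mul]

lemma JJmul (X : Matrix (Fin m ⊕ Fin m) (Fin m ⊕ Fin m) K) :
    Jmat m K * (Jmat m K * X) = -X := by
  rw [← Matrix.mul_assoc, JmulJ]; simp

lemma invo_one : sympInvo m K (1 : Matrix (Fin m ⊕ Fin m) (Fin m ⊕ Fin m) K) = 1 := by
  simp [invo_apply, JmulJ]

lemma invo_mul (a b : Matrix (Fin m ⊕ Fin m) (Fin m ⊕ Fin m) K) :
    sympInvo m K (a * b) = sympInvo m K b * sympInvo m K a := by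
  simp only [invo_apply, Matrix.transpose_mul, Matrix.neg_mul, Matrix.mul_neg, neg_neg,
    Matrix.mul_assoc, JJmul]

lemma invo_invo (a : Matrix (Fin m ⊕ Fin m) (Fin m ⊕ Fin m) K) :
    sympInvo m K (sympInvo m K a) = a := by
  simp only [invo_apply, Matrix.transpose_neg, Matrix.transpose_mul, Jtrans,
    Matrix.transpose_transpose, Matrix.neg_mul, Matrix.mul_neg, neg_neg,
    Matrix.mul_assoc, JJmul]
  rw [JmulJ]; simp

lemma matIdeal_mono {P Q : Ideal K} (h : P ≤ Q) : matIdeal m K P ≤ matIdeal m K Q :=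
  fun _ hx i j => h (hx i j)

lemma mul_mem_left {P : Ideal K} {y : Matrix (Fin m ⊕ Fin m) (Fin m ⊕ Fin m) K}
    (x : Matrix (Fin m ⊕ Fin m) (Fin m ⊕ Fin m) K) (hy : y ∈ matIdeal m K P) :
    x * y ∈ matIdeal m K P := by
  intro i j
  rw [Matrix.mul_apply]
  exact Ideal.sum_mem _ fun k _ => P.mul_mem_left _ (hy k j)

lemma mul_mem_right {P : Ideal K} {x : Matrix (Fin m ⊕ Fin m) (Fin m ⊕ Fin m) K}
    (hx : x ∈ matIdeal m K P) (y : Matrix (Fin m ⊕ Fin m) (Fin m ⊕ Fin m) K) :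
    x * y ∈ matIdeal m K P := by
  intro i j
  rw [Matrix.mul_apply]
  exact Ideal.sum_mem _ fun k _ => P.mul_mem_right _ (hx i k)

lemma mul_mem_mul {P Q : Ideal K} {x y : Matrix (Fin m ⊕ Fin m) (Fin m ⊕ Fin m) K}
    (hx : x ∈ matIdeal m K P) (hy : y ∈ matIdeal m K Q) :
    x * y ∈ matIdeal m K (P * Q) := by
  intro i j
  rw [Matrix.mul_apply]
  exact Ideal.sum_mem _ fun k _ => Ideal.mul_mem_mul (hx i k) (hy k j)

lemma transpose_mem {P : Ideal K} {x : Matrix (Fin m ⊕ Fin m) (Fin m ⊕ Fin m) K}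
    (hx : x ∈ matIdeal m K P) : xᵀ ∈ matIdeal m K P := fun i j => hx j i

lemma invo_mem {P : Ideal K} {x : Matrix (Fin m ⊕ Fin m) (Fin m ⊕ Fin m) K}
    (hx : x ∈ matIdeal m K P) : sympInvo m K x ∈ matIdeal m K P := by
  rw [invo_apply]
  exact (matIdeal m K P).neg_mem
    (mul_mem_right (mul_mem_left _ (transpose_mem hx)) _)

lemma pow_mem {P : Ideal K} {x : Matrix (Fin m ⊕ Fin m) (Fin m ⊕ Fin m) K}
    (hx : x ∈ matIdeal m K P) (n : ℕ) (hn : 1 ≤ n) :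
    x ^ n ∈ matIdeal m K (P ^ n) := by
  induction n with
  | zero => omega
  | succ n ih =>
    rcases Nat.eq_or_lt_of_le hn with h | h
    · simpa [← h, pow_one] using hx
    · have := mul_mem_mul (ih (by omega)) hx
      simpa [pow_succ] using this

lemma eq_zero_of_mem_bot {x : Matrix (Fin m ⊕ Fin m) (Fin m ⊕ Fin m) K}
    (hx : x ∈ matIdeal m K (0 : Ideal K)) : x = 0 := by
  ext i j
  simpa using hx i j

/-- Key quadratic lemma: `σ(x)·x ∈ Symd(matIdeal (P*P))` for `x ∈ matIdeal P`. -/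
lemma invo_mul_self_mem {P : Ideal K} {x : Matrix (Fin m ⊕ Fin m) (Fin m ⊕ Fin m) K}
    (hx : x ∈ matIdeal m K P) :
    sympInvo m K x * x ∈
      Submodule.map (LinearMap.id + sympInvo m K) (matIdeal m K (P * P)) := by
  classical
  set b := xᵀ * Jmat m K * x with hb
  have hbmem : b ∈ matIdeal m K (P * P) :=
    mul_mem_mul (mul_mem_right (transpose_mem hx) _) hx
  have hbt : bᵀ = -b := by
    rw [hb]
    simp only [Matrix.transpose_mul, Matrix.transpose_transpose, Jtrans]
    simp [Matrix.mul_neg, Matrix.neg_mul, Matrix.mul_assoc]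
    
  have hdiag : ∀ i, b i i = 0 := by
    intro i
    rw [hb]
    rw [Matrix.mul_assoc]
    rw [Matrix.mul_apply]
    have : ∀ k, (Jmat m K * x) k i =
        Sum.elim (fun p => x (Sum.inr p) i) (fun p => -x (Sum.inl p) i) k := by
      intro k
      cases k with
      | inl p =>
        simp [Jmat, Matrix.mul_apply, Fintype.sum_sum_type, Matrix.one_apply]
      | inr p =>
        simp [Jmat, Matrix.mul_apply, Fintype.sum_sum_type, Matrix.one_apply]
    simp only [Matrix.transpose_apply]
    rw [Fintype.sum_sum_type]
    simp only [this]
    simp [mul_comm]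
  -- decompose b = u - uᵀ
  set u : Matrix (Fin m ⊕ Fin m) (Fin m ⊕ Fin m) K :=
    Matrix.of fun i j =>
      if (finSumFinEquiv i : ℕ) < (finSumFinEquiv j : ℕ) then b i j else 0 with hu
  have humem : u ∈ matIdeal m K (P * P) := by
    intro i j
    rw [hu]
    dsimp only [Matrix.of_apply]
    split_ifs
    · exact hbmem i j
    · exact (P * P).zero_mem
  have hdecomp : u - uᵀ = b := by
    ext i j
    simp only [Matrix.sub_apply, Matrix.transpose_apply, hu, Matrix.of_apply]
    rcases lt_trichotomy ((finSumFinEquiv i : Fin (m + m)) : ℕ)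
        ((finSumFinEquiv j : Fin (m + m)) : ℕ) with h | h | h
    · rw [if_pos h, if_neg (by omega)]; ring
    · have hij : i = j := by
        apply finSumFinEquiv.injective
        exact Fin.ext h
      subst hij
      rw [if_neg (by omega)]
      simp [hdiag i]
    · rw [if_neg (by omega), if_pos h]
      have := congrFun (congrFun hbt i) j
      simp only [Matrix.transpose_apply, Matrix.neg_apply] at this
      -- this : b j i = -b i j
      linear_combination -this
  refine ⟨-(Jmat m K * u), (matIdeal m K (P * P)).neg_mem (mul_mem_left _ humem), ?_⟩
  have hsw : sympInvo m K (-(Jmat m K * u)) = Jmat m K * uᵀ := by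
    rw [map_neg, invo_apply]
    simp only [Matrix.transpose_mul, Jtrans]
    simp only [Matrix.mul_neg, Matrix.neg_mul, neg_neg, Matrix.mul_assoc, JJmul]
    rw [JmulJ]
    simp [Matrix.mul_neg]
  have hxx : sympInvo m K x * x = -(Jmat m K * b) := by
    rw [invo_apply, hb]
    simp [Matrix.neg_mul, Matrix.mul_assoc]
  rw [LinearMap.add_apply, LinearMap.id_apply, hsw, hxx, ← hdecomp]
  rw [Matrix.mul_sub]
  abel

lemma main_ind {I : Ideal K} {N : ℕ} (hIN : I ^ N = 0) :
    ∀ t k, 1 ≤ k → N ≤ k + t →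
      ∀ c : Matrix (Fin m ⊕ Fin m) (Fin m ⊕ Fin m) K,
        c - 1 ∈ Submodule.map (LinearMap.id + sympInvo m K) (matIdeal m K (I ^ k)) →
        ∃ a, a - 1 ∈ matIdeal m K (I ^ k) ∧ sympInvo m K a * a = c := by
  intro t
  induction t with
  | zero =>
    intro k hk hNk c hc
    obtain ⟨y, hy, hyc⟩ := hc
    have hle : I ^ k ≤ (0 : Ideal K) := by
      rw [← hIN]
      exact Ideal.pow_le_pow_right (by omega)
    have hy0 : y = 0 := eq_zero_of_mem_bot (matIdeal_mono hle hy)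
    have hc1 : c = 1 := by
      have : (0 : Matrix (Fin m ⊕ Fin m) (Fin m ⊕ Fin m) K) = c - 1 := by
        rw [← hyc, hy0, map_zero]
      have := this.symm
      rw [sub_eq_zero] at this
      exact this
    exact ⟨1, by simpa using (matIdeal m K (I ^ k)).zero_mem, by rw [invo_one, hc1, one_mul]⟩
  | succ t ih =>
    intro k hk hNk c hc
    obtain ⟨y, hy, hyc⟩ := hc
    have hyc' : y + sympInvo m K y = c - 1 := by
      simpa [LinearMap.add_apply] using hyc
    -- y is nilpotent
    have hyNil : IsNilpotent y := by
      refine ⟨N + 1, ?_⟩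
      apply eq_zero_of_mem_bot
      refine matIdeal_mono ?_ (pow_mem hy (N + 1) (by omega))
      rw [← pow_mul, ← hIN]
      refine Ideal.pow_le_pow_right ?_
      calc N ≤ N + 1 := by omega
        _ ≤ k * (N + 1) := Nat.le_mul_of_pos_left _ (by omega)
    have hunit : IsUnit ((1 : Matrix (Fin m ⊕ Fin m) (Fin m ⊕ Fin m) K) + y) :=
      hyNil.isUnit_add_left_of_commute isUnit_one (Commute.one_right y)
    obtain ⟨v, hv⟩ := hunit
    set b : Matrix (Fin m ⊕ Fin m) (Fin m ⊕ Fin m) K := ↑v⁻¹ with hbdef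
    have hab : (1 + y) * b = 1 := by rw [← hv, hbdef]; exact v.mul_inv
    have hba : b * (1 + y) = 1 := by rw [← hv, hbdef]; exact v.inv_mul
    -- inverse lies in 1 + I^k A
    have hbmem : b - 1 ∈ matIdeal m K (I ^ k) := by
      have hb1 : b - 1 = -y * b := by
        have h := hab
        calc b - 1 = b - (1 + y) * b := by rw [hab]
          _ = -y * b := by noncomm_ring
      rw [hb1]
      exact mul_mem_right ((matIdeal m K (I ^ k)).neg_mem hy) b
    -- sigma facts
    have hσa₀ : sympInvo m K (1 + y) = 1 + sympInvo m K y := by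
      rw [map_add, invo_one]
    have hσba : sympInvo m K b * sympInvo m K (1 + y) = 1 := by
      rw [← invo_mul, hab, invo_one]
    have hσab : sympInvo m K (1 + y) * sympInvo m K b = 1 := by
      rw [← invo_mul, hba, invo_one]
    have hmain : sympInvo m K (1 + y) * (1 + y) = c + sympInvo m K y * y := by
      rw [hσa₀]
      have : (1 + sympInvo m K y) * (1 + y)
          = 1 + (y + sympInvo m K y) + sympInvo m K y * y := by noncomm_ring
      rw [this, hyc']
      noncomm_ring
    -- the corrected target
    set c' := sympInvo m K b * c * b with hc'def
    have hkey : c' - 1 = sympInvo m K b * (-(sympInvo m K y * y)) * b := by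
      have h1 : (1 : Matrix (Fin m ⊕ Fin m) (Fin m ⊕ Fin m) K)
          = sympInvo m K b * (sympInvo m K (1 + y) * (1 + y)) * b := by
        calc (1 : Matrix (Fin m ⊕ Fin m) (Fin m ⊕ Fin m) K)
            = (sympInvo m K b * sympInvo m K (1 + y)) * ((1 + y) * b) := by
              rw [hσba, hab, one_mul]
          _ = sympInvo m K b * (sympInvo m K (1 + y) * (1 + y)) * b := by
              noncomm_ring
      rw [hc'def]
      conv_lhs => rw [h1]
      rw [hmain]
      noncomm_ring
    have hc'mem : c' - 1 ∈
        Submodule.map (LinearMap.id + sympInvo m K) (matIdeal m K (I ^ (k + 1))) := by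
      obtain ⟨w, hw, hww⟩ := invo_mul_self_mem hy
      have hww' : w + sympInvo m K w = sympInvo m K y * y := by
        simpa [LinearMap.add_apply] using hww
      refine ⟨-(sympInvo m K b * w * b), ?_, ?_⟩
      · have hwmem : w ∈ matIdeal m K (I ^ (k + 1)) := by
          refine matIdeal_mono ?_ hw
          rw [← pow_add]
          exact Ideal.pow_le_pow_right (by omega)
        exact (matIdeal m K (I ^ (k + 1))).neg_mem
          (mul_mem_right (mul_mem_left _ hwmem) b)
      · have hσw : sympInvo m K (sympInvo m K b * w * b)
            = sympInvo m K b * sympInvo m K w * b := by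
          rw [invo_mul, invo_mul, invo_invo]
          noncomm_ring
        simp only [LinearMap.add_apply, LinearMap.id_apply, map_neg, hσw]
        rw [hkey]
        have : sympInvo m K b * w * b + sympInvo m K b * sympInvo m K w * b
            = sympInvo m K b * (w + sympInvo m K w) * b := by noncomm_ring
        rw [this, hww']
        noncomm_ring
    obtain ⟨a', ha'mem, ha'⟩ := ih (k + 1) (by omega) (by omega) c' hc'mem
    refine ⟨a' * (1 + y), ?_, ?_⟩
    · have : a' * (1 + y) - 1 = (a' - 1) * (1 + y) + y := by noncomm_ring
      rw [this]
      refine (matIdeal m K (I ^ k)).add_mem ?_ hy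
      exact mul_mem_right
        (matIdeal_mono (Ideal.pow_le_pow_right (by omega)) ha'mem) _
    · rw [invo_mul]
      calc sympInvo m K (1 + y) * sympInvo m K a' * (a' * (1 + y))
          = sympInvo m K (1 + y) * (sympInvo m K a' * a') * (1 + y) := by noncomm_ring
        _ = sympInvo m K (1 + y) * c' * (1 + y) := by rw [ha']
        _ = (sympInvo m K (1 + y) * sympInvo m K b) * c * (b * (1 + y)) := by
            rw [hc'def]; noncomm_ring
        _ = c := by rw [hσab, hba, one_mul, mul_one]

end S10

/-- for a nilpotent ideal `I`, the map `a ↦ σ(a)·a` sends `1 + I·A`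
into and onto `1 + Symd(I·A)`. -/
theorem stmt_10 (m : ℕ) (hm : 0 < m) (K : Type*) [CommRing K] (I : Ideal K)
    (hI : IsNilpotent I) :
    (∀ a : Matrix (Fin m ⊕ Fin m) (Fin m ⊕ Fin m) K, a - 1 ∈ matIdeal m K I →
      sympInvo m K a * a - 1 ∈
        Submodule.map (LinearMap.id + sympInvo m K) (matIdeal m K I)) ∧
    (∀ c : Matrix (Fin m ⊕ Fin m) (Fin m ⊕ Fin m) K,
      c - 1 ∈ Submodule.map (LinearMap.id + sympInvo m K) (matIdeal m K I) →
      ∃ a : Matrix (Fin m ⊕ Fin m) (Fin m ⊕ Fin m) K,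
        a - 1 ∈ matIdeal m K I ∧ sympInvo m K a * a = c) := by
  obtain ⟨N, hIN⟩ := hI
  constructor
  · intro a ha
    have hax : a = 1 + (a - 1) := by abel
    have hkey : sympInvo m K a * a - 1
        = ((a - 1) + sympInvo m K (a - 1)) + sympInvo m K (a - 1) * (a - 1) := by
      conv_lhs => rw [hax]
      rw [map_add, S10.invo_one]
      noncomm_ring
    have hmem1 : (a - 1) + sympInvo m K (a - 1) ∈
        Submodule.map (LinearMap.id + sympInvo m K) (matIdeal m K I) :=
      ⟨a - 1, ha, by simp [LinearMap.add_apply]⟩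
    rw [hkey]
    refine Submodule.add_mem _ hmem1 ?_
    exact Submodule.map_mono (S10.matIdeal_mono Ideal.mul_le_left)
      (S10.invo_mul_self_mem ha)
  · intro c hc
    have hc1 : c - 1 ∈ Submodule.map (LinearMap.id + sympInvo m K)
        (matIdeal m K (I ^ 1)) := by rwa [pow_one]
    obtain ⟨a, hamem, ha⟩ := S10.main_ind hIN N 1 le_rfl (by omega) c hc1
    rw [pow_one] at hamem
    exact ⟨a, hamem, ha⟩
end

section
/- Let V be a finite-dimensional vector space over GF(2) with a quadratic form Q whose polarization ⟨·,·⟩ is nondegenerate. Let T = V ⊕ ⟨f⟩ (f a new basis vector) and extend Q to T by Q₁(v + εf) = Q(v) + ε (so Q₁(f)=1), keeping the same polarization with f in its radical. Then for every α in Sp(T) (the stabilizer of the alternating form on T), there exists a unique t_α ∈ T with Q₁(t_α) = 0 such that Q₁(x) − Q₁(α(x)) = ⟨t_α, α(x)⟩ for all x ∈ T, and the map α ↦ (t_α, α) is a group isomorphism from Sp(T) onto the stabilizer of Q₁ in the affine group T ⋊ GL(T). -/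
/-- The extension `Q₁` of a `GF(2)`-quadratic form `Q` on `V` to `T = V ⊕ ⟨f⟩`
with `Q₁(f) = 1`. -/
def Qone {V : Type*} [AddCommGroup V] [Module (ZMod 2) V]
    (Q : QuadraticForm (ZMod 2) V) : V × ZMod 2 → ZMod 2 :=
  fun x => Q x.1 + x.2

/-- The alternating form on `T = V ⊕ ⟨f⟩` extending the polarization of `Q`, with `f`
in its radical. -/
def Bone {V : Type*} [AddCommGroup V] [Module (ZMod 2) V]
    (Q : QuadraticForm (ZMod 2) V) : V × ZMod 2 → V × ZMod 2 → ZMod 2 :=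
  fun x y => QuadraticMap.polar (fun v => Q v) x.1 y.1

/-- `α` belongs to `Sp(T)`: it preserves the alternating form `B₁`. -/
def IsSymp {V : Type*} [AddCommGroup V] [Module (ZMod 2) V]
    (Q : QuadraticForm (ZMod 2) V)
    (α : (Module.End (ZMod 2) (V × ZMod 2))ˣ) : Prop :=
  ∀ x y : V × ZMod 2,
    Bone Q ((α : Module.End (ZMod 2) (V × ZMod 2)) x)
      ((α : Module.End (ZMod 2) (V × ZMod 2)) y) = Bone Q x y

section Aux
variable {V : Type*} [AddCommGroup V] [Module (ZMod 2) V]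

lemma z2cases (c : ZMod 2) : c = 0 ∨ c = 1 := by revert c; decide

lemma z2add (a : ZMod 2) : a + a = 0 := by revert a; decide

lemma z2sub (a b : ZMod 2) : a - b = a + b := by revert a b; decide

lemma mod2_add_self (x : V) : x + x = 0 := by
  have h : ((2:ℕ):ZMod 2) • x = x + x := by
    rw [Nat.cast_smul_eq_nsmul, two_smul]
  have h2 : ((2:ℕ):ZMod 2) = 0 := by decide
  rw [h2, zero_smul] at h; exact h.symm

variable (Q : QuadraticForm (ZMod 2) V)

lemma qone_zero : Qone Q 0 = 0 := by simp [Qone]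

lemma qone_add (a b : V × ZMod 2) :
    Qone Q (a + b) = Qone Q a + Qone Q b + Bone Q a b := by
  simp only [Qone, Bone, Prod.fst_add, Prod.snd_add, QuadraticMap.polar]
  ring

lemma bone_add_left (a b c : V × ZMod 2) :
    Bone Q (a + b) c = Bone Q a c + Bone Q b c := by
  simp only [Bone, Prod.fst_add]
  exact QuadraticMap.polar_add_left Q _ _ _

lemma bone_add_right (a b c : V × ZMod 2) :
    Bone Q a (b + c) = Bone Q a b + Bone Q a c := by
  simp only [Bone, Prod.fst_add]
  exact QuadraticMap.polar_add_right Q _ _ _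

lemma bone_zero_right (a : V × ZMod 2) : Bone Q a 0 = 0 := by
  simp [Bone, QuadraticMap.polar_zero_right]
end Aux

lemma exists_polar_rep {V : Type*} [AddCommGroup V] [Module (ZMod 2) V]
    [FiniteDimensional (ZMod 2) V] (Q : QuadraticForm (ZMod 2) V)
    (hnd : ∀ v : V, (∀ w : V, QuadraticMap.polar (fun u => Q u) v w = 0) → v = 0)
    (ℓ : V →ₗ[ZMod 2] ZMod 2) :
    ∃ u : V, ∀ w, QuadraticMap.polar (fun v => Q v) u w = ℓ w := by
  set Φ : V →ₗ[ZMod 2] Module.Dual (ZMod 2) V := QuadraticMap.polarBilin Q with hΦ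
  have hker : LinearMap.ker Φ = ⊥ := by
    rw [LinearMap.ker_eq_bot']
    intro v hv
    refine hnd v fun w => ?_
    have := LinearMap.congr_fun hv w
    simpa [hΦ, QuadraticMap.polarBilin_apply_apply] using this
  have hinj : Function.Injective Φ := LinearMap.ker_eq_bot.mp hker
  have hsurj : Function.Surjective Φ :=
    (LinearMap.injective_iff_surjective_of_finrank_eq_finrank
      (Subspace.dual_finrank_eq).symm).mp hinj
  obtain ⟨u, hu⟩ := hsurj ℓ
  refine ⟨u, fun w => ?_⟩
  have := LinearMap.congr_fun hu w
  simpa [hΦ, QuadraticMap.polarBilin_apply_apply] using this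


section Key
variable {V : Type*} [AddCommGroup V] [Module (ZMod 2) V]
  [FiniteDimensional (ZMod 2) V] (Q : QuadraticForm (ZMod 2) V)

lemma key_exists
    (hnd : ∀ v : V, (∀ w : V, QuadraticMap.polar (fun u => Q u) v w = 0) → v = 0)
    (α : (Module.End (ZMod 2) (V × ZMod 2))ˣ) (hα : IsSymp Q α) :
    ∃! t : V × ZMod 2, Qone Q t = 0 ∧
      ∀ x : V × ZMod 2,
        Qone Q x - Qone Q ((α : Module.End (ZMod 2) (V × ZMod 2)) x) =
          Bone Q t ((α : Module.End (ZMod 2) (V × ZMod 2)) x) := by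
  set A : Module.End (ZMod 2) (V × ZMod 2) := (α : Module.End (ZMod 2) (V × ZMod 2)) with hA
  set A' : Module.End (ZMod 2) (V × ZMod 2) := ((α⁻¹ : _ˣ) : Module.End (ZMod 2) (V × ZMod 2)) with hA'
  have hAA' : ∀ x, A (A' x) = x := by
    intro x
    have : (A * A') x = (1 : Module.End (ZMod 2) (V × ZMod 2)) x := by
      rw [hA, hA', α.mul_inv]
    simpa using this
  have hA'A : ∀ x, A' (A x) = x := by
    intro x
    have : (A' * A) x = (1 : Module.End (ZMod 2) (V × ZMod 2)) x := by
      rw [hA, hA', α.inv_mul]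
    simpa using this
  have hsurj : ∀ w : V, A (A' (w, 0)) = (w, 0) := fun w => hAA' _
  -- α fixes f = (0,1)
  have hf : A (0, 1) = ((0 : V), (1 : ZMod 2)) := by
    have h1 : (A (0, 1)).1 = 0 := by
      refine hnd _ fun w => ?_
      have := hα (0, 1) (A' (w, 0))
      rw [hsurj] at this
      simpa [Bone, QuadraticMap.polar_zero_left] using this
    have h2 : (A (0, 1)).2 ≠ 0 := by
      intro h0
      have heq : A ((0 : V), (1 : ZMod 2)) = A 0 := by
        rw [map_zero]
        exact Prod.ext (by simp [h1]) (by simp [h0])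
      have h01 : (((0 : V), (1 : ZMod 2)) : V × ZMod 2) = 0 := by
        have := congrArg A' heq
        rw [hA'A] at this
        simp at this
      have : (1 : ZMod 2) = 0 := congrArg Prod.snd h01
      exact one_ne_zero this
    rcases z2cases (A (0, 1)).2 with h | h
    · exact absurd h h2
    · exact Prod.ext h1 h
  have hfinv : A' ((0 : V), (1 : ZMod 2)) = ((0 : V), (1 : ZMod 2)) := by
    have := congrArg A' hf
    rw [hA'A] at this
    exact this.symm
  -- the additive map g
  set g : V × ZMod 2 → ZMod 2 := fun x => Qone Q x + Qone Q (A x) with hg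
  have hg0 : g 0 = 0 := by simp [hg, qone_zero]
  have hgadd : ∀ x y, g (x + y) = g x + g y := by
    intro x y
    have h1 := qone_add Q x y
    have h2 := qone_add Q (A x) (A y)
    have h3 : Qone Q (A (x + y)) = Qone Q (A x) + Qone Q (A y) + Bone Q x y := by
      rw [map_add, h2, hα]
    simp only [hg, h1, h3]
    linear_combination z2add (Bone Q x y)
  have hgf : g ((0 : V), (1 : ZMod 2)) = 0 := by
    simp only [hg, hf]
    exact z2add _
  -- the linear functional ℓ
  set ℓ : V →ₗ[ZMod 2] ZMod 2 :=
    { toFun := fun w => g (A' (w, 0))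
      map_add' := by
        intro w w'
        show g (A' ((w + w'), 0)) = g (A' (w, 0)) + g (A' (w', 0))
        have h : (((w + w' : V), (0 : ZMod 2)) : V × ZMod 2) = (w, 0) + (w', 0) := by
          simp
        rw [h, map_add, hgadd]
      map_smul' := by
        intro c w
        rcases z2cases c with h | h <;> subst h
        · have h0 : (((0 : ZMod 2) • w, (0 : ZMod 2)) : V × ZMod 2) = 0 := by simp
          simp [h0, hg0]
          rw [show ((0 : V), (0 : ZMod 2)) = (0 : V × ZMod 2) from rfl, map_zero, hg0]
        · simp } with hℓ
  obtain ⟨u, hu⟩ := exists_polar_rep Q hnd ℓ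
  -- the key pointwise identity
  have hkey : ∀ x : V × ZMod 2, QuadraticMap.polar (fun v => Q v) u (A x).1 = g x := by
    intro x
    rcases z2cases (A x).2 with h | h
    · have hx : A' ((A x).1, 0) = x := by
        have : (((A x).1, (0 : ZMod 2)) : V × ZMod 2) = A x := Prod.ext rfl h.symm
        rw [this, hA'A]
      rw [hu, hℓ]
      simp only [LinearMap.coe_mk, AddHom.coe_mk]
      rw [hx]
    · have hax : (((A x).1, (0 : ZMod 2)) : V × ZMod 2) = A x + ((0 : V), (1 : ZMod 2)) := by
        refine Prod.ext (by simp) ?_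
        simp [h, z2add]
      have hx : A' ((A x).1, 0) = x + ((0 : V), (1 : ZMod 2)) := by
        rw [hax, map_add, hA'A, hfinv]
      rw [hu, hℓ]
      simp only [LinearMap.coe_mk, AddHom.coe_mk]
      rw [hx, hgadd, hgf, add_zero]
  refine ⟨(u, Q u), ⟨?_, ?_⟩, ?_⟩
  · simp [Qone, z2add]
  · intro x
    rw [z2sub]
    have : Bone Q (u, Q u) (A x) = QuadraticMap.polar (fun v => Q v) u (A x).1 := rfl
    rw [this, hkey]
  · rintro t ⟨ht0, htB⟩
    have h1 : t.1 = u := by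
      have hpol : ∀ w : V, QuadraticMap.polar (fun v => Q v) t.1 w
          = QuadraticMap.polar (fun v => Q v) u w := by
        intro w
        have e1 := htB (A' (w, 0))
        rw [hAA'] at e1
        rw [z2sub] at e1
        have e2 : Qone Q (A' (w, 0)) + Qone Q ((w, 0) : V × ZMod 2)
            = Bone Q ((u, Q u) : V × ZMod 2) (w, 0) := by
          have h3 := hkey (A' (w, 0))
          rw [hAA'] at h3
          simp only [hg] at h3
          rw [hAA'] at h3
          exact h3.symm
        have : Bone Q t ((w, 0) : V × ZMod 2) = Bone Q ((u, Q u) : V × ZMod 2) (w, 0) := by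
          rw [← e1, ← e2]
        simpa [Bone] using this
      have : t.1 + u = 0 := by
        refine hnd _ fun w => ?_
        rw [QuadraticMap.polar_add_left Q, hpol, z2add]
      have := congrArg (· + u) this
      simpa [add_assoc, mod2_add_self] using this
    have h2 : t.2 = Q u := by
      have : Q t.1 + t.2 = 0 := ht0
      rw [h1] at this
      have := congrArg (Q u + ·) this
      simp only [add_zero] at this
      rw [← add_assoc, z2add, zero_add] at this
      exact this
    exact Prod.ext h1 h2
end Key

section Key2
variable {V : Type*} [AddCommGroup V] [Module (ZMod 2) V] (Q : QuadraticForm (ZMod 2) V)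

lemma stab_forward (t : V × ZMod 2) (α : (Module.End (ZMod 2) (V × ZMod 2))ˣ)
    (h : ∀ x : V × ZMod 2,
      Qone Q (t + (α : Module.End (ZMod 2) (V × ZMod 2)) x) = Qone Q x) :
    IsSymp Q α ∧ Qone Q t = 0 ∧
      ∀ x : V × ZMod 2,
        Qone Q x - Qone Q ((α : Module.End (ZMod 2) (V × ZMod 2)) x) =
          Bone Q t ((α : Module.End (ZMod 2) (V × ZMod 2)) x) := by
  set A : Module.End (ZMod 2) (V × ZMod 2) := (α : Module.End (ZMod 2) (V × ZMod 2)) with hA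
  have ht0 : Qone Q t = 0 := by
    have := h 0
    rw [map_zero, add_zero, qone_zero] at this
    exact this
  have hq : ∀ z, Qone Q (A z) = Qone Q z + Bone Q t (A z) := by
    intro z
    have e := h z
    rw [qone_add, ht0, zero_add] at e
    linear_combination e - z2add (Bone Q t (A z))
  have hsymp : IsSymp Q α := by
    intro x y
    have e1 := qone_add Q (A x) (A y)
    have e3 := hq (x + y)
    rw [map_add, qone_add Q x y, bone_add_right] at e3
    have e4 := hq x
    have e5 := hq y
    linear_combination e3 - e1 - e4 - e5
  refine ⟨hsymp, ht0, fun x => ?_⟩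
  rw [z2sub]
  linear_combination hq x + z2add (Qone Q x)
end Key2


/-- for each `α ∈ Sp(T)` there is a unique `t_α ∈ T` with `Q₁(t_α) = 0`
and `Q₁(x) − Q₁(α x) = ⟨t_α, α x⟩` for all `x`, and `α ↦ (t_α, α)` is a group
isomorphism from `Sp(T)` onto the stabilizer of `Q₁` in the affine group `T ⋊ GL(T)`. -/
theorem stmt_11 {V : Type*} [AddCommGroup V] [Module (ZMod 2) V]
    [FiniteDimensional (ZMod 2) V] (Q : QuadraticForm (ZMod 2) V)
    (hnd : ∀ v : V, (∀ w : V, QuadraticMap.polar (fun u => Q u) v w = 0) → v = 0) :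
    ∃ tA : (Module.End (ZMod 2) (V × ZMod 2))ˣ → V × ZMod 2,
      (∀ α : (Module.End (ZMod 2) (V × ZMod 2))ˣ, IsSymp Q α →
        Qone Q (tA α) = 0 ∧
        (∀ x : V × ZMod 2,
          Qone Q x - Qone Q ((α : Module.End (ZMod 2) (V × ZMod 2)) x) =
            Bone Q (tA α) ((α : Module.End (ZMod 2) (V × ZMod 2)) x)) ∧
        (∀ t : V × ZMod 2, Qone Q t = 0 →
          (∀ x : V × ZMod 2,
            Qone Q x - Qone Q ((α : Module.End (ZMod 2) (V × ZMod 2)) x) =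
              Bone Q t ((α : Module.End (ZMod 2) (V × ZMod 2)) x)) →
          t = tA α)) ∧
      (∀ (t : V × ZMod 2) (α : (Module.End (ZMod 2) (V × ZMod 2))ˣ),
        (∀ x : V × ZMod 2,
          Qone Q (t + (α : Module.End (ZMod 2) (V × ZMod 2)) x) = Qone Q x) ↔
        (IsSymp Q α ∧ t = tA α)) ∧
      (∀ α β : (Module.End (ZMod 2) (V × ZMod 2))ˣ, IsSymp Q α → IsSymp Q β →
        tA (α * β) = tA α + (α : Module.End (ZMod 2) (V × ZMod 2)) (tA β)) := by
  classical
  have key := key_exists Q hnd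
  refine ⟨fun α => if h : IsSymp Q α then (key α h).exists.choose else 0, ?_, ?_, ?_⟩
  · intro α hα
    simp only [dif_pos hα]
    obtain ⟨h0, hB⟩ := (key α hα).exists.choose_spec
    exact ⟨h0, hB, fun t ht0 htB => (key α hα).unique ⟨ht0, htB⟩ ⟨h0, hB⟩⟩
  · intro t α
    constructor
    · intro h
      obtain ⟨hsymp, ht0, htB⟩ := stab_forward Q t α h
      refine ⟨hsymp, ?_⟩
      simp only [dif_pos hsymp]
      exact (key α hsymp).unique ⟨ht0, htB⟩ (key α hsymp).exists.choose_spec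
    · rintro ⟨hsymp, rfl⟩
      simp only [dif_pos hsymp]
      obtain ⟨h0, hB⟩ := (key α hsymp).exists.choose_spec
      intro x
      rw [qone_add, h0, zero_add, ← hB x]
      ring
  · intro α β hα hβ
    have hc : ∀ x : V × ZMod 2,
        ((α * β : (Module.End (ZMod 2) (V × ZMod 2))ˣ) :
          Module.End (ZMod 2) (V × ZMod 2)) x =
        (α : Module.End (ZMod 2) (V × ZMod 2))
          ((β : Module.End (ZMod 2) (V × ZMod 2)) x) := fun x => rfl
    have hαβ : IsSymp Q (α * β) := by
      intro x y
      rw [hc, hc, hα, hβ]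
    simp only [dif_pos hα, dif_pos hβ, dif_pos hαβ]
    obtain ⟨h0α, hBα⟩ := (key α hα).exists.choose_spec
    obtain ⟨h0β, hBβ⟩ := (key β hβ).exists.choose_spec
    set tα := (key α hα).exists.choose with htα
    set tβ := (key β hβ).exists.choose with htβ
    set Aα : Module.End (ZMod 2) (V × ZMod 2) := (α : Module.End (ZMod 2) (V × ZMod 2)) with hAα
    set Aβ : Module.End (ZMod 2) (V × ZMod 2) := (β : Module.End (ZMod 2) (V × ZMod 2)) with hAβ
    have conda : Qone Q (tα + Aα tβ) = 0 := by
      rw [qone_add, h0α, zero_add, ← hBα tβ, z2sub]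
      linear_combination h0β + z2add (Qone Q (Aα tβ))
    have condb : ∀ x : V × ZMod 2,
        Qone Q x - Qone Q (((α * β : (Module.End (ZMod 2) (V × ZMod 2))ˣ) :
          Module.End (ZMod 2) (V × ZMod 2)) x) =
        Bone Q (tα + Aα tβ) (((α * β : (Module.End (ZMod 2) (V × ZMod 2))ˣ) :
          Module.End (ZMod 2) (V × ZMod 2)) x) := by
      intro x
      rw [hc x, bone_add_left, hα tβ (Aβ x)]
      have e1 := hBα (Aβ x)
      have e2 := hBβ x
      linear_combination e1 + e2
    exact ((key (α * β) hαβ).unique (key (α * β) hαβ).exists.choose_spec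
      ⟨conda, condb⟩).symm ▸ rfl
end

section
/- Let M be a finite abelian 2-group, R = End(M), V = M/2M viewed as a GF(2)-vector space, and π : R → End(V) the natural reduction homomorphism. Then ker π = {r ∈ R | r(M) ⊆ 2M} is a nilpotent ideal of R, and the image of π is exactly End(V, F) = {s ∈ End(V) | s(V_i) ⊆ V_i for all i}, where V_i = (M[2^i] + 2M)/2M and M[2^i] = {x ∈ M | 2^i x = 0}. -/
/-- The subgroup `2M` of an additive abelian group `M`. -/
def twoSub (M : Type*) [AddCommGroup M] : AddSubgroup M where
  carrier := Set.range (fun y : M => (2 : ℕ) • y)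
  zero_mem' := ⟨0, by simp⟩
  add_mem' := by
    rintro a b ⟨x, rfl⟩ ⟨y, rfl⟩
    exact ⟨x + y, by simp [smul_add]⟩
  neg_mem' := by
    rintro a ⟨x, rfl⟩
    exact ⟨-x, by simp [smul_neg]⟩

/-- The reduction map `π : End(M) → End(M/2M)`. -/
def piMap (M : Type*) [AddCommGroup M] (r : AddMonoid.End M) :
    AddMonoid.End (M ⧸ twoSub M) :=
  QuotientAddGroup.map (twoSub M) (twoSub M) r (by
    rintro x ⟨y, rfl⟩
    exact ⟨r y, by
      show (2 : ℕ) • r y = r ((2 : ℕ) • y)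
      rw [two_nsmul, two_nsmul]
      exact (AddMonoidHom.map_add r y y).symm⟩)

/-- The `2^i`-torsion subgroup `M[2^i]` of `M`. -/
def torsSub (M : Type*) [AddCommGroup M] (i : ℕ) : AddSubgroup M where
  carrier := {x | (2 ^ i : ℕ) • x = 0}
  zero_mem' := by simp
  add_mem' := by
    intro a b ha hb
    simp only [Set.mem_setOf_eq] at *
    rw [smul_add, ha, hb, add_zero]
  neg_mem' := by
    intro a ha
    simp only [Set.mem_setOf_eq] at *
    rw [smul_neg, ha, neg_zero]

/-- The flag `V_i = (M[2^i] + 2M)/2M` in `V = M/2M`. -/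
def flagSub (M : Type*) [AddCommGroup M] (i : ℕ) : AddSubgroup (M ⧸ twoSub M) :=
  (torsSub M i).map (QuotientAddGroup.mk' (twoSub M))

lemma piMap_apply (M : Type*) [AddCommGroup M] (r : AddMonoid.End M) (x : M) :
    piMap M r (QuotientAddGroup.mk x) = QuotientAddGroup.mk (r x) := rfl

lemma zmodHom_ext {n : ℕ} {A : Type*} [AddCommGroup A] {f g : ZMod n →+ A}
    (h : f 1 = g 1) : f = g := by
  have h2 : f.comp (Int.castAddHom (ZMod n)) = g.comp (Int.castAddHom (ZMod n)) :=
    AddMonoidHom.ext_int (by simpa using h)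
  ext y
  obtain ⟨m, rfl⟩ := ZMod.intCast_surjective y
  exact DFunLike.congr_fun h2 m

lemma prod_mem_pow {M : Type*} [AddCommGroup M] (L : List (AddMonoid.End M))
    (h : ∀ r ∈ L, ∀ x : M, r x ∈ twoSub M) (x : M) :
    ∃ y : M, L.prod x = (2 ^ L.length : ℕ) • y := by
  induction L with
  | nil => exact ⟨x, by simp⟩
  | cons r L ih =>
    obtain ⟨y, hy⟩ := ih (fun t ht => h t (List.mem_cons_of_mem _ ht))
    obtain ⟨z, hz⟩ := h r List.mem_cons_self y
    refine ⟨z, ?_⟩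
    have h1 : (r :: L).prod x = r (L.prod x) := by
      rw [List.prod_cons]; rfl
    rw [h1, hy, map_nsmul, ← hz, List.length_cons, pow_succ, mul_nsmul]
    exact smul_comm _ _ _

lemma surj_aux {M : Type*} [AddCommGroup M] [Fintype M] (k : ℕ)
    (hM : ∀ x : M, (2 ^ k : ℕ) • x = 0)
    (s : AddMonoid.End (M ⧸ twoSub M))
    (hs : ∀ i : ℕ, (flagSub M i).map s ≤ flagSub M i) :
    ∃ r : AddMonoid.End M, piMap M r = s := by
  classical
  obtain ⟨ι, hι, n, hn, ⟨φ⟩⟩ := AddCommGroup.equiv_directSum_zmod_of_finite' M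
  haveI : ∀ j, NeZero (n j) := fun j => ⟨by have := hn j; omega⟩
  set mkQ := QuotientAddGroup.mk' (twoSub M) with hmkQ
  set x : ι → M := fun j => φ.symm (DirectSum.of (fun i => ZMod (n i)) j 1) with hxdef
  have key : ∀ (j : ι) (c : ℕ), c • x j = 0 ↔ ((c : ZMod (n j)) = 0) := by
    intro j c
    have h1 : c • x j = φ.symm (DirectSum.of (fun i => ZMod (n i)) j (c : ZMod (n j))) := by
      rw [hxdef]
      simp only []
      rw [← map_nsmul, ← map_nsmul]
      congr 1
      simp [nsmul_eq_mul]
    rw [h1]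
    constructor
    · intro h
      have h2 : DirectSum.of (fun i => ZMod (n i)) j ((c : ZMod (n j))) = 0 := by
        apply φ.symm.injective
        simpa using h
      exact DirectSum.of_injective (β := fun i => ZMod (n i)) j
        (h2.trans (map_zero (DirectSum.of (fun i => ZMod (n i)) j)).symm)
    · intro h
      rw [h]
      simp
  have hdvd : ∀ j, n j ∣ 2 ^ k := fun j => by
    have := hM (x j)
    rw [key] at this
    exact (ZMod.natCast_eq_zero_iff _ _).mp this
  have hv : ∀ j, ∃ v, v ≤ k ∧ n j = 2 ^ v := fun j =>
    (Nat.dvd_prime_pow Nat.prime_two).mp (hdvd j)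
  choose v hvk hnv using hv
  have hxt : ∀ j, x j ∈ torsSub M (v j) := by
    intro j
    show (2 ^ v j : ℕ) • x j = 0
    rw [key, ← hnv j]
    exact ZMod.natCast_self (n j)
  have hflag : ∀ j, s (mkQ (x j)) ∈ flagSub M (v j) := by
    intro j
    exact hs (v j) ⟨mkQ (x j), ⟨x j, hxt j, rfl⟩, rfl⟩
  have hm : ∀ j, ∃ m : M, (2 ^ v j : ℕ) • m = 0 ∧ mkQ m = s (mkQ (x j)) := by
    intro j
    obtain ⟨t, ht, hteq⟩ := hflag j
    exact ⟨t, ht, hteq⟩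
  choose m hm1 hm2 using hm
  have hmz : ∀ j, (zmultiplesHom M (m j)) ((n j : ℤ)) = 0 := by
    intro j
    show ((n j : ℤ)) • m j = 0
    rw [natCast_zsmul, hnv j]
    exact hm1 j
  let F : ∀ j, ZMod (n j) →+ M := fun j => ZMod.lift (n j) ⟨zmultiplesHom M (m j), hmz j⟩
  let r : AddMonoid.End M := (DirectSum.toAddMonoid F).comp φ.toAddMonoidHom
  have hF1 : ∀ j, F j 1 = m j := by
    intro j
    show ZMod.lift (n j) ⟨zmultiplesHom M (m j), hmz j⟩ 1 = m j
    rw [show (1 : ZMod (n j)) = ((1 : ℤ) : ZMod (n j)) by simp, ZMod.lift_coe]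
    simp [zmultiplesHom_apply]
  have hcomp : (mkQ.comp (r : M →+ M)) = ((s : (M ⧸ twoSub M) →+ (M ⧸ twoSub M)).comp mkQ) := by
    have h2 : (mkQ.comp (r : M →+ M)).comp φ.symm.toAddMonoidHom =
        ((s : (M ⧸ twoSub M) →+ (M ⧸ twoSub M)).comp mkQ).comp φ.symm.toAddMonoidHom := by
      refine DirectSum.addHom_ext fun j y => ?_
      have hj : ((mkQ.comp (r : M →+ M)).comp φ.symm.toAddMonoidHom).comp
            (DirectSum.of (fun i => ZMod (n i)) j) =
          (((s : (M ⧸ twoSub M) →+ (M ⧸ twoSub M)).comp mkQ).comp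
            φ.symm.toAddMonoidHom).comp (DirectSum.of (fun i => ZMod (n i)) j) := by
        apply zmodHom_ext
        simp only [AddMonoidHom.comp_apply, AddEquiv.coe_toAddMonoidHom]
        have hr : r (φ.symm (DirectSum.of (fun i => ZMod (n i)) j 1)) = m j := by
          show (DirectSum.toAddMonoid F) (φ (φ.symm (DirectSum.of (fun i => ZMod (n i)) j 1))) = m j
          rw [AddEquiv.apply_symm_apply, DirectSum.toAddMonoid_of, hF1]
        show mkQ (r (φ.symm (DirectSum.of (fun i => ZMod (n i)) j 1))) = s (mkQ (φ.symm (DirectSum.of (fun i => ZMod (n i)) j 1)))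
        rw [hr]
        exact hm2 j
      exact DFunLike.congr_fun hj y
    ext z
    have := DFunLike.congr_fun h2 (φ z)
    simpa using this
  refine ⟨r, ?_⟩
  refine DFunLike.ext _ _ fun w => ?_
  induction w using QuotientAddGroup.induction_on with
  | H z =>
    rw [piMap_apply]
    exact DFunLike.congr_fun hcomp z

lemma ker_char {M : Type*} [AddCommGroup M] (r : AddMonoid.End M) :
    piMap M r = 0 ↔ ∀ x : M, r x ∈ twoSub M := by
  constructor
  · intro h x
    have := DFunLike.congr_fun h (QuotientAddGroup.mk x)
    rw [piMap_apply] at this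
    exact (QuotientAddGroup.eq_zero_iff _).mp (by simpa using this)
  · intro h
    refine DFunLike.ext _ _ fun w => ?_
    induction w using QuotientAddGroup.induction_on with
    | H z =>
      rw [piMap_apply]
      simpa using (QuotientAddGroup.eq_zero_iff _).mpr (h z)

/-- for a finite abelian 2-group `M`, the kernel of
`π : End(M) → End(M/2M)` is `{r | r(M) ⊆ 2M}`, it is a nilpotent (two-sided) ideal, and
the image of `π` is exactly the set of endomorphisms of `V = M/2M` preserving the flag
`V_i = (M[2^i] + 2M)/2M`. -/
theorem stmt_13 (M : Type*) [AddCommGroup M] [Fintype M] (k : ℕ)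
    (hM : ∀ x : M, (2 ^ k : ℕ) • x = 0) :
    (∀ r : AddMonoid.End M, piMap M r = 0 ↔ ∀ x : M, r x ∈ twoSub M) ∧
    (∀ r s : AddMonoid.End M, piMap M r = 0 →
      piMap M (s * r) = 0 ∧ piMap M (r * s) = 0) ∧
    (∃ N : ℕ, ∀ g : Fin N → AddMonoid.End M, (∀ i, piMap M (g i) = 0) →
      (List.ofFn g).prod = 0) ∧
    (∀ s : AddMonoid.End (M ⧸ twoSub M),
      (∃ r : AddMonoid.End M, piMap M r = s) ↔
        ∀ i : ℕ, (flagSub M i).map s ≤ flagSub M i) := by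
  refine ⟨fun r => ker_char r, ?_, ?_, ?_⟩
  · intro r s hr
    have hr' := (ker_char r).mp hr
    constructor
    · refine (ker_char _).mpr fun x => ?_
      obtain ⟨y, hy⟩ := hr' x
      have : (s * r) x = s (r x) := rfl
      rw [this, ← hy]
      exact ⟨s y, by simp [map_nsmul]⟩
    · refine (ker_char _).mpr fun x => ?_
      exact hr' (s x)
  · refine ⟨k, fun g hg => ?_⟩
    refine DFunLike.ext _ _ fun x => ?_
    obtain ⟨y, hy⟩ := prod_mem_pow (List.ofFn g)
      (fun t ht x => by
        obtain ⟨i, rfl⟩ := List.mem_ofFn.mp ht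
        exact (ker_char _).mp (hg i) x) x
    rw [hy, List.length_ofFn, hM y]
    simp
  · intro s
    constructor
    · rintro ⟨r, rfl⟩ i a ha
      obtain ⟨b, hb, rfl⟩ := ha
      obtain ⟨t, ht, rfl⟩ := hb
      refine ⟨r t, ?_, rfl⟩
      show (2 ^ i : ℕ) • r t = 0
      rw [← map_nsmul]
      have : (2 ^ i : ℕ) • t = 0 := ht
      rw [this, map_zero]
    · exact surj_aux k hM s
end

section
/- Let D be a finite-dimensional graded-division algebra over ℝ whose support T is an elementary abelian 2-group, with D_e = ℝ, center Z(D) = ℝ, and let φ₀ be the distinguished involution of D (defined by φ₀(x) = μ(t)x for x ∈ D_t, where x² ∈ μ(t)ℝ_{>0}). Consider the left action of the group D_gr^× of nonzero homogeneous elements on itself given by c * d = c·d·φ₀(c). Then: for every t ≠ e in T, the set D_t \ {0} is a single orbit; and D_e \ {0} splits into exactly two orbits, ℝ_{>0} and ℝ_{<0}. -/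
/-- orbits of the action `c * d = c·d·φ₀(c)` of the group of nonzero
homogeneous elements on itself, for a real graded-division algebra with 2-elementary
support, `D_e = ℝ·1`, center `ℝ·1`, and `φ₀` the distinguished involution
(`φ₀(x) = μ(t)x` for `x ∈ D_t`, where `x² ∈ μ(t)ℝ_{>0}`): the orbit of a nonzero
`d ∈ D_t` stays in `D_t \ {0}`; for `t ≠ e` the set `D_t \ {0}` is a single orbit; and
`D_e \ {0}` splits into exactly the two orbits `ℝ_{>0}` and `ℝ_{<0}`. -/
theorem stmt_15 {G : Type*} [CommGroup G] [DecidableEq G]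
    {D : Type*} [Ring D] [Algebra ℝ D] [FiniteDimensional ℝ D]
    (𝒜 : G → Submodule ℝ D)
    (hdecomp : DirectSum.IsInternal 𝒜)
    (hone : (1 : D) ∈ 𝒜 1)
    (hmul : ∀ g h : G, ∀ x ∈ 𝒜 g, ∀ y ∈ 𝒜 h, x * y ∈ 𝒜 (g * h))
    (hdiv : ∀ g : G, ∀ x ∈ 𝒜 g, x ≠ 0 → IsUnit x)
    (hsupp : ∀ g : G, 𝒜 g ≠ ⊥)
    (h2elem : ∀ g : G, g * g = 1)
    (hDe : 𝒜 (1 : G) = Submodule.span ℝ {(1 : D)})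
    (hZ : ∀ x : D, (∀ y : D, x * y = y * x) → ∃ r : ℝ, x = r • (1 : D))
    (μ : G → ℝ)
    (hμval : ∀ t : G, μ t = 1 ∨ μ t = -1)
    (hμ : ∀ t : G, ∀ x ∈ 𝒜 t, x ≠ 0 → ∃ c : ℝ, x * x = c • (1 : D) ∧ 0 < μ t * c)
    (φ₀ : D → D)
    (hφ₀ : ∀ t : G, ∀ x ∈ 𝒜 t, φ₀ x = μ t • x) :
    (∀ t : G, ∀ d ∈ 𝒜 t, d ≠ 0 → ∀ s : G, ∀ c ∈ 𝒜 s, c ≠ 0 →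
      c * d * φ₀ c ∈ 𝒜 t ∧ c * d * φ₀ c ≠ 0) ∧
    (∀ t : G, t ≠ 1 → ∀ d ∈ 𝒜 t, d ≠ 0 → ∀ d' ∈ 𝒜 t, d' ≠ 0 →
      ∃ (s : G) (c : D), c ∈ 𝒜 s ∧ c ≠ 0 ∧ d' = c * d * φ₀ c) ∧
    (∀ r r' : ℝ, r ≠ 0 → r' ≠ 0 →
      ((∃ (s : G) (c : D), c ∈ 𝒜 s ∧ c ≠ 0 ∧
          r' • (1 : D) = c * (r • (1 : D)) * φ₀ c) ↔ 0 < r * r')) := by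
  classical
  -- D is nontrivial
  obtain ⟨x₀, hx₀mem, hx₀⟩ := (Submodule.ne_bot_iff _).mp (hsupp 1)
  have hDnt : Nontrivial D := ⟨x₀, 0, hx₀⟩
  have h1ne : (1 : D) ≠ 0 := one_ne_zero
  have hsmul_ne : ∀ (a : ℝ) (x : D), a ≠ 0 → x ≠ 0 → a • x ≠ 0 := by
    intro a x ha hx h
    apply hx
    have := congrArg (a⁻¹ • ·) h
    simpa [smul_smul, inv_mul_cancel₀ ha] using this
  have hsmul_inj' : ∀ (a b : ℝ) (x : D), x ≠ 0 → a • x = b • x → a = b := by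
    intro a b x hx h
    by_contra hab
    have h' : (a - b) • x = 0 := by rw [sub_smul, h, sub_self]
    exact hsmul_ne _ _ (sub_ne_zero.mpr hab) hx h'
  have hsmul_inj : ∀ (a b : ℝ), a • (1 : D) = b • 1 → a = b := fun a b h =>
    hsmul_inj' a b 1 h1ne h
  have hμne : ∀ t, μ t ≠ 0 := by
    intro t; rcases hμval t with h | h <;> rw [h] <;> norm_num
  have hμ1 : μ 1 = 1 := by
    obtain ⟨c, hc1, hc2⟩ := hμ 1 1 hone h1ne
    have h11 : (1 : ℝ) • (1 : D) = c • 1 := by rw [one_smul, ← hc1, one_mul]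
    have hc : c = 1 := (hsmul_inj _ _ h11).symm
    rcases hμval 1 with h | h
    · exact h
    · rw [h, hc] at hc2; norm_num at hc2
  -- squares of nonzero homogeneous elements are nonzero scalars
  have hsq : ∀ s (c : D), c ∈ 𝒜 s → c ≠ 0 →
      ∃ γ : ℝ, γ ≠ 0 ∧ c * c = γ • 1 ∧ 0 < μ s * γ := by
    intro s c hc hc0
    obtain ⟨γ, h1, h2⟩ := hμ s c hc hc0
    refine ⟨γ, ?_, h1, h2⟩
    intro h; rw [h, mul_zero] at h2; exact lt_irrefl 0 h2
  -- two-sided inverses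
  have hinv : ∀ s (c : D), c ∈ 𝒜 s → c ≠ 0 → ∃ c' : D, c' * c = 1 ∧ c * c' = 1 := by
    intro s c hc hc0
    obtain ⟨γ, hγ0, hγ, -⟩ := hsq s c hc hc0
    refine ⟨γ⁻¹ • c, ?_, ?_⟩
    · rw [smul_mul_assoc, hγ, smul_smul, inv_mul_cancel₀ hγ0, one_smul]
    · rw [mul_smul_comm, hγ, smul_smul, inv_mul_cancel₀ hγ0, one_smul]
  -- products of nonzero homogeneous elements are nonzero
  have hmulne : ∀ s t (c d : D), c ∈ 𝒜 s → c ≠ 0 → d ∈ 𝒜 t → d ≠ 0 → c * d ≠ 0 := by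
    intro s t c d hc hc0 hd hd0 h
    obtain ⟨c', hc', -⟩ := hinv s c hc hc0
    apply hd0
    calc d = (c' * c) * d := by rw [hc', one_mul]
      _ = c' * (c * d) := mul_assoc _ _ _
      _ = 0 := by rw [h, mul_zero]
  -- each component is spanned by any nonzero element
  have hspan : ∀ t (x : D), x ∈ 𝒜 t → x ≠ 0 → ∀ y ∈ 𝒜 t, ∃ a : ℝ, y = a • x := by
    intro t x hx hx0 y hy
    obtain ⟨γ, hγ0, hγ, -⟩ := hsq t x hx hx0
    have hxy : x * y ∈ 𝒜 1 := by
      have := hmul t t x hx y hy; rwa [h2elem t] at this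
    rw [hDe] at hxy
    obtain ⟨a, ha⟩ := Submodule.mem_span_singleton.mp hxy
    refine ⟨γ⁻¹ * a, ?_⟩
    have h1 : (γ⁻¹ • x) * (x * y) = y := by
      rw [smul_mul_assoc, ← mul_assoc, hγ, smul_mul_assoc, one_mul, smul_smul,
        inv_mul_cancel₀ hγ0, one_smul]
    have h2 : (γ⁻¹ • x) * (x * y) = (γ⁻¹ * a) • x := by
      rw [← ha, mul_smul_comm, mul_one, smul_smul, mul_comm]
    rw [← h1, h2]
  -- commutation coefficient
  have hbeta : ∀ s t (c d : D), c ∈ 𝒜 s → c ≠ 0 → d ∈ 𝒜 t → d ≠ 0 →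
      ∃ β : ℝ, β ≠ 0 ∧ c * d = β • (d * c) := by
    intro s t c d hc hc0 hd hd0
    have hdc : d * c ∈ 𝒜 (s * t) := by
      have := hmul t s d hd c hc; rwa [mul_comm t s] at this
    have hdc0 : d * c ≠ 0 := hmulne t s d c hd hd0 hc hc0
    have hcd : c * d ∈ 𝒜 (s * t) := hmul s t c hc d hd
    obtain ⟨β, hβ⟩ := hspan (s * t) (d * c) hdc hdc0 (c * d) hcd
    refine ⟨β, ?_, hβ⟩
    intro h; rw [h, zero_smul] at hβ
    exact hmulne s t c d hc hc0 hd hd0 hβ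
  -- the coefficient is ±1
  have hβ2 : ∀ s t (c d : D) (β : ℝ), c ∈ 𝒜 s → c ≠ 0 → d ∈ 𝒜 t → d ≠ 0 →
      c * d = β • (d * c) → β = 1 ∨ β = -1 := by
    intro s t c d β hc hc0 hd hd0 hβ
    obtain ⟨δ, hδ0, hδ, -⟩ := hsq t d hd hd0
    have h1 : c * (d * d) = δ • c := by rw [hδ, mul_smul_comm, mul_one]
    have h2 : c * (d * d) = (β * β * δ) • c := by
      calc c * (d * d) = (c * d) * d := (mul_assoc _ _ _).symm
        _ = (β • (d * c)) * d := by rw [hβ]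
        _ = β • (d * (c * d)) := by rw [smul_mul_assoc, mul_assoc]
        _ = β • (d * (β • (d * c))) := by rw [hβ]
        _ = β • (β • ((d * d) * c)) := by rw [mul_smul_comm, mul_assoc]
        _ = β • (β • (δ • ((1 : D) * c))) := by rw [hδ, smul_mul_assoc]
        _ = (β * β * δ) • c := by rw [one_mul, smul_smul, smul_smul, mul_assoc]
    have h3 : δ = β * β * δ := hsmul_inj' _ _ c hc0 (h1 ▸ h2 ▸ rfl)
    have h4 : β * β = 1 := by
      have := mul_right_cancel₀ hδ0 (show (β * β) * δ = 1 * δ by rw [← h3, one_mul])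
      exact this
    exact mul_self_eq_one_iff.mp h4
  -- main computation
  have hcompute : ∀ (s : G) (c d : D) (β γ : ℝ), c ∈ 𝒜 s → c * d = β • (d * c) →
      c * c = γ • 1 → c * d * φ₀ c = (μ s * β * γ) • d := by
    intro s c d β γ hc hβ hγ
    rw [hφ₀ s c hc]
    calc c * d * (μ s • c) = μ s • (c * d * c) := by rw [mul_smul_comm]
      _ = μ s • ((β • (d * c)) * c) := by rw [hβ]
      _ = μ s • (β • (d * (c * c))) := by rw [smul_mul_assoc, mul_assoc]
      _ = μ s • (β • (d * (γ • 1))) := by rw [hγ]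
      _ = (μ s * β * γ) • d := by
          rw [mul_smul_comm, mul_one, smul_smul, smul_smul, mul_assoc]
  -- membership
  have hmem : ∀ s t (c d : D), c ∈ 𝒜 s → d ∈ 𝒜 t → c * d * φ₀ c ∈ 𝒜 t := by
    intro s t c d hc hd
    rw [hφ₀ s c hc]
    have h1 : c * d * (μ s • c) ∈ 𝒜 (s * t * s) :=
      hmul _ _ _ (hmul s t c hc d hd) _ (Submodule.smul_mem _ _ hc)
    rwa [mul_right_comm, h2elem, one_mul] at h1
  -- anticommuting element for t ≠ 1
  have hanti : ∀ t, t ≠ 1 → ∀ d ∈ 𝒜 t, d ≠ 0 →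
      ∃ s, ∃ c : D, c ∈ 𝒜 s ∧ c ≠ 0 ∧ c * d = (-1 : ℝ) • (d * c) := by
    intro t ht d hd hd0
    by_contra hcon
    push_neg at hcon
    have hcomm' : ∀ s (c : D), c ∈ 𝒜 s → d * c = c * d := by
      intro s c hc
      by_cases hc0 : c = 0
      · rw [hc0, zero_mul, mul_zero]
      obtain ⟨β, hβ0, hβ⟩ := hbeta s t c d hc hc0 hd hd0
      rcases hβ2 s t c d β hc hc0 hd hd0 hβ with h | h
      · rw [h, one_smul] at hβ; exact hβ.symm
      · exact absurd (by rw [hβ, h]) (hcon s c hc hc0)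
    have hall : ∀ y : D, d * y = y * d := by
      let p : Submodule ℝ D :=
        { carrier := {y | d * y = y * d}
          add_mem' := fun {a b} ha hb => by
            simp only [Set.mem_setOf_eq] at *
            rw [mul_add, add_mul, ha, hb]
          zero_mem' := by simp
          smul_mem' := fun r x hx => by
            simp only [Set.mem_setOf_eq] at *
            rw [mul_smul_comm, smul_mul_assoc, hx] }
      have hle : ∀ g, 𝒜 g ≤ p := fun g c hc => hcomm' g c hc
      have htop : (⊤ : Submodule ℝ D) ≤ p := by
        rw [← hdecomp.submodule_iSup_eq_top]; exact iSup_le hle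
      intro y; exact htop Submodule.mem_top
    obtain ⟨r, hr⟩ := hZ d hall
    have hd1 : d ∈ 𝒜 1 := by
      rw [hr, hDe]
      exact Submodule.smul_mem _ _ (Submodule.mem_span_singleton_self 1)
    have hdisj : Disjoint (𝒜 t) (𝒜 1) :=
      hdecomp.submodule_iSupIndep.pairwiseDisjoint ht
    exact hd0 (Submodule.disjoint_def.mp hdisj d hd hd1)
  refine ⟨?_, ?_, ?_⟩
  · -- part 1
    intro t d hd hd0 s c hc hc0
    refine ⟨hmem s t c d hc hd, ?_⟩
    obtain ⟨β, hβ0, hβ⟩ := hbeta s t c d hc hc0 hd hd0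
    obtain ⟨γ, hγ0, hγ, -⟩ := hsq s c hc hc0
    rw [hcompute s c d β γ hc hβ hγ]
    exact hsmul_ne _ _ (mul_ne_zero (mul_ne_zero (hμne s) hβ0) hγ0) hd0
  · -- part 2
    intro t ht d hd hd0 d' hd' hd'0
    obtain ⟨a, ha⟩ := hspan t d hd hd0 d' hd'
    have ha0 : a ≠ 0 := fun h => hd'0 (by rw [ha, h, zero_smul])
    rcases ha0.lt_or_gt with haneg | hapos
    · -- a < 0 : use an anticommuting element
      obtain ⟨s, c₀, hc₀mem, hc₀0, hβ₀⟩ := hanti t ht d hd hd0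
      obtain ⟨γ, hγ0, hγ, hγpos⟩ := hsq s c₀ hc₀mem hc₀0
      have hlpos : 0 < -a / (μ s * γ) := div_pos (neg_pos.mpr haneg) hγpos
      set l := Real.sqrt (-a / (μ s * γ)) with hldef
      have hll : l * l = -a / (μ s * γ) := Real.mul_self_sqrt hlpos.le
      have hl0 : l ≠ 0 := by
        rw [hldef]; exact (Real.sqrt_ne_zero'.mpr hlpos)
      have hcmem : l • c₀ ∈ 𝒜 s := Submodule.smul_mem _ _ hc₀mem
      have hc0 : l • c₀ ≠ 0 := hsmul_ne _ _ hl0 hc₀0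
      have hβ : (l • c₀) * d = (-1 : ℝ) • (d * (l • c₀)) := by
        rw [smul_mul_assoc, hβ₀, mul_smul_comm, smul_comm]
      have hγ' : (l • c₀) * (l • c₀) = (l * l * γ) • 1 := by
        rw [smul_mul_assoc, mul_smul_comm, hγ, smul_smul, smul_smul]
      have hcoef : μ s * (-1) * (l * l * γ) = a := by
        rw [hll]
        have h0 : μ s * γ ≠ 0 := ne_of_gt hγpos
        have h1 : μ s ≠ 0 := hμne s
        field_simp
      exact ⟨s, l • c₀, hcmem, hc0, by
        rw [hcompute s (l • c₀) d (-1) (l * l * γ) hcmem hβ hγ', hcoef]; exact ha⟩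
    · -- a > 0 : use a positive scalar
      set l := Real.sqrt a with hldef
      have hll : l * l = a := Real.mul_self_sqrt hapos.le
      have hl0 : l ≠ 0 := by rw [hldef]; exact (Real.sqrt_ne_zero'.mpr hapos)
      have hcmem : l • (1 : D) ∈ 𝒜 1 := Submodule.smul_mem _ _ hone
      have hc0 : l • (1 : D) ≠ 0 := hsmul_ne _ _ hl0 h1ne
      have hβ : (l • (1 : D)) * d = (1 : ℝ) • (d * (l • (1 : D))) := by
        rw [one_smul, smul_mul_assoc, one_mul, mul_smul_comm, mul_one]
      have hγ' : (l • (1 : D)) * (l • (1 : D)) = a • 1 := by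
        rw [smul_mul_assoc, one_mul, smul_smul, hll]
      exact ⟨1, l • (1 : D), hcmem, hc0, by
        rw [hcompute 1 (l • (1 : D)) d 1 a hcmem hβ hγ', hμ1, one_mul, one_mul]; exact ha⟩
  · -- part 3
    intro r r' hr hr'
    constructor
    · rintro ⟨s, c, hc, hc0, heq⟩
      obtain ⟨γ, hγ0, hγ, hγpos⟩ := hsq s c hc hc0
      have hβ : c * (r • (1 : D)) = (1 : ℝ) • ((r • (1 : D)) * c) := by
        rw [one_smul, mul_smul_comm, mul_one, smul_mul_assoc, one_mul]
      rw [hcompute s c (r • (1 : D)) 1 γ hc hβ hγ] at heq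
      have hval : r' = μ s * 1 * γ * r := by
        apply hsmul_inj; rw [heq, smul_smul]
      rw [hval]
      nlinarith [mul_pos hγpos (mul_self_pos.mpr hr)]
    · intro hrr'
      have hpos : 0 < r' / r := by
        rcases mul_pos_iff.mp hrr' with ⟨h1, h2⟩ | ⟨h1, h2⟩
        · exact div_pos h2 h1
        · exact div_pos_of_neg_of_neg h2 h1
      set l := Real.sqrt (r' / r) with hldef
      have hll : l * l = r' / r := Real.mul_self_sqrt hpos.le
      have hl0 : l ≠ 0 := by rw [hldef]; exact (Real.sqrt_ne_zero'.mpr hpos)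
      refine ⟨1, l • (1 : D), Submodule.smul_mem _ _ hone, hsmul_ne _ _ hl0 h1ne, ?_⟩
      have hβ : (l • (1 : D)) * (r • (1 : D)) = (1 : ℝ) • ((r • (1 : D)) * (l • (1 : D))) := by
        simp [smul_mul_assoc, mul_smul_comm, smul_smul, mul_comm]
      have hγ' : (l • (1 : D)) * (l • (1 : D)) = (r' / r) • 1 := by
        rw [smul_mul_assoc, one_mul, smul_smul, hll]
      rw [hcompute 1 (l • (1 : D)) (r • (1 : D)) 1 (r' / r)
        (Submodule.smul_mem _ _ hone) hβ hγ', hμ1, one_mul, one_mul, smul_smul,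
        div_mul_cancel₀ _ hr]
end

section
/- Let F be the free abelian group on symbols g̃₁, …, g̃_k with k = q + 2s (q, s ≥ 0 not both zero), T an abelian group, t₁, …, t_q ∈ T, and let G̃ be the quotient of F × T by the relations g̃₁²t₁⁻¹ = … = g̃_q²t_q⁻¹ = g̃_{q+1}g̃_{q+2} = … = g̃_{q+2s−1}g̃_{q+2s}. Then the quotient map π : F × T → G̃ restricts to an injection on T, so T embeds as a subgroup of G̃. -/
/-- The defining relators: `r_i = 2e_i − t_i` for `i < q` and
`r_{q+j} = e_{q+2j} + e_{q+2j+1}` for `j < s` (additive notation, free abelian group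
`F = Fin (q+2s) →₀ ℤ`). -/
noncomputable def relWord {T : Type*} [AddCommGroup T] (q s : ℕ) (t : Fin q → T) :
    Fin (q + s) → (Fin (q + 2 * s) →₀ ℤ) × T := fun i =>
  if h : (i : ℕ) < q then
    ((2 : ℤ) • Finsupp.single (⟨(i : ℕ), by omega⟩ : Fin (q + 2 * s)) (1 : ℤ), - t ⟨(i : ℕ), h⟩)
  else
    (Finsupp.single (⟨q + 2 * ((i : ℕ) - q), by have := i.isLt; omega⟩ : Fin (q + 2 * s)) (1 : ℤ)
      + Finsupp.single (⟨q + 2 * ((i : ℕ) - q) + 1, by have := i.isLt; omega⟩ : Fin (q + 2 * s)) (1 : ℤ),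
      0)

/-- The subgroup of `F × T` generated by the differences of the relators; the group
`G̃(T,q,s,t)` is the quotient of `F × T` by this subgroup. -/
noncomputable def relSubgroup {T : Type*} [AddCommGroup T] (q s : ℕ) (t : Fin q → T) :
    AddSubgroup ((Fin (q + 2 * s) →₀ ℤ) × T) :=
  AddSubgroup.closure {x | ∃ i j : Fin (q + s), x = relWord q s t i - relWord q s t j}

lemma sum_pairs {M : Type*} [AddCommGroup M] (n : ℕ) (c : Fin n × Fin n → ℤ) (v : Fin n → M) :
    ∑ p : Fin n × Fin n, c p • (v p.1 - v p.2)
      = ∑ i, (∑ j, (c (i, j) - c (j, i))) • v i := by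
  rw [Fintype.sum_prod_type]
  simp only [smul_sub, sub_smul, Finset.sum_smul, Finset.sum_sub_distrib]
  congr 1
  exact Finset.sum_comm


/-- the quotient map `π : F × T → G̃` restricts to an injection on `T`,
so `T` embeds as a subgroup of `G̃ = G̃(T, q, s, t)`. -/
theorem stmt_16 {T : Type*} [AddCommGroup T] (q s : ℕ) (hqs : 0 < q + s)
    (t : Fin q → T) :
    Function.Injective (fun a : T =>
      (QuotientAddGroup.mk ((0, a) : (Fin (q + 2 * s) →₀ ℤ) × T) :
        ((Fin (q + 2 * s) →₀ ℤ) × T) ⧸ relSubgroup q s t)) := by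
  have key : ∀ a : T, ((0 : Fin (q + 2 * s) →₀ ℤ), a) ∈ relSubgroup q s t → a = 0 := by
    intro a ha
    rw [relSubgroup, ← Submodule.span_int_eq_addSubgroupClosure] at ha
    have hset : {x : (Fin (q + 2 * s) →₀ ℤ) × T |
        ∃ i j : Fin (q + s), x = relWord q s t i - relWord q s t j}
        = Set.range (fun p : Fin (q + s) × Fin (q + s) =>
            relWord q s t p.1 - relWord q s t p.2) := by
      ext x
      constructor
      · rintro ⟨i, j, rfl⟩; exact ⟨(i, j), rfl⟩
      · rintro ⟨⟨i, j⟩, rfl⟩; exact ⟨i, j, rfl⟩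
    rw [hset] at ha
    obtain ⟨c, hc⟩ := (Submodule.mem_span_range_iff_exists_fun ℤ).1 ha
    rw [sum_pairs] at hc
    set m : Fin (q + s) → ℤ := fun i => ∑ j, c (i, j) - ∑ j, c (j, i) with hm
    have h1 : ∑ i, m i • (relWord q s t i).1 = 0 := by
      have := congrArg Prod.fst hc
      simpa [Prod.fst_sum] using this
    have h2 : ∑ i, m i • (relWord q s t i).2 = a := by
      have := congrArg Prod.snd hc
      simpa [Prod.snd_sum] using this
    have hmz : ∀ i, m i = 0 := by
      intro i
      by_cases hi : (i : ℕ) < q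
      · -- evaluate at coordinate i
        have hν := congrFun (congrArg (⇑) h1) (⟨(i : ℕ), by omega⟩ : Fin (q + 2 * s))
        rw [Finsupp.finset_sum_apply] at hν
        simp only [Finsupp.smul_apply] at hν
        rw [Finset.sum_eq_single i] at hν
        · simp only [relWord, hi, dif_pos, Finsupp.smul_apply, Finsupp.single_apply,
            if_pos rfl, Finsupp.coe_zero, Pi.zero_apply, smul_eq_mul] at hν
          simp only [if_true] at hν
          omega
        · intro b _ hb
          have hbv : (b : ℕ) ≠ (i : ℕ) := fun h => hb (Fin.ext h)
          by_cases hbq : (b : ℕ) < q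
          · simp [relWord, hbq, Finsupp.single_apply, Fin.ext_iff, hbv]
          · have hb1 : q + 2 * ((b : ℕ) - q) ≠ (i : ℕ) := by omega
            have hb2 : q + 2 * ((b : ℕ) - q) + 1 ≠ (i : ℕ) := by omega
            simp [relWord, hbq, Finsupp.single_apply, Fin.ext_iff, hb1, hb2]
        · intro h; exact absurd (Finset.mem_univ i) h
      · have hlt := i.isLt
        have hν := congrFun (congrArg (⇑) h1)
          (⟨q + 2 * ((i : ℕ) - q), by omega⟩ : Fin (q + 2 * s))
        rw [Finsupp.finset_sum_apply] at hν
        simp only [Finsupp.smul_apply] at hν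
        rw [Finset.sum_eq_single i] at hν
        · have hne : q + 2 * ((i : ℕ) - q) + 1 ≠ q + 2 * ((i : ℕ) - q) := by omega
          simp only [relWord, hi, dif_neg, Finsupp.add_apply, Finsupp.single_apply,
            Fin.ext_iff, if_pos rfl, hne, if_neg, Finsupp.coe_zero, Pi.zero_apply,
            smul_eq_mul] at hν
          simp only [dite_false, Finsupp.add_apply, Finsupp.single_apply, Fin.ext_iff] at hν
          have hx : m i * 1 = 0 := by
            simpa [hne] using hν
          omega
        · intro b _ hb
          have hbv : (b : ℕ) ≠ (i : ℕ) := fun h => hb (Fin.ext h)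
          by_cases hbq : (b : ℕ) < q
          · have : (b : ℕ) ≠ q + 2 * ((i : ℕ) - q) := by omega
            simp [relWord, hbq, Finsupp.single_apply, Fin.ext_iff, this]
          · have hb1 : q + 2 * ((b : ℕ) - q) ≠ q + 2 * ((i : ℕ) - q) := by omega
            have hb2 : q + 2 * ((b : ℕ) - q) + 1 ≠ q + 2 * ((i : ℕ) - q) := by omega
            simp [relWord, hbq, Finsupp.single_apply, Fin.ext_iff, hb1, hb2]
            intro h; omega
        · intro h; exact absurd (Finset.mem_univ i) h
    rw [← h2]
    simp [hmz]
  intro a b hab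
  simp only at hab
  rw [QuotientAddGroup.eq] at hab
  have : ((0 : Fin (q + 2 * s) →₀ ℤ), b - a) ∈ relSubgroup q s t := by
    simpa [Prod.ext_iff, sub_eq_neg_add] using hab
  have := key _ this
  have : b = a := by
    have := sub_eq_zero.mp this
    exact this
  exact this.symm
end

section
/- With G̃ = (F × T)/⟨relations⟩ as above (F free abelian on g̃₁,…,g̃_k, k = q+2s, relations g̃₁²t₁⁻¹ = … = g̃_q²t_q⁻¹ = g̃_{q+1}g̃_{q+2} = … = g̃_{q+2s−1}g̃_{q+2s}), the images of g̃₁, …, g̃_k in G̃ are pairwise distinct modulo (the image of) T; moreover the images of the elements g̃_i g̃_j⁻¹ (i ≠ j) are pairwise distinct modulo T, except that g̃_i g̃_j⁻¹ ≡ g̃_{σ(j)} g̃_{σ(i)}⁻¹ (mod T), where σ is the permutation of {1,…,k} fixing 1,…,q and interchanging q+2r−1 with q+2r for 1 ≤ r ≤ s. -/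
/-- The permutation `σ` of `{1,…,k}` fixing `1,…,q` and interchanging `q+2r−1` with
`q+2r` (0-indexed: fixing indices `< q`, and swapping `q+2j ↔ q+2j+1`). -/
def sigPerm (q s : ℕ) : Fin (q + 2 * s) → Fin (q + 2 * s) := fun i =>
  if h : (i : ℕ) < q then i
  else if h2 : ((i : ℕ) - q) % 2 = 0 then
    ⟨(i : ℕ) + 1, by have := i.isLt; omega⟩
  else
    ⟨(i : ℕ) - 1, by have := i.isLt; omega⟩

/-! ### Auxiliary definitions and lemmas -/

/-- A `ℕ`-valued version of `sigPerm`. -/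
def sigNat (q x : ℕ) : ℕ := if x < q then x else if (x - q) % 2 = 0 then x + 1 else x - 1

lemma sigPerm_val (q s : ℕ) (i : Fin (q + 2 * s)) : (sigPerm q s i : ℕ) = sigNat q (i : ℕ) := by
  unfold sigPerm sigNat
  split_ifs <;> rfl

lemma sigNat_pair (q s x : ℕ) (hq : q ≤ x) (hx : x < q + 2 * s) :
    ∃ r, r < s ∧ ((x = q + 2*r ∧ sigNat q x = q + 2*r + 1) ∨
      (x = q + 2*r + 1 ∧ sigNat q x = q + 2*r)) := by
  refine ⟨(x - q)/2, by omega, ?_⟩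
  unfold sigNat
  split_ifs <;> omega

/-- The index of the relator associated to a generator index. -/
def rhoIdx (q s : ℕ) (i : Fin (q + 2 * s)) : Fin (q + s) :=
  if h : (i : ℕ) < q then ⟨(i : ℕ), by omega⟩
  else ⟨q + ((i : ℕ) - q) / 2, by have := i.isLt; omega⟩

/-- The subgroup of elements whose `F`-component has even coordinates below `q`
and equal coordinates at `q+2r` and `q+2r+1`. -/
noncomputable def goodSub (q s : ℕ) (T : Type*) [AddCommGroup T] :
    AddSubgroup ((Fin (q + 2 * s) →₀ ℤ) × T) where
  carrier := {p | (∀ m : Fin (q + 2 * s), (m : ℕ) < q → (2:ℤ) ∣ p.1 m) ∧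
    (∀ r : ℕ, ∀ _ : r < s, p.1 ⟨q + 2*r, by omega⟩ = p.1 ⟨q + 2*r + 1, by omega⟩)}
  zero_mem' := by simp
  add_mem' := by
    rintro a b ⟨ha1, ha2⟩ ⟨hb1, hb2⟩
    refine ⟨fun m hm => ?_, fun r hr => ?_⟩
    · simpa using dvd_add (ha1 m hm) (hb1 m hm)
    · simpa using by rw [ha2 r hr, hb2 r hr]
  neg_mem' := by
    rintro a ⟨ha1, ha2⟩
    refine ⟨fun m hm => ?_, fun r hr => ?_⟩
    · simpa using (ha1 m hm)
    · simpa using by rw [ha2 r hr]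

lemma relWord_mem {T : Type*} [AddCommGroup T] (q s : ℕ) (t : Fin q → T) (i : Fin (q + s)) :
    relWord q s t i ∈ goodSub q s T := by
  unfold relWord
  split_ifs with h
  · refine ⟨fun m hm => ?_, fun r hr => ?_⟩
    · simp only [Finsupp.smul_apply, smul_eq_mul]
      exact dvd_mul_right 2 _
    · simp only [Finsupp.smul_apply, Finsupp.single_apply, Fin.mk.injEq, smul_eq_mul]
      split_ifs <;> omega
  · refine ⟨fun m hm => ?_, fun r hr => ?_⟩
    · simp only [Finsupp.add_apply, Finsupp.single_apply, Fin.ext_iff]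
      split_ifs <;> omega
    · simp only [Finsupp.add_apply, Finsupp.single_apply, Fin.mk.injEq]
      split_ifs <;> omega

lemma rel_le_good {T : Type*} [AddCommGroup T] (q s : ℕ) (t : Fin q → T) :
    relSubgroup q s t ≤ goodSub q s T := by
  rw [relSubgroup]
  refine (AddSubgroup.closure_le _).mpr ?_
  rintro x ⟨i, j, rfl⟩
  exact sub_mem (relWord_mem q s t i) (relWord_mem q s t j)

lemma key1 (q s I J : ℕ) (hI : I < q + 2*s) (hIJ : I ≠ J)
    (h1 : ∀ m, m < q → (2:ℤ) ∣ ((if I = m then (1:ℤ) else 0) - (if J = m then 1 else 0)))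
    (h2 : ∀ r, r < s →
      ((if I = q+2*r then (1:ℤ) else 0) - (if J = q+2*r then 1 else 0)) =
      ((if I = q+2*r+1 then (1:ℤ) else 0) - (if J = q+2*r+1 then 1 else 0))) : False := by
  by_cases hIq : I < q
  · have h := h1 I hIq
    split_ifs at h <;> omega
  · obtain ⟨r, hr, hc⟩ := sigNat_pair q s I (by omega) hI
    have h := h2 r hr
    rcases hc with ⟨h3, h4⟩ | ⟨h3, h4⟩ <;> (split_ifs at h <;> omega)

set_option maxHeartbeats 1600000 in
lemma key2 (q s I J I' J' : ℕ) (hI : I < q + 2*s) (hJ : J < q + 2*s)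
    (hIJ : I ≠ J) (hIJ' : I' ≠ J')
    (h1 : ∀ m, m < q → (2:ℤ) ∣ ((if I = m then (1:ℤ) else 0) - (if J = m then 1 else 0)
      - ((if I' = m then (1:ℤ) else 0) - (if J' = m then 1 else 0))))
    (h2 : ∀ r, r < s →
      ((if I = q+2*r then (1:ℤ) else 0) - (if J = q+2*r then 1 else 0)
        - ((if I' = q+2*r then (1:ℤ) else 0) - (if J' = q+2*r then 1 else 0))) =
      ((if I = q+2*r+1 then (1:ℤ) else 0) - (if J = q+2*r+1 then 1 else 0)
        - ((if I' = q+2*r+1 then (1:ℤ) else 0) - (if J' = q+2*r+1 then 1 else 0)))) :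
    (I = I' ∧ J = J') ∨ (I' = sigNat q J ∧ J' = sigNat q I) := by
  by_cases hII' : I = I'
  · refine Or.inl ⟨hII', ?_⟩
    by_cases hJq : J < q
    · have h := h1 J hJq
      split_ifs at h <;> omega
    · obtain ⟨r, hr, hc⟩ := sigNat_pair q s J (by omega) hJ
      have h := h2 r hr
      rcases hc with ⟨h3, h4⟩ | ⟨h3, h4⟩ <;> (split_ifs at h <;> omega)
  · have hJ'σ : J' = sigNat q I := by
      by_cases hIq : I < q
      · have hs : sigNat q I = I := by simp [sigNat, hIq]
        rw [hs]
        have h := h1 I hIq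
        split_ifs at h <;> omega
      · obtain ⟨r, hr, hc⟩ := sigNat_pair q s I (by omega) hI
        have h := h2 r hr
        rcases hc with ⟨h3, h4⟩ | ⟨h3, h4⟩ <;> (rw [h4]; split_ifs at h <;> omega)
    have hd : (I < q ∧ J' = I) ∨ (¬ I < q ∧ (((I - q) % 2 = 0 ∧ J' = I + 1) ∨
        (¬ (I - q) % 2 = 0 ∧ J' = I - 1))) := by
      unfold sigNat at hJ'σ
      split_ifs at hJ'σ <;> tauto
    have hI'σ : I' = sigNat q J := by
      by_cases hJq : J < q
      · have hs : sigNat q J = J := by simp [sigNat, hJq]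
        rw [hs]
        have h := h1 J hJq
        split_ifs at h <;> omega
      · obtain ⟨r, hr, hc⟩ := sigNat_pair q s J (by omega) hJ
        have h := h2 r hr
        rcases hc with ⟨h3, h4⟩ | ⟨h3, h4⟩ <;> (rw [h4]; split_ifs at h <;> omega)
    exact Or.inr ⟨hI'σ, hJ'σ⟩

lemma relF {T : Type*} [AddCommGroup T] (q s : ℕ) (t : Fin q → T) (i : Fin (q + 2 * s)) :
    Finsupp.single i (1:ℤ) + Finsupp.single (sigPerm q s i) (1:ℤ)
      = (relWord q s t (rhoIdx q s i)).1 := by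
  rcases Nat.lt_or_ge (i : ℕ) q with h | h
  · rw [rhoIdx, dif_pos h, relWord, dif_pos (show ((⟨(i:ℕ), by omega⟩ : Fin (q+s)) : ℕ) < q from h)]
    ext m
    simp only [Finsupp.add_apply, Finsupp.smul_apply, Finsupp.single_apply, sigPerm,
      dif_pos h, Fin.ext_iff, smul_eq_mul]
    split_ifs <;> omega
  · rw [rhoIdx, dif_neg (by omega), relWord,
      dif_neg (show ¬ ((⟨q + ((i:ℕ) - q)/2, by have := i.isLt; omega⟩ : Fin (q+s)) : ℕ) < q by simp)]
    ext m
    by_cases hp : ((i:ℕ) - q) % 2 = 0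
    · simp only [Finsupp.add_apply, Finsupp.single_apply, sigPerm,
        dif_neg (by omega : ¬ (i:ℕ) < q), dif_pos hp, Fin.ext_iff, Fin.val_mk,
        Nat.add_sub_cancel_left]
      split_ifs <;> omega
    · simp only [Finsupp.add_apply, Finsupp.single_apply, sigPerm,
        dif_neg (by omega : ¬ (i:ℕ) < q), dif_neg hp, Fin.ext_iff, Fin.val_mk,
        Nat.add_sub_cancel_left]
      split_ifs <;> omega

/-- in `G̃ = G̃(T,q,s,t)`, the images of `g̃₁,…,g̃_k` are pairwise
distinct modulo `T`, and the images of the `g̃_i g̃_j⁻¹` (`i ≠ j`) are pairwise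
distinct modulo `T` except for the coincidences `g̃_i g̃_j⁻¹ ≡ g̃_{σ(j)} g̃_{σ(i)}⁻¹`. -/
theorem stmt_17 {T : Type*} [AddCommGroup T] (q s : ℕ) (hqs : 0 < q + s)
    (t : Fin q → T) :
    (∀ i j : Fin (q + 2 * s), i ≠ j → ∀ a : T,
      ((Finsupp.single i (1 : ℤ) - Finsupp.single j (1 : ℤ), a) ∉ relSubgroup q s t)) ∧
    (∀ i j i' j' : Fin (q + 2 * s), i ≠ j → i' ≠ j' →
      ((∃ a : T,
          (Finsupp.single i (1 : ℤ) - Finsupp.single j (1 : ℤ)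
            - (Finsupp.single i' (1 : ℤ) - Finsupp.single j' (1 : ℤ)), a)
            ∈ relSubgroup q s t) ↔
        ((i = i' ∧ j = j') ∨ (i' = sigPerm q s j ∧ j' = sigPerm q s i)))) := by
  constructor
  · intro i j hij a hmem
    obtain ⟨hg1, hg2⟩ := rel_le_good q s t hmem
    refine key1 q s (i:ℕ) (j:ℕ) i.isLt (fun h => hij (Fin.ext h))
      (fun m hm => ?_) (fun r hr => ?_)
    · have := hg1 ⟨m, by omega⟩ hm
      simpa [Finsupp.single_apply, Fin.ext_iff] using this
    · have := hg2 r hr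
      simpa [Finsupp.single_apply, Fin.ext_iff] using this
  · intro i j i' j' hij hij'
    constructor
    · rintro ⟨a, hmem⟩
      obtain ⟨hg1, hg2⟩ := rel_le_good q s t hmem
      have hk := key2 q s (i:ℕ) (j:ℕ) (i':ℕ) (j':ℕ) i.isLt j.isLt
        (fun h => hij (Fin.ext h)) (fun h => hij' (Fin.ext h))
        (fun m hm => by
          have := hg1 ⟨m, by omega⟩ hm
          simpa [Finsupp.single_apply, Fin.ext_iff] using this)
        (fun r hr => by
          have := hg2 r hr
          simpa [Finsupp.single_apply, Fin.ext_iff] using this)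
      rcases hk with ⟨h1', h2'⟩ | ⟨h1', h2'⟩
      · exact Or.inl ⟨Fin.ext h1', Fin.ext h2'⟩
      · refine Or.inr ⟨Fin.ext ?_, Fin.ext ?_⟩ <;> rw [sigPerm_val] <;> assumption
    · rintro (⟨rfl, rfl⟩ | ⟨h1, h2⟩)
      · exact ⟨0, by rw [sub_self]; exact zero_mem _⟩
      · subst h1
        subst h2
        refine ⟨(relWord q s t (rhoIdx q s i)).2 - (relWord q s t (rhoIdx q s j)).2, ?_⟩
        apply AddSubgroup.subset_closure
        refine ⟨rhoIdx q s i, rhoIdx q s j, ?_⟩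
        have hi := relF q s t i
        have hj := relF q s t j
        rw [Prod.ext_iff]
        constructor
        · rw [Prod.fst_sub]
          show _ = (relWord q s t (rhoIdx q s i)).1 - (relWord q s t (rhoIdx q s j)).1
          rw [← hi, ← hj]
          abel
        · rw [Prod.snd_sub]
end

section
/- Let D be a graded-division algebra over ℂ with finite abelian support T, D_e = ℂ, and suppose the commutation bicharacter β : T × T → ℂˣ is nondegenerate. Choose a symplectic basis {a₁,b₁,…,a_m,b_m} of (T,β) and elements X_j ∈ D_{a_j}, Y_j ∈ D_{b_j} with X_j^{n_j} = Y_j^{n_j} = 1 (n_j the common order of a_j, b_j). Then there exists a ℂ-antilinear algebra automorphism ψ₀ of D with ψ₀(X_j) = X_j⁻¹ and ψ₀(Y_j) = Y_j for all j, and ψ₀ permutes the homogeneous components of D, inducing on T the automorphism τ defined by a_j ↦ a_j⁻¹, b_j ↦ b_j. -/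
set_option linter.unusedSectionVars false
namespace Stmt18Aux

theorem pow_mod_eq {M : Type*} [Monoid M] {t : M} {nn : ℕ} (h : t ^ nn = 1) (s : ℕ) :
    t ^ s = t ^ (s % nn) := by
  conv_lhs => rw [← Nat.div_add_mod s nn]
  rw [pow_add, pow_mul, h, one_pow, one_mul]

theorem pow_val_add {M : Type*} [Monoid M] {t : M} {nn : ℕ} [NeZero nn] (h : t ^ nn = 1)
    (x y : ZMod nn) : t ^ (x + y).val = t ^ x.val * t ^ y.val := by
  rw [ZMod.val_add, ← pow_mod_eq h, pow_add]

theorem list_prod_single {M : Type*} [Monoid M] {mm : ℕ} (f : Fin mm → M) (j : Fin mm) :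
    ∀ (l : List (Fin mm)), l.Nodup → j ∈ l → (∀ i, i ≠ j → f i = 1) →
      (l.map f).prod = f j := by
  intro l
  induction l with
  | nil => simp
  | cons x t ih =>
    intro hnd hj h1
    obtain ⟨hxt, hnd'⟩ := List.nodup_cons.mp hnd
    simp only [List.map_cons, List.prod_cons]
    rcases List.mem_cons.mp hj with rfl | hjt
    · have ht : (t.map f).prod = 1 := List.prod_eq_one (by
        intro y hy
        obtain ⟨i, hi, rfl⟩ := List.mem_map.mp hy
        exact h1 i (fun h => hxt (h ▸ hi)))
      rw [ht, mul_one]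
    · have hxj : x ≠ j := fun h => hxt (h ▸ hjt)
      rw [h1 x hxj, one_mul, ih hnd' hjt h1]

theorem list_prod_one {M : Type*} [Monoid M] {mm : ℕ} (f : Fin mm → M)
    (l : List (Fin mm)) (h1 : ∀ i, f i = 1) : (l.map f).prod = 1 :=
  List.prod_eq_one (by
    intro y hy
    obtain ⟨i, _, rfl⟩ := List.mem_map.mp hy
    exact h1 i)


variable {D : Type*} [Ring D] [Algebra ℂ D]
variable {m : ℕ} {n : Fin m → ℕ}

abbrev Idx (n : Fin m → ℕ) := (j : Fin m) → ZMod (n j) × ZMod (n j)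

variable (X Y : Fin m → D) (ζ : Fin m → ℂ)

def zmon (u : Idx n) (j : Fin m) : D := X j ^ (u j).1.val * Y j ^ (u j).2.val

def wmon (u : Idx n) : D := (List.ofFn fun j => zmon X Y u j).prod

def mexp (u v : Idx n) : ℂ := ∏ j, ζ j ^ ((u j).2.val * (v j).1.val)

theorem Ypow_Xpow (hsw : ∀ j, Y j * X j = ζ j • (X j * Y j)) (j : Fin m) (k i : ℕ) :
    Y j ^ k * X j ^ i = ζ j ^ (k * i) • (X j ^ i * Y j ^ k) := by
  have h1 : ∀ i : ℕ, Y j * X j ^ i = ζ j ^ i • (X j ^ i * Y j) := by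
    intro i
    induction i with
    | zero => simp
    | succ i ih =>
      calc Y j * X j ^ (i+1) = (Y j * X j ^ i) * X j := by rw [pow_succ, mul_assoc]
        _ = ζ j ^ i • (X j ^ i * (Y j * X j)) := by rw [ih, smul_mul_assoc, mul_assoc]
        _ = (ζ j ^ i * ζ j) • (X j ^ i * (X j * Y j)) := by
              rw [hsw j, mul_smul_comm, smul_smul]
        _ = ζ j ^ (i+1) • (X j ^ (i+1) * Y j) := by rw [pow_succ, pow_succ, mul_assoc]
  induction k with
  | zero => simp
  | succ k ih =>
    calc Y j ^ (k+1) * X j ^ i = Y j ^ k * (Y j * X j ^ i) := by rw [pow_succ, mul_assoc]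
      _ = ζ j ^ i • (Y j ^ k * (X j ^ i * Y j)) := by rw [h1 i, mul_smul_comm]
      _ = ζ j ^ i • ((Y j ^ k * X j ^ i) * Y j) := by rw [mul_assoc]
      _ = (ζ j ^ i * ζ j ^ (k*i)) • (X j ^ i * Y j ^ k * Y j) := by
            rw [ih, smul_mul_assoc, smul_smul]
      _ = ζ j ^ ((k+1) * i) • (X j ^ i * Y j ^ (k+1)) := by
            rw [← pow_add, mul_assoc, ← pow_succ]
            ring_nf

theorem zmon_mul (hXn : ∀ j, X j ^ n j = 1) (hYn : ∀ j, Y j ^ n j = 1)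
    (hsw : ∀ j, Y j * X j = ζ j • (X j * Y j)) [∀ j, NeZero (n j)] (u v : Idx n) (j : Fin m) :
    zmon X Y u j * zmon X Y v j
      = (ζ j ^ ((u j).2.val * (v j).1.val)) • zmon X Y (u + v) j := by
  have hz : zmon X Y (u+v) j
      = X j ^ ((u j).1 + (v j).1).val * Y j ^ ((u j).2 + (v j).2).val := rfl
  rw [hz, pow_val_add (hXn j), pow_val_add (hYn j)]
  show X j ^ (u j).1.val * Y j ^ (u j).2.val * (X j ^ (v j).1.val * Y j ^ (v j).2.val) = _
  calc X j ^ (u j).1.val * Y j ^ (u j).2.val * (X j ^ (v j).1.val * Y j ^ (v j).2.val)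
      = X j ^ (u j).1.val * (Y j ^ (u j).2.val * X j ^ (v j).1.val) * Y j ^ (v j).2.val := by
        simp only [mul_assoc]
    _ = ζ j ^ ((u j).2.val * (v j).1.val) •
          (X j ^ (u j).1.val * X j ^ (v j).1.val * (Y j ^ (u j).2.val * Y j ^ (v j).2.val)) := by
        rw [Ypow_Xpow X Y ζ hsw, mul_smul_comm, smul_mul_assoc]
        congr 1
        rw [mul_assoc, mul_assoc, mul_assoc]

theorem zmon_comm (cXX : ∀ i j, Commute (X i) (X j)) (cYY : ∀ i j, Commute (Y i) (Y j))
    (cXY : ∀ i j, i ≠ j → Commute (X i) (Y j)) {i j : Fin m} (hij : i ≠ j)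
    (u v : Idx n) : Commute (zmon X Y u i) (zmon X Y v j) := by
  have h1 : Commute (X i ^ (u i).1.val) (X j ^ (v j).1.val) := (cXX i j).pow_pow _ _
  have h2 : Commute (X i ^ (u i).1.val) (Y j ^ (v j).2.val) := (cXY i j hij).pow_pow _ _
  have h3 : Commute (Y i ^ (u i).2.val) (X j ^ (v j).1.val) :=
    ((cXY j i hij.symm).symm).pow_pow _ _
  have h4 : Commute (Y i ^ (u i).2.val) (Y j ^ (v j).2.val) := (cYY i j).pow_pow _ _
  exact (h1.mul_right h2).mul_left (h3.mul_right h4)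


section Master

variable (hXn : ∀ j, X j ^ n j = 1) (hYn : ∀ j, Y j ^ n j = 1)
variable (hsw : ∀ j, Y j * X j = ζ j • (X j * Y j))
variable (cXX : ∀ i j, Commute (X i) (X j)) (cYY : ∀ i j, Commute (Y i) (Y j))
variable (cXY : ∀ i j, i ≠ j → Commute (X i) (Y j))
variable [∀ j, NeZero (n j)]

include hXn hYn hsw cXX cYY cXY in
theorem listw_mul :
    ∀ (l : List (Fin m)), l.Nodup → ∀ u v : Idx n,
      (l.map (zmon X Y u)).prod * (l.map (zmon X Y v)).prod
        = ((l.map fun j => ζ j ^ ((u j).2.val * (v j).1.val)).prod)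
            • (l.map (zmon X Y (u + v))).prod := by
  intro l
  induction l with
  | nil => simp
  | cons j t ih =>
    intro hnd u v
    obtain ⟨hjt, hnd'⟩ := List.nodup_cons.mp hnd
    simp only [List.map_cons, List.prod_cons]
    have hc : Commute (zmon X Y v j) ((t.map (zmon X Y u)).prod) := by
      apply Commute.list_prod_right
      intro x hx
      obtain ⟨i, hi, rfl⟩ := List.mem_map.mp hx
      exact ((zmon_comm X Y cXX cYY cXY (show i ≠ j from fun h => hjt (h ▸ hi)) u v).symm)
    calc zmon X Y u j * (t.map (zmon X Y u)).prod * (zmon X Y v j * (t.map (zmon X Y v)).prod)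
        = zmon X Y u j * (((t.map (zmon X Y u)).prod * zmon X Y v j)
            * (t.map (zmon X Y v)).prod) := by simp only [mul_assoc]
      _ = zmon X Y u j * ((zmon X Y v j * (t.map (zmon X Y u)).prod)
            * (t.map (zmon X Y v)).prod) := by rw [hc.eq]
      _ = (zmon X Y u j * zmon X Y v j)
            * ((t.map (zmon X Y u)).prod * (t.map (zmon X Y v)).prod) := by
          simp only [mul_assoc]
      _ = (ζ j ^ ((u j).2.val * (v j).1.val)
            * (t.map fun j => ζ j ^ ((u j).2.val * (v j).1.val)).prod)
            • (zmon X Y (u+v) j * (t.map (zmon X Y (u+v))).prod) := by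
          rw [zmon_mul X Y ζ hXn hYn hsw, ih hnd', smul_mul_assoc, mul_smul_comm, smul_smul]

include hXn hYn hsw cXX cYY cXY in
theorem wmon_mul (u v : Idx n) :
    wmon X Y u * wmon X Y v = mexp ζ u v • wmon X Y (u + v) := by
  have h := listw_mul X Y ζ hXn hYn hsw cXX cYY cXY (List.finRange m)
    (List.nodup_finRange m) u v
  simp only [wmon, List.ofFn_eq_map]
  rw [h]
  simp only [mexp, Fin.prod_univ_def]

end Master

theorem wmon_zero : wmon X Y (0 : Idx n) = 1 := by
  apply List.prod_eq_one
  intro x hx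
  simp only [List.mem_ofFn] at hx
  obtain ⟨i, rfl⟩ := hx
  simp [zmon, ZMod.val_zero]


theorem wmon_eq_single [DecidableEq (Fin m)] (u : Idx n) (j : Fin m)
    (hu : ∀ i, i ≠ j → u i = 0) : wmon X Y u = zmon X Y u j := by
  rw [wmon, List.ofFn_eq_map]
  apply list_prod_single _ _ _ (List.nodup_finRange m) (List.mem_finRange j)
  intro i hij
  simp [zmon, hu i hij, ZMod.val_zero]

section Mem

variable {G : Type*} [CommGroup G] (𝒜 : G → Submodule ℂ D)
variable (hone : (1 : D) ∈ 𝒜 1)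
variable (hmul : ∀ g h : G, ∀ x ∈ 𝒜 g, ∀ y ∈ 𝒜 h, x * y ∈ 𝒜 (g * h))
variable (a b : Fin m → G)
variable (hX : ∀ j, X j ∈ 𝒜 (a j)) (hY : ∀ j, Y j ∈ 𝒜 (b j))

include hone hmul in
theorem pow_mem_graded {g : G} {x : D} (hx : x ∈ 𝒜 g) : ∀ p : ℕ, x ^ p ∈ 𝒜 (g ^ p) := by
  intro p
  induction p with
  | zero => simpa using hone
  | succ p ih =>
    rw [pow_succ, pow_succ]
    exact hmul _ _ _ ih _ hx

def emap (u : Idx n) : G := ∏ j, (a j ^ (u j).1.val * b j ^ (u j).2.val)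

include hone hmul hX hY in
theorem zmon_mem (u : Idx n) (j : Fin m) :
    zmon X Y u j ∈ 𝒜 (a j ^ (u j).1.val * b j ^ (u j).2.val) :=
  hmul _ _ _ (pow_mem_graded 𝒜 hone hmul (hX j) _) _ (pow_mem_graded 𝒜 hone hmul (hY j) _)

include hone hmul hX hY in
theorem wmon_mem (u : Idx n) : wmon X Y u ∈ 𝒜 (emap a b u) := by
  rw [wmon, List.ofFn_eq_map, emap, Fin.prod_univ_def]
  generalize (List.finRange m) = l
  induction l with
  | nil => simpa using hone
  | cons j t ih =>
    simp only [List.map_cons, List.prod_cons]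
    exact hmul _ _ _ (zmon_mem X Y 𝒜 hone hmul a b hX hY u j) _ ih

end Mem

end Stmt18Aux

open Stmt18Aux

/-- a complex graded-division algebra `D` with finite support, `D_e = ℂ·1`
and nondegenerate commutation bicharacter `β` admits, for any symplectic basis
`{a₁,b₁,…,a_m,b_m}` of `(T,β)` and normalized generators `X_j ∈ D_{a_j}`,
`Y_j ∈ D_{b_j}` with `X_j^{n_j} = Y_j^{n_j} = 1`, a `ℂ`-antilinear algebra automorphism
`ψ₀` with `ψ₀(X_j) = X_j⁻¹`, `ψ₀(Y_j) = Y_j`, permuting the homogeneous components and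
inducing on `T` the automorphism `τ : a_j ↦ a_j⁻¹, b_j ↦ b_j`. -/
theorem stmt_18 {G : Type*} [CommGroup G] [Fintype G] [DecidableEq G]
    {D : Type*} [Ring D] [Algebra ℂ D]
    (𝒜 : G → Submodule ℂ D)
    (hdecomp : DirectSum.IsInternal 𝒜)
    (hone : (1 : D) ∈ 𝒜 1)
    (hmul : ∀ g h : G, ∀ x ∈ 𝒜 g, ∀ y ∈ 𝒜 h, x * y ∈ 𝒜 (g * h))
    (hdiv : ∀ g : G, ∀ x ∈ 𝒜 g, x ≠ 0 → IsUnit x)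
    (hsupp : ∀ g : G, 𝒜 g ≠ ⊥)
    (hDe : 𝒜 (1 : G) = Submodule.span ℂ {(1 : D)})
    (β : G → G → ℂˣ)
    (hβ : ∀ s t : G, ∀ x ∈ 𝒜 s, ∀ y ∈ 𝒜 t, x * y = (β s t : ℂ) • (y * x))
    (hnd : ∀ s : G, (∀ t : G, β s t = 1) → s = 1)
    (m : ℕ) (a b : Fin m → G) (n : Fin m → ℕ)
    (hgen : Subgroup.closure (Set.range a ∪ Set.range b) = ⊤)
    (hn : ∀ j, 2 ≤ n j)
    (horda : ∀ j, orderOf (a j) = n j)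
    (hordb : ∀ j, orderOf (b j) = n j)
    (hζ : ∀ j, orderOf (β (a j) (b j)) = n j)
    (hab : ∀ i j, i ≠ j → β (a i) (b j) = 1)
    (haa : ∀ i j, β (a i) (a j) = 1)
    (hbb : ∀ i j, β (b i) (b j) = 1)
    (X Y : Fin m → D)
    (hX : ∀ j, X j ∈ 𝒜 (a j)) (hXn : ∀ j, X j ^ (n j) = 1)
    (hY : ∀ j, Y j ∈ 𝒜 (b j)) (hYn : ∀ j, Y j ^ (n j) = 1) :
    ∃ (ψ : D ≃+ D) (τ : G ≃* G),
      (∀ (c : ℂ) (x : D), ψ (c • x) = (starRingEnd ℂ) c • ψ x) ∧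
      (∀ x y : D, ψ (x * y) = ψ x * ψ y) ∧
      (∀ j, ψ (X j) * X j = 1) ∧
      (∀ j, ψ (Y j) = Y j) ∧
      (∀ j, τ (a j) = (a j)⁻¹) ∧
      (∀ j, τ (b j) = b j) ∧
      (∀ g : G, ∀ x ∈ 𝒜 g, ψ x ∈ 𝒜 (τ g)) := by
  classical
  haveI hNZ : ∀ j, NeZero (n j) := fun j => ⟨by have := hn j; omega⟩
  haveI hF1 : ∀ j, Fact (1 < n j) := fun j => ⟨hn j⟩
  -- D is nontrivial
  obtain ⟨x0, hx0mem, hx0⟩ := Submodule.exists_mem_ne_zero_of_ne_bot (hsupp 1)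
  haveI : Nontrivial D := nontrivial_of_ne x0 0 hx0
  -- scalar cancellation on 1
  have hcancel : ∀ c c' : ℂ, c • (1 : D) = c' • 1 → c = c' := by
    intro c c' h
    apply (algebraMap ℂ D).injective
    rw [Algebra.algebraMap_eq_smul_one, Algebra.algebraMap_eq_smul_one, h]
  -- partial inverses
  have hXinv : ∀ j, X j * X j ^ (n j - 1) = 1 := by
    intro j
    rw [← pow_succ']
    have hj : n j - 1 + 1 = n j := by have := hn j; omega
    rw [hj, hXn j]
  have hYinv : ∀ j, Y j * Y j ^ (n j - 1) = 1 := by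
    intro j
    rw [← pow_succ']
    have hj : n j - 1 + 1 = n j := by have := hn j; omega
    rw [hj, hYn j]
  -- the scalars
  set ζ' : Fin m → ℂ := fun j => ((β (b j) (a j) : ℂˣ) : ℂ) with hζ'def
  have hsw : ∀ j, Y j * X j = ζ' j • (X j * Y j) := fun j =>
    hβ (b j) (a j) (Y j) (hY j) (X j) (hX j)
  have cXX : ∀ i j, Commute (X i) (X j) := by
    intro i j
    have h := hβ (a i) (a j) (X i) (hX i) (X j) (hX j)
    rw [haa i j] at h
    exact (show X i * X j = X j * X i by simpa using h)
  have cYY : ∀ i j, Commute (Y i) (Y j) := by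
    intro i j
    have h := hβ (b i) (b j) (Y i) (hY i) (Y j) (hY j)
    rw [hbb i j] at h
    exact (show Y i * Y j = Y j * Y i by simpa using h)
  have cXY : ∀ i j, i ≠ j → Commute (X i) (Y j) := by
    intro i j hij
    have h := hβ (a i) (b j) (X i) (hX i) (Y j) (hY j)
    rw [hab i j hij] at h
    exact (show X i * Y j = Y j * X i by simpa using h)
  -- β(a,b) * β(b,a) = 1
  have habab : ∀ j, (β (a j) (b j)) * (β (b j) (a j)) = 1 := by
    intro j
    have h1 := hβ (a j) (b j) (X j) (hX j) (Y j) (hY j)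
    have h2 := hβ (b j) (a j) (Y j) (hY j) (X j) (hX j)
    rw [h2, smul_smul] at h1
    have hPQ : (X j * Y j) * (Y j ^ (n j - 1) * X j ^ (n j - 1)) = 1 := by
      calc (X j * Y j) * (Y j ^ (n j - 1) * X j ^ (n j - 1))
          = X j * ((Y j * Y j ^ (n j - 1)) * X j ^ (n j - 1)) := by simp only [mul_assoc]
        _ = 1 := by rw [hYinv j, one_mul, hXinv j]
    have h3 := congrArg (· * (Y j ^ (n j - 1) * X j ^ (n j - 1))) h1
    simp only [smul_mul_assoc] at h3
    rw [hPQ] at h3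
    have h4 : ((β (a j) (b j) : ℂ) * (β (b j) (a j) : ℂ)) = 1 :=
      (hcancel 1 _ (by rw [one_smul]; exact h3)).symm
    ext
    push_cast
    exact h4
  have hba_inv : ∀ j, β (b j) (a j) = (β (a j) (b j))⁻¹ := fun j =>
    eq_inv_of_mul_eq_one_right (habab j)
  have hζn : ∀ j, ζ' j ^ (n j) = 1 := by
    intro j
    have h1 : (β (a j) (b j)) ^ (n j) = 1 := by rw [← hζ j]; exact pow_orderOf_eq_one _
    have h2 : (β (b j) (a j)) ^ (n j) = 1 := by
      rw [hba_inv j, inv_pow, h1, inv_one]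
    show ((β (b j) (a j) : ℂˣ) : ℂ) ^ (n j) = 1
    rw [← Units.val_pow_eq_pow_val, h2, Units.val_one]
  have hζord : ∀ j, orderOf (ζ' j) = n j := by
    intro j
    have : orderOf (ζ' j) = orderOf (β (b j) (a j)) := orderOf_units
    rw [this, hba_inv j, orderOf_inv, hζ j]
  have hζne : ∀ j, ζ' j ≠ 0 := by
    intro j h
    have := hζn j
    rw [h, zero_pow (by have := hn j; omega)] at this
    exact zero_ne_one this
  -- |ζ| = 1 and conjugation
  have hconjζ : ∀ j, (starRingEnd ℂ) (ζ' j) * ζ' j = 1 := by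
    intro j
    have habs : ‖ζ' j‖ = 1 := by
      have h1 : ‖ζ' j‖ ^ (n j) = 1 := by
        rw [← norm_pow, hζn j, norm_one]
      have h0 : (0:ℝ) ≤ ‖ζ' j‖ := norm_nonneg _
      rcases lt_trichotomy (‖ζ' j‖) 1 with h | h | h
      · exfalso
        have := pow_lt_one₀ h0 h (n := n j) (by have := hn j; omega)
        rw [h1] at this; exact lt_irrefl _ this
      · exact h
      · exfalso
        have := one_lt_pow₀ h (n := n j) (by have := hn j; omega)
        rw [h1] at this; exact lt_irrefl _ this
    calc (starRingEnd ℂ) (ζ' j) * ζ' j = ζ' j * (starRingEnd ℂ) (ζ' j) := mul_comm _ _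
      _ = ((‖ζ' j‖ : ℝ) : ℂ) ^ 2 := by
          rw [Complex.mul_conj, Complex.normSq_eq_norm_sq]; push_cast; ring
      _ = 1 := by rw [habs]; norm_num
  have hconjpow : ∀ j (s : ℕ), (starRingEnd ℂ) (ζ' j ^ s) * ζ' j ^ s = 1 := by
    intro j s
    rw [map_pow, ← mul_pow, hconjζ j, one_pow]
  -- sigma involution on index
  set σm : Idx n → Idx n := fun u j => (-(u j).1, (u j).2) with hσdef
  have hσadd : ∀ u v : Idx n, σm (u + v) = σm u + σm v := by
    intro u v; funext j
    show (-((u j).1 + (v j).1), ((u j).2 + (v j).2)) = _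
    rw [neg_add]; rfl
  have hσσ : ∀ u : Idx n, σm (σm u) = u := by
    intro u; funext j
    show (-(-(u j).1), (u j).2) = u j
    rw [neg_neg]
  have hmexp_eq : ∀ u v : Idx n,
      mexp ζ' u v = ∏ j, ζ' j ^ ((u j).2.val * ((v j).1.val)) := fun _ _ => rfl
  have hconjmexp : ∀ u v : Idx n,
      (starRingEnd ℂ) (mexp ζ' u v) = mexp ζ' (σm u) (σm v) := by
    intro u v
    rw [hmexp_eq, hmexp_eq, map_prod]
    apply Finset.prod_congr rfl
    intro j _
    have hmod : (((-(v j).1).val + (v j).1.val)) % (n j) = 0 := by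
      have h := ZMod.val_add (-(v j).1) ((v j).1)
      rw [neg_add_cancel, ZMod.val_zero] at h
      exact h.symm
    have hdvd : ((u j).2.val * (((-(v j).1).val + (v j).1.val))) % (n j) = 0 := by
      obtain ⟨t, ht⟩ := Nat.dvd_of_mod_eq_zero hmod
      rw [ht, show (u j).2.val * (n j * t) = n j * ((u j).2.val * t) by ring,
        Nat.mul_mod_right]
    have hB : ζ' j ^ ((u j).2.val * ((-(v j).1).val))
        * ζ' j ^ ((u j).2.val * ((v j).1.val)) = 1 := by
      rw [← pow_add, ← Nat.left_distrib, pow_mod_eq (hζn j), hdvd, pow_zero]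
    have hA := hconjpow j ((u j).2.val * ((v j).1).val)
    have hBne : ζ' j ^ ((u j).2.val * ((v j).1).val) ≠ 0 := pow_ne_zero _ (hζne j)
    have := mul_right_cancel₀ hBne (hB.trans hA.symm)
    exact this.symm
  -- group facts
  have hapow : ∀ j, a j ^ (n j) = 1 := fun j => by rw [← horda j]; exact pow_orderOf_eq_one _
  have hbpow : ∀ j, b j ^ (n j) = 1 := fun j => by rw [← hordb j]; exact pow_orderOf_eq_one _
  have hemap_eq : ∀ u : Idx n,
      emap a b u = ∏ j, (a j ^ (u j).1.val * b j ^ (u j).2.val) := fun _ => rfl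
  have hem : ∀ u v : Idx n, emap a b (u + v) = emap a b u * emap a b v := by
    intro u v
    rw [hemap_eq, hemap_eq, hemap_eq, ← Finset.prod_mul_distrib]
    apply Finset.prod_congr rfl
    intro j _
    show a j ^ ((u j).1 + (v j).1).val * b j ^ ((u j).2 + (v j).2).val = _
    rw [pow_val_add (hapow j), pow_val_add (hbpow j)]
    exact mul_mul_mul_comm _ _ _ _
  have he0 : emap a b (0 : Idx n) = 1 := by
    rw [hemap_eq]
    apply Finset.prod_eq_one
    intro j _
    show a j ^ (0 : ZMod (n j)).val * b j ^ (0 : ZMod (n j)).val = 1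
    rw [ZMod.val_zero, pow_zero, pow_zero, one_mul]
  -- delta elements
  set δXf : (j : Fin m) → Idx n := fun j => Pi.single j ((1 : ZMod (n j)), (0 : ZMod (n j)))
    with hδX
  set δYf : (j : Fin m) → Idx n := fun j => Pi.single j ((0 : ZMod (n j)), (1 : ZMod (n j)))
    with hδY
  have heX : ∀ j, emap a b (δXf j) = a j := by
    intro j
    rw [hemap_eq, Finset.prod_eq_single j]
    · simp [hδX, Pi.single_eq_same, ZMod.val_one, ZMod.val_zero]
    · intro l _ hlj
      simp [hδX, Pi.single_eq_of_ne hlj, ZMod.val_zero]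
    · intro h; exact absurd (Finset.mem_univ j) h
  have heY : ∀ j, emap a b (δYf j) = b j := by
    intro j
    rw [hemap_eq, Finset.prod_eq_single j]
    · simp [hδY, Pi.single_eq_same, ZMod.val_one, ZMod.val_zero]
    · intro l _ hlj
      simp [hδY, Pi.single_eq_of_ne hlj, ZMod.val_zero]
    · intro h; exact absurd (Finset.mem_univ j) h
  -- monomial facts
  have hwmul : ∀ u v : Idx n, wmon X Y u * wmon X Y v = mexp ζ' u v • wmon X Y (u + v) :=
    fun u v => wmon_mul X Y ζ' hXn hYn hsw cXX cYY cXY u v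
  have hwmem : ∀ u : Idx n, wmon X Y u ∈ 𝒜 (emap a b u) :=
    fun u => wmon_mem X Y 𝒜 hone hmul a b hX hY u
  have hmexp_ne : ∀ u v : Idx n, mexp ζ' u v ≠ 0 := by
    intro u v
    rw [hmexp_eq]
    exact Finset.prod_ne_zero_iff.mpr (fun j _ => pow_ne_zero _ (hζne j))
  have hw0 : wmon X Y (0 : Idx n) = 1 := wmon_zero X Y
  have hwinv : ∀ u : Idx n, wmon X Y u * wmon X Y (-u) = mexp ζ' u (-u) • 1 := by
    intro u; rw [hwmul, add_neg_cancel, hw0]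
  have hwc : ∀ (s : Idx n) (c c' : ℂ), c • wmon X Y s = c' • wmon X Y s → c = c' := by
    intro s c c' h
    have h2 := congrArg (· * wmon X Y (-s)) h
    simp only [smul_mul_assoc] at h2
    rw [hwinv s, smul_smul, smul_smul] at h2
    exact mul_right_cancel₀ (hmexp_ne s (-s)) (hcancel _ _ h2)
  have hwne : ∀ u : Idx n, wmon X Y u ≠ 0 := by
    intro u h
    have h1 := hwinv u
    rw [h, zero_mul] at h1
    have h2 : (0:ℂ) • (1:D) = mexp ζ' u (-u) • 1 := by rw [zero_smul]; exact h1
    exact hmexp_ne u (-u) (hcancel _ _ h2).symm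
  -- homogeneous components are spanned by monomials
  have hdim : ∀ (g : G) (x : D), x ∈ 𝒜 g → ∀ u : Idx n, emap a b u = g →
      ∃ c : ℂ, x = c • wmon X Y u := by
    intro g x hx u hu
    have hprod : g * emap a b (-u) = 1 := by
      rw [← hu, ← hem, add_neg_cancel, he0]
    have h1 : x * wmon X Y (-u) ∈ 𝒜 1 := by
      have := hmul g (emap a b (-u)) x hx _ (hwmem (-u))
      rwa [hprod] at this
    rw [hDe] at h1
    obtain ⟨c', hc'⟩ := Submodule.mem_span_singleton.mp h1
    have h3 : x * (wmon X Y (-u) * wmon X Y u) = mexp ζ' (-u) u • x := by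
      rw [hwmul, neg_add_cancel, hw0, mul_smul_comm, mul_one]
    have h4 : mexp ζ' (-u) u • x = c' • wmon X Y u := by
      rw [← h3, ← mul_assoc, ← hc', smul_mul_assoc, one_mul]
    refine ⟨(mexp ζ' (-u) u)⁻¹ * c', ?_⟩
    rw [mul_smul, ← h4, inv_smul_smul₀ (hmexp_ne (-u) u)]
  -- kernel of emap is trivial
  have hker : ∀ t : Idx n, emap a b t = 1 → t = 0 := by
    intro t ht
    obtain ⟨c, hc⟩ := hdim 1 (wmon X Y t) (by rw [← ht]; exact hwmem t) 0 he0
    rw [hw0] at hc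
    have key : ∀ δ : Idx n, mexp ζ' δ t = mexp ζ' t δ := by
      intro δ
      apply hwc (δ + t)
      have l1 : wmon X Y δ * wmon X Y t = mexp ζ' δ t • wmon X Y (δ + t) := hwmul δ t
      have l2 : wmon X Y t * wmon X Y δ = mexp ζ' t δ • wmon X Y (δ + t) := by
        rw [hwmul t δ, add_comm t δ]
      rw [← l1, ← l2, hc, smul_mul_assoc, mul_smul_comm, one_mul, mul_one]
    funext l
    have h1 : (t l).1 = 0 := by
      have e1 : mexp ζ' (δYf l) t = ζ' l ^ ((t l).1.val) := by
        rw [hmexp_eq, Finset.prod_eq_single l]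
        · simp [hδY, Pi.single_eq_same, ZMod.val_one]
        · intro i _ hil
          simp [hδY, Pi.single_eq_of_ne hil, ZMod.val_zero]
        · intro h; exact absurd (Finset.mem_univ l) h
      have e2 : mexp ζ' t (δYf l) = 1 := by
        rw [hmexp_eq]
        apply Finset.prod_eq_one
        intro i _
        by_cases hil : i = l
        · subst hil; simp [hδY, Pi.single_eq_same, ZMod.val_zero]
        · simp [hδY, Pi.single_eq_of_ne hil, ZMod.val_zero]
      have hone' : ζ' l ^ ((t l).1.val) = 1 := by rw [← e1, key (δYf l), e2]
      have hdvd : n l ∣ (t l).1.val := by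
        have hd := orderOf_dvd_of_pow_eq_one hone'
        rwa [hζord l] at hd
      exact (ZMod.val_eq_zero _).mp (Nat.eq_zero_of_dvd_of_lt hdvd (ZMod.val_lt _))
    have h2 : (t l).2 = 0 := by
      have e3 : mexp ζ' (δXf l) t = 1 := by
        rw [hmexp_eq]
        apply Finset.prod_eq_one
        intro i _
        by_cases hil : i = l
        · subst hil; simp [hδX, Pi.single_eq_same, ZMod.val_zero]
        · simp [hδX, Pi.single_eq_of_ne hil, ZMod.val_zero]
      have e4 : mexp ζ' t (δXf l) = ζ' l ^ ((t l).2.val) := by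
        rw [hmexp_eq, Finset.prod_eq_single l]
        · simp [hδX, Pi.single_eq_same, ZMod.val_one]
        · intro i _ hil
          simp [hδX, Pi.single_eq_of_ne hil, ZMod.val_zero]
        · intro h; exact absurd (Finset.mem_univ l) h
      have hone' : ζ' l ^ ((t l).2.val) = 1 := by rw [← e4, ← key (δXf l), e3]
      have hdvd : n l ∣ (t l).2.val := by
        have hd := orderOf_dvd_of_pow_eq_one hone'
        rwa [hζord l] at hd
      exact (ZMod.val_eq_zero _).mp (Nat.eq_zero_of_dvd_of_lt hdvd (ZMod.val_lt _))
    show t l = (0 : ZMod (n l) × ZMod (n l))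
    rw [Prod.ext_iff]
    exact ⟨h1, h2⟩
  have heinv : ∀ u : Idx n, emap a b (-u) = (emap a b u)⁻¹ := by
    intro u
    apply eq_inv_of_mul_eq_one_left
    rw [← hem, neg_add_cancel, he0]
  have heinj : Function.Injective (fun u : Idx n => emap a b u) := by
    intro u v h
    have h' : emap a b u = emap a b v := h
    have h0 : emap a b (u + -v) = 1 := by
      rw [hem, heinv, h', mul_inv_cancel]
    have h1 := hker _ h0
    have h2 := congrArg (· + v) h1
    simpa using h2
  have hesurj : Function.Surjective (fun u : Idx n => emap a b u) := by
    let S : Subgroup G :=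
      { carrier := Set.range (fun u : Idx n => emap a b u)
        one_mem' := ⟨0, he0⟩
        mul_mem' := by rintro x y ⟨u, rfl⟩ ⟨v, rfl⟩; exact ⟨u + v, hem u v⟩
        inv_mem' := by rintro x ⟨u, rfl⟩; exact ⟨-u, heinv u⟩ }
    intro g
    have htop : (⊤ : Subgroup G) ≤ S := by
      rw [← hgen]
      refine (Subgroup.closure_le S).mpr ?_
      rintro x (⟨j, rfl⟩ | ⟨j, rfl⟩)
      · exact ⟨δXf j, heX j⟩
      · exact ⟨δYf j, heY j⟩
    exact htop (Subgroup.mem_top g)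
  -- linear algebra: monomials form a basis
  have hind : iSupIndep (fun u : Idx n => 𝒜 (emap a b u)) :=
    (hdecomp.submodule_iSupIndep).comp heinj
  haveI : NoZeroSMulDivisors ℂ D := by
    constructor
    intro c x h
    by_cases hc : c = 0
    · exact Or.inl hc
    · right
      have h2 := congrArg (fun y => c⁻¹ • y) h
      simpa [smul_smul, inv_mul_cancel₀ hc] using h2
  have li : LinearIndependent ℂ (fun u : Idx n => wmon X Y u) :=
    iSupIndep.linearIndependent _ hind (fun u => hwmem u) (fun u => hwne u)
  have hspan : ⊤ ≤ Submodule.span ℂ (Set.range (fun u : Idx n => wmon X Y u)) := by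
    rw [← hdecomp.submodule_iSup_eq_top]
    apply iSup_le
    intro g x hx
    obtain ⟨u, hu⟩ := hesurj g
    obtain ⟨c, rfl⟩ := hdim g x hx u hu
    exact Submodule.smul_mem _ _ (Submodule.subset_span ⟨u, rfl⟩)
  let B : Module.Basis (Idx n) ℂ D := Module.Basis.mk li hspan
  have hB : ∀ u : Idx n, B u = wmon X Y u := fun u => Module.Basis.mk_apply li hspan u
  -- the antilinear map
  let Ff : D → D := fun x => ∑ u : Idx n, (starRingEnd ℂ) (B.repr x u) • wmon X Y (σm u)
  have hFf : ∀ x : D,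
      Ff x = ∑ u : Idx n, (starRingEnd ℂ) (B.repr x u) • wmon X Y (σm u) := fun _ => rfl
  have hFadd : ∀ x y : D, Ff (x + y) = Ff x + Ff y := by
    intro x y
    simp only [hFf, map_add, Finsupp.add_apply, add_smul]
    rw [Finset.sum_add_distrib]
  let Fhom : D →+ D := AddMonoidHom.mk' Ff hFadd
  have hFsum : ∀ (s : Finset (Idx n)) (f : Idx n → D),
      Ff (∑ u ∈ s, f u) = ∑ u ∈ s, Ff (f u) := fun s f => map_sum Fhom f s
  have hFsmulw : ∀ (c : ℂ) (u : Idx n),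
      Ff (c • wmon X Y u) = (starRingEnd ℂ) c • wmon X Y (σm u) := by
    intro c u
    have hrepr : B.repr (c • wmon X Y u) = c • Finsupp.single u 1 := by
      rw [map_smul, ← hB u, B.repr_self]
    rw [hFf, hrepr, Finset.sum_eq_single u]
    · simp
    · intro u' _ hne
      simp [Finsupp.single_eq_of_ne hne]
    · intro h; exact absurd (Finset.mem_univ u) h
  have hexp : ∀ x : D, x = ∑ u : Idx n, B.repr x u • wmon X Y u := by
    intro x
    simp only [← hB]
    exact (B.sum_repr x).symm
  have hFsmul : ∀ (c : ℂ) (x : D), Ff (c • x) = (starRingEnd ℂ) c • Ff x := by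
    intro c x
    rw [hFf, hFf, Finset.smul_sum]
    apply Finset.sum_congr rfl
    intro u _
    rw [map_smul, Finsupp.smul_apply, smul_eq_mul, map_mul, mul_smul]
  have hFmul : ∀ x y : D, Ff (x * y) = Ff x * Ff y := by
    intro x y
    have hxy : x * y = ∑ u : Idx n, ∑ v : Idx n,
        ((B.repr x u) * ((B.repr y v) * mexp ζ' u v)) • wmon X Y (u + v) := by
      conv_lhs => rw [hexp x, hexp y]
      rw [Finset.sum_mul]
      apply Finset.sum_congr rfl
      intro u _
      rw [Finset.mul_sum]
      apply Finset.sum_congr rfl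
      intro v _
      rw [smul_mul_assoc, mul_smul_comm, hwmul, smul_smul, smul_smul, mul_assoc]
    rw [hxy, hFsum]
    have hinner : ∀ u : Idx n,
        Ff (∑ v : Idx n, ((B.repr x u) * ((B.repr y v) * mexp ζ' u v)) • wmon X Y (u + v))
          = ∑ v : Idx n, (starRingEnd ℂ) ((B.repr x u) * ((B.repr y v) * mexp ζ' u v))
              • wmon X Y (σm (u + v)) := by
      intro u
      rw [hFsum]
      apply Finset.sum_congr rfl
      intro v _
      rw [hFsmulw]
    rw [Finset.sum_congr rfl (fun u _ => hinner u), hFf x, hFf y, Finset.sum_mul]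
    apply Finset.sum_congr rfl
    intro u _
    rw [Finset.mul_sum]
    apply Finset.sum_congr rfl
    intro v _
    rw [smul_mul_assoc, mul_smul_comm, hwmul, smul_smul, smul_smul, hσadd]
    congr 1
    rw [map_mul, map_mul, hconjmexp]
    ring
  have hFF : ∀ x : D, Ff (Ff x) = x := by
    intro x
    rw [hFf x, hFsum]
    have hterm : ∀ u : Idx n,
        Ff ((starRingEnd ℂ) (B.repr x u) • wmon X Y (σm u)) = B.repr x u • wmon X Y u := by
      intro u
      rw [hFsmulw, Complex.conj_conj, hσσ]
    rw [Finset.sum_congr rfl (fun u _ => hterm u)]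
    exact (hexp x).symm
  -- delta monomials
  have hwX : ∀ j, wmon X Y (δXf j) = X j := by
    intro j
    rw [wmon_eq_single X Y (δXf j) j (fun i hij => by simp [hδX, Pi.single_eq_of_ne hij])]
    show X j ^ ((δXf j j).1.val) * Y j ^ ((δXf j j).2.val) = X j
    simp [hδX, Pi.single_eq_same, ZMod.val_one, ZMod.val_zero]
  have hwY : ∀ j, wmon X Y (δYf j) = Y j := by
    intro j
    rw [wmon_eq_single X Y (δYf j) j (fun i hij => by simp [hδY, Pi.single_eq_of_ne hij])]
    show X j ^ ((δYf j j).1.val) * Y j ^ ((δYf j j).2.val) = Y j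
    simp [hδY, Pi.single_eq_same, ZMod.val_one, ZMod.val_zero]
  have hadd0 : ∀ j, σm (δXf j) + δXf j = 0 := by
    intro j
    funext l
    show (-(δXf j l).1 + (δXf j l).1, (δXf j l).2 + (δXf j l).2)
        = ((0 : ZMod (n l)), (0 : ZMod (n l)))
    by_cases hlj : l = j
    · subst hlj; simp [hδX, Pi.single_eq_same]
    · simp [hδX, Pi.single_eq_of_ne hlj]
  have hσYfix : ∀ j, σm (δYf j) = δYf j := by
    intro j
    funext l
    show (-(δYf j l).1, (δYf j l).2) = δYf j l
    by_cases hlj : l = j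
    · subst hlj; simp [hδY, Pi.single_eq_same]
    · simp [hδY, Pi.single_eq_of_ne hlj]
  -- the group automorphism
  let eqv : Idx n ≃ G := Equiv.ofBijective _ ⟨heinj, hesurj⟩
  have heqv : ∀ u : Idx n, eqv u = emap a b u := fun u => rfl
  have hsymm : ∀ u : Idx n, eqv.symm (emap a b u) = u := by
    intro u
    have h2 : eqv (eqv.symm (emap a b u)) = eqv u := by rw [Equiv.apply_symm_apply, heqv]
    exact eqv.injective h2
  have happly : ∀ g : G, emap a b (eqv.symm g) = g := fun g => eqv.apply_symm_apply g
  have hsymm_mul : ∀ g h : G, eqv.symm (g * h) = eqv.symm g + eqv.symm h := by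
    intro g h
    apply heinj
    show emap a b _ = emap a b _
    rw [hem, happly, happly, happly]
  let τ : G ≃* G :=
    { toFun := fun g => emap a b (σm (eqv.symm g))
      invFun := fun g => emap a b (σm (eqv.symm g))
      left_inv := by
        intro g
        show emap a b (σm (eqv.symm (emap a b (σm (eqv.symm g))))) = g
        rw [hsymm, hσσ, happly]
      right_inv := by
        intro g
        show emap a b (σm (eqv.symm (emap a b (σm (eqv.symm g))))) = g
        rw [hsymm, hσσ, happly]
      map_mul' := by
        intro g h
        show emap a b (σm (eqv.symm (g * h))) = _
        rw [hsymm_mul, hσadd, hem] }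
  have hτ : ∀ g : G, τ g = emap a b (σm (eqv.symm g)) := fun g => rfl
  let ψ : D ≃+ D :=
    { toFun := Ff, invFun := Ff, left_inv := hFF, right_inv := hFF,
      map_add' := hFadd }
  have hψ : ∀ x : D, ψ x = Ff x := fun x => rfl
  refine ⟨ψ, τ, ?_, ?_, ?_, ?_, ?_, ?_, ?_⟩
  · intro c x
    rw [hψ, hψ]
    exact hFsmul c x
  · intro x y
    rw [hψ, hψ, hψ]
    exact hFmul x y
  · intro j
    rw [hψ]
    have hFX : Ff (X j) = wmon X Y (σm (δXf j)) := by
      conv_lhs => rw [← hwX j, ← one_smul ℂ (wmon X Y (δXf j))]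
      rw [hFsmulw, map_one, one_smul]
    have hm1 : mexp ζ' (σm (δXf j)) (δXf j) = 1 := by
      rw [hmexp_eq]
      apply Finset.prod_eq_one
      intro i _
      by_cases hij : i = j
      · subst hij; simp [hσdef, hδX, Pi.single_eq_same, ZMod.val_zero]
      · simp [hσdef, hδX, Pi.single_eq_of_ne hij, ZMod.val_zero]
    conv_lhs => rw [hFX]
    conv_lhs => rw [show X j = wmon X Y (δXf j) from (hwX j).symm]
    rw [hwmul, hadd0, hm1, one_smul, hw0]
  · intro j
    rw [hψ]
    have hFY : Ff (Y j) = wmon X Y (σm (δYf j)) := by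
      conv_lhs => rw [← hwY j, ← one_smul ℂ (wmon X Y (δYf j))]
      rw [hFsmulw, map_one, one_smul]
    rw [hFY, hσYfix, hwY]
  · intro j
    rw [hτ, show a j = emap a b (δXf j) from (heX j).symm, hsymm]
    apply eq_inv_of_mul_eq_one_left
    rw [← hem, hadd0, he0]
  · intro j
    rw [hτ, show b j = emap a b (δYf j) from (heY j).symm, hsymm, hσYfix, heY]
  · intro g x hx
    obtain ⟨c, rfl⟩ := hdim g x hx (eqv.symm g) (happly g)
    rw [hψ, hFsmulw, hτ]
    exact Submodule.smul_mem _ _ (hwmem (σm (eqv.symm g)))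
end

section
/- Let D be a graded-division algebra over a field L with abelian support T and D_e = L·1, so D is a twisted group algebra L^σ T for a 2-cocycle σ : T × T → Lˣ with trivial action. Then the Weyl group W(Γ_D) of the grading is contained in Aut(T, β) = {α ∈ Aut(T) | β(α(s), α(t)) = β(s,t) for all s,t}, where β(s,t) = σ(s,t)/σ(t,s) is the associated alternating bicharacter. Moreover, if Ext_ℤ(T, Lˣ) = 0 (e.g., T finite of exponent n and every element of Lˣ an n-th power), then W(Γ_D) = Aut(T, β). -/
/-- for a graded-division algebra `D` over a field `L` with abelian
support and `D_e = L·1` (a twisted group algebra of `T`), every element of the Weyl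
group (automorphism of `T` induced by an algebra automorphism of `D` permuting the
components) preserves the commutation bicharacter `β`; and if every symmetric 2-cocycle
`T × T → Lˣ` is a coboundary (i.e. `Ext_ℤ(T, Lˣ) = 0`), then conversely every
automorphism of `T` preserving `β` lies in the Weyl group. -/
theorem stmt_19 {L : Type*} [Field L] {G : Type*} [CommGroup G] [DecidableEq G]
    {D : Type*} [Ring D] [Algebra L D]
    (𝒜 : G → Submodule L D)
    (hdecomp : DirectSum.IsInternal 𝒜)
    (hone : (1 : D) ∈ 𝒜 1)
    (hmul : ∀ g h : G, ∀ x ∈ 𝒜 g, ∀ y ∈ 𝒜 h, x * y ∈ 𝒜 (g * h))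
    (hdiv : ∀ g : G, ∀ x ∈ 𝒜 g, x ≠ 0 → IsUnit x)
    (hsupp : ∀ g : G, 𝒜 g ≠ ⊥)
    (hDe : 𝒜 (1 : G) = Submodule.span L {(1 : D)})
    (β : G → G → Lˣ)
    (hβ : ∀ s t : G, ∀ x ∈ 𝒜 s, ∀ y ∈ 𝒜 t, x * y = (β s t : L) • (y * x)) :
    (∀ α : G ≃* G,
      (∃ ψ : D ≃ₐ[L] D, ∀ g : G, (𝒜 g).map ψ.toLinearMap = 𝒜 (α g)) →
      ∀ s t : G, β (α s) (α t) = β s t) ∧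
    ((∀ σ : G → G → Lˣ, (∀ s t : G, σ s t = σ t s) →
        (∀ s t u : G, σ s t * σ (s * t) u = σ t u * σ s (t * u)) →
        ∃ ν : G → Lˣ, ∀ s t : G, σ s t = ν s * ν t * (ν (s * t))⁻¹) →
      ∀ α : G ≃* G, (∀ s t : G, β (α s) (α t) = β s t) →
        ∃ ψ : D ≃ₐ[L] D, ∀ g : G, (𝒜 g).map ψ.toLinearMap = 𝒜 (α g)) := by
  classical
  -- nontriviality
  have h10 : (1 : D) ≠ 0 := by
    intro h
    apply hsupp 1
    rw [hDe, h, Submodule.span_zero_singleton]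
  haveI : Nontrivial D := nontrivial_of_ne 1 0 h10
  -- choose nonzero homogeneous elements
  have hx' : ∀ g : G, ∃ v : D, v ∈ 𝒜 g ∧ v ≠ 0 := by
    intro g
    obtain ⟨v, hv, hvne⟩ := (Submodule.ne_bot_iff _).1 (hsupp g)
    exact ⟨v, hv, hvne⟩
  choose x hxmem hxne using hx'
  choose u hu using fun g => hdiv g (x g) (hxmem g) (hxne g)
  -- decomposition instance
  letI := hdecomp.chooseDecomposition
  -- scalar cancellation
  have hcancel : ∀ (g : G) (c d : L), c • x g = d • x g → c = d := by
    intro g c d h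
    by_contra hne
    have : (c - d) • x g = 0 := by rw [sub_smul, h, sub_self]
    rcases smul_eq_zero.1 this with h1 | h2
    · exact hne (sub_eq_zero.1 h1)
    · exact hxne g h2
  -- homogeneity of inverses
  have hinv : ∀ g : G, (((u g)⁻¹ : Dˣ) : D) ∈ 𝒜 g⁻¹ := by
    intro g
    set v : D := (((u g)⁻¹ : Dˣ) : D) with hv
    have hxv : x g * v = 1 := by rw [← hu g, hv, Units.mul_inv]
    -- projection maps
    have hcomp : ∀ h : G, h ≠ g⁻¹ → ((DirectSum.decompose 𝒜 v h : D)) = 0 := by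
      intro h hne
      set π : D →ₗ[L] D :=
        (𝒜 (g * h)).subtype ∘ₗ (DFinsupp.lapply (g * h)) ∘ₗ
          (DirectSum.decomposeLinearEquiv 𝒜).toLinearMap with hπ
      have hπ_apply : ∀ w : D, π w = ((DirectSum.decompose 𝒜 w) (g * h) : D) := fun w => rfl
      have hsum := DirectSum.sum_support_decompose 𝒜 v
      have h1 : π 1 = 0 := by
        rw [hπ_apply]
        exact DirectSum.decompose_of_mem_ne 𝒜 hone (by
          intro hc
          exact hne (by rw [eq_inv_iff_mul_eq_one, mul_comm]; exact hc.symm ▸ rfl))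
      have h2 : π (x g * v) = x g * (DirectSum.decompose 𝒜 v h : D) := by
        conv_lhs => rw [← hsum]
        rw [Finset.mul_sum, map_sum]
        rw [Finset.sum_eq_single h]
        · rw [hπ_apply]
          exact DirectSum.decompose_of_mem_same 𝒜
            (hmul g h (x g) (hxmem g) _ (DirectSum.decompose 𝒜 v h).2)
        · intro i _ hih
          rw [hπ_apply]
          exact DirectSum.decompose_of_mem_ne 𝒜
            (hmul g i (x g) (hxmem g) _ (DirectSum.decompose 𝒜 v i).2)
            (by simpa using hih)
        · intro hnotin
          rw [DFinsupp.notMem_support_iff.1 hnotin]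
          simp [hπ_apply]
      have h3 : x g * (DirectSum.decompose 𝒜 v h : D) = 0 := by
        rw [← h2, hxv, h1]
      have := congrArg (fun w : D => (((u g)⁻¹ : Dˣ) : D) * w) h3
      simpa [← hu g, ← mul_assoc] using this
    have hsum := DirectSum.sum_support_decompose 𝒜 v
    rw [← hsum]
    apply Submodule.sum_mem
    intro i hi
    by_cases hig : i = g⁻¹
    · subst hig; exact (DirectSum.decompose 𝒜 v g⁻¹).2
    · rw [hcomp i hig]; exact (𝒜 g⁻¹).zero_mem
  -- one-dimensionality
  have hrep : ∀ g : G, ∀ y ∈ 𝒜 g, ∃ c : L, y = c • x g := by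
    intro g y hy
    have h1 : y * (((u g)⁻¹ : Dˣ) : D) ∈ 𝒜 1 := by
      have := hmul g g⁻¹ y hy _ (hinv g)
      rwa [mul_inv_cancel] at this
    rw [hDe] at h1
    obtain ⟨c, hc⟩ := Submodule.mem_span_singleton.1 h1
    refine ⟨c, ?_⟩
    have : (y * (((u g)⁻¹ : Dˣ) : D)) * x g = y := by
      rw [mul_assoc, ← hu g, Units.inv_mul, mul_one]
    rw [← this, ← hc, smul_mul_assoc, one_mul]
  -- the 2-cocycle σ
  have hσ' : ∀ s t : G, ∃ c : L, x s * x t = c • x (s * t) := fun s t =>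
    hrep (s * t) _ (hmul s t (x s) (hxmem s) (x t) (hxmem t))
  choose σ hσ using hσ'
  have hxxne : ∀ s t : G, x s * x t ≠ 0 := by
    intro s t
    rw [← hu s, ← hu t, ← Units.val_mul]
    exact Units.ne_zero _
  have hσne : ∀ s t : G, σ s t ≠ 0 := by
    intro s t h
    apply hxxne s t
    rw [hσ s t, h, zero_smul]
  -- β relation
  have hσβ : ∀ s t : G, σ s t = (β s t : L) * σ t s := by
    intro s t
    apply hcancel (s * t)
    rw [← hσ s t, hβ s t (x s) (hxmem s) (x t) (hxmem t), hσ t s, mul_comm t s, smul_smul]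
  -- cocycle identity
  have hσcoc : ∀ s t w : G, σ s t * σ (s * t) w = σ t w * σ s (t * w) := by
    intro s t w
    apply hcancel (s * t * w)
    have h1 : (x s * x t) * x w = (σ s t * σ (s * t) w) • x (s * t * w) := by
      rw [hσ s t, smul_mul_assoc, hσ (s * t) w, smul_smul]
    have h2 : x s * (x t * x w) = (σ t w * σ s (t * w)) • x (s * t * w) := by
      rw [hσ t w, mul_smul_comm, hσ s (t * w), smul_smul, mul_assoc]
    rw [← h1, ← h2, mul_assoc]
  constructor
  · -- Part 1
    rintro α ⟨ψ, hψ⟩ s t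
    have hmem : ∀ g : G, ∀ y ∈ 𝒜 g, ψ y ∈ 𝒜 (α g) := by
      intro g y hy
      rw [← hψ g]
      exact ⟨y, hy, rfl⟩
    have hinj : Function.Injective ψ := ψ.injective
    have hw : ψ (x t) * ψ (x s) ≠ 0 := by
      have : x t * x s ≠ 0 := hxxne t s
      rw [← map_mul]
      intro h
      exact this (hinj (by rw [h, map_zero]))
    have e1 : ψ (x s) * ψ (x t) = (β (α s) (α t) : L) • (ψ (x t) * ψ (x s)) :=
      hβ (α s) (α t) (ψ (x s)) (hmem s _ (hxmem s)) (ψ (x t)) (hmem t _ (hxmem t))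
    have e2 : ψ (x s) * ψ (x t) = (β s t : L) • (ψ (x t) * ψ (x s)) := by
      rw [← map_mul, ← map_mul, hβ s t (x s) (hxmem s) (x t) (hxmem t), map_smul, map_mul]
    have e3 : ((β (α s) (α t) : L) - (β s t : L)) • (ψ (x t) * ψ (x s)) = 0 := by
      rw [sub_smul, ← e1, ← e2, sub_self]
    rcases smul_eq_zero.1 e3 with h1 | h2
    · exact Units.ext (sub_eq_zero.1 h1)
    · exact absurd h2 hw
  · -- Part 2
    intro hExt α hαβ
    set σu : G → G → Lˣ := fun s t => Units.mk0 (σ s t) (hσne s t) with hσudef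
    have hσuval : ∀ s t : G, (σu s t : L) = σ s t := fun s t => rfl
    set σ' : G → G → Lˣ := fun s t => σu (α s) (α t) * (σu s t)⁻¹ with hσ'def
    have hσ'symm : ∀ s t : G, σ' s t = σ' t s := by
      intro s t
      apply Units.ext
      have h1 := hσβ (α s) (α t)
      rw [hαβ s t] at h1
      have h2 := hσβ s t
      have hb : (β s t : L) ≠ 0 := Units.ne_zero _
      have hts : σ t s ≠ 0 := hσne t s
      simp only [hσ'def, Units.val_mul, Units.val_inv_eq_inv_val, hσuval]
      rw [h1, h2]
      field_simp
    have hσ'coc : ∀ s t w : G, σ' s t * σ' (s * t) w = σ' t w * σ' s (t * w) := by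
      intro s t w
      apply Units.ext
      have A := hσcoc (α s) (α t) (α w)
      have P := hσcoc s t w
      have n1 : σ s t ≠ 0 := hσne s t
      have n2 : σ (s * t) w ≠ 0 := hσne (s * t) w
      have n3 : σ t w ≠ 0 := hσne t w
      have n4 : σ s (t * w) ≠ 0 := hσne s (t * w)
      simp only [hσ'def, Units.val_mul, Units.val_inv_eq_inv_val, hσuval, map_mul]
      field_simp
      linear_combination (σ t w * σ s (t * w)) * A - (σ (α t) (α w) * σ (α s) (α t * α w)) * P
    obtain ⟨ν, hν⟩ := hExt σ' hσ'symm hσ'coc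
    have hν1 : ν 1 = 1 := by
      have h := hν 1 1
      rw [mul_one, mul_inv_cancel_right] at h
      rw [← h]
      apply Units.ext
      simp only [hσ'def, map_one, Units.val_mul, Units.val_inv_eq_inv_val, hσuval]
      field_simp
      exact div_self (hσne 1 1)
    have hkey : ∀ s t : G, σ s t * (((ν (s * t))⁻¹ : Lˣ) : L)
        = (((ν s)⁻¹ : Lˣ) : L) * (((ν t)⁻¹ : Lˣ) : L) * σ (α s) (α t) := by
      intro s t
      have h := congrArg Units.val (hν s t)
      simp only [hσ'def, Units.val_mul, Units.val_inv_eq_inv_val, hσuval] at h ⊢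
      have h1 : σ s t ≠ 0 := hσne s t
      have h2 : (ν s : L) ≠ 0 := Units.ne_zero _
      have h3 : (ν t : L) ≠ 0 := Units.ne_zero _
      have h4 : (ν (s * t) : L) ≠ 0 := Units.ne_zero _
      field_simp at h ⊢
      linear_combination -h
    -- the candidate automorphism
    set ψc : ∀ g : G, 𝒜 g →ₗ[L] D := fun g =>
      ((((ν g)⁻¹ : Lˣ) : L) •
        ((LinearMap.mulRight L ((((u g)⁻¹ : Dˣ) : D) * x (α g))).comp (𝒜 g).subtype)) with hψc
    set ψ₀ : D →ₗ[L] D :=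
      (DirectSum.toModule L G D ψc).comp (DirectSum.decomposeLinearEquiv 𝒜).toLinearMap with hψ₀def
    have hψ₀ : ∀ (g : G) (y : D), y ∈ 𝒜 g →
        ψ₀ y = (((ν g)⁻¹ : Lˣ) : L) • (y * ((((u g)⁻¹ : Dˣ) : D) * x (α g))) := by
      intro g y hy
      have hdec : DirectSum.decompose 𝒜 y = DirectSum.of _ g ⟨y, hy⟩ :=
        DirectSum.decompose_of_mem 𝒜 hy
      rw [hψ₀def]
      simp only [LinearMap.comp_apply, LinearEquiv.coe_toLinearMap,
        DirectSum.decomposeLinearEquiv_apply, hdec, ← DirectSum.lof_eq_of L,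
        DirectSum.toModule_lof]
      rfl
    set φc : ∀ g : G, 𝒜 g →ₗ[L] D := fun g =>
      (((ν (α.symm g) : Lˣ) : L) •
        ((LinearMap.mulRight L ((((u g)⁻¹ : Dˣ) : D) * x (α.symm g))).comp (𝒜 g).subtype)) with hφc
    set φ₀ : D →ₗ[L] D :=
      (DirectSum.toModule L G D φc).comp (DirectSum.decomposeLinearEquiv 𝒜).toLinearMap with hφ₀def
    have hφ₀ : ∀ (g : G) (y : D), y ∈ 𝒜 g →
        φ₀ y = ((ν (α.symm g) : Lˣ) : L) • (y * ((((u g)⁻¹ : Dˣ) : D) * x (α.symm g))) := by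
      intro g y hy
      have hdec : DirectSum.decompose 𝒜 y = DirectSum.of _ g ⟨y, hy⟩ :=
        DirectSum.decompose_of_mem 𝒜 hy
      rw [hφ₀def]
      simp only [LinearMap.comp_apply, LinearEquiv.coe_toLinearMap,
        DirectSum.decomposeLinearEquiv_apply, hdec, ← DirectSum.lof_eq_of L,
        DirectSum.toModule_lof]
      rfl
    have hψx : ∀ g : G, ψ₀ (x g) = (((ν g)⁻¹ : Lˣ) : L) • x (α g) := by
      intro g
      rw [hψ₀ g (x g) (hxmem g), ← mul_assoc, ← hu g, Units.mul_inv, one_mul]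
    have hφx : ∀ g : G, φ₀ (x g) = ((ν (α.symm g) : Lˣ) : L) • x (α.symm g) := by
      intro g
      rw [hφ₀ g (x g) (hxmem g), ← mul_assoc, ← hu g, Units.mul_inv, one_mul]
    have hmem_top : ∀ v : D, v ∈ ⨆ g, 𝒜 g := by
      intro v
      rw [hdecomp.submodule_iSup_eq_top]
      trivial
    have hφψ : ∀ v : D, φ₀ (ψ₀ v) = v := by
      intro v
      refine Submodule.iSup_induction 𝒜 (motive := fun w => φ₀ (ψ₀ w) = w) (hmem_top v)
        ?_ (by simp) ?_
      · intro g y hy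
        obtain ⟨c, rfl⟩ := hrep g y hy
        simp only [map_smul, hψx, hφx, α.symm_apply_apply, smul_smul,
          Units.val_inv_eq_inv_val]
        congr 1
        field_simp
      · intro a b ha hb
        rw [map_add, map_add, ha, hb]
    have hψφ : ∀ v : D, ψ₀ (φ₀ v) = v := by
      intro v
      refine Submodule.iSup_induction 𝒜 (motive := fun w => ψ₀ (φ₀ w) = w) (hmem_top v)
        ?_ (by simp) ?_
      · intro g y hy
        obtain ⟨c, rfl⟩ := hrep g y hy
        simp only [map_smul, hψx, hφx, α.apply_symm_apply, smul_smul,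
          Units.val_inv_eq_inv_val]
        congr 1
        field_simp
      · intro a b ha hb
        rw [map_add, map_add, ha, hb]
    have hψ1 : ψ₀ 1 = 1 := by
      rw [hψ₀ 1 1 hone, one_mul]
      simp only [map_one]
      rw [← hu 1, Units.inv_mul, hν1]
      simp
    have hmulhom : ∀ (s t : G) (y z : D), y ∈ 𝒜 s → z ∈ 𝒜 t →
        ψ₀ (y * z) = ψ₀ y * ψ₀ z := by
      intro s t y z hy hz
      obtain ⟨c, rfl⟩ := hrep s y hy
      obtain ⟨d, rfl⟩ := hrep t z hz
      have hyz : (c • x s) * (d • x t) = (c * (d * σ s t)) • x (s * t) := by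
        rw [smul_mul_assoc, mul_smul_comm, hσ s t, smul_smul, smul_smul, mul_assoc]
      rw [hyz, map_smul, hψx (s * t), map_smul, map_smul, hψx s, hψx t,
        smul_mul_assoc, smul_mul_assoc, mul_smul_comm, mul_smul_comm, hσ (α s) (α t),
        ← map_mul α s t, smul_smul, smul_smul, smul_smul, smul_smul, smul_smul]
      congr 1
      linear_combination (c * d) * hkey s t
    have hmul_all : ∀ a b : D, ψ₀ (a * b) = ψ₀ a * ψ₀ b := by
      intro a
      refine Submodule.iSup_induction 𝒜 (motive := fun w => ∀ b, ψ₀ (w * b) = ψ₀ w * ψ₀ b)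
        (hmem_top a) ?_ (by simp) ?_
      · intro s y hy b
        refine Submodule.iSup_induction 𝒜 (motive := fun w => ψ₀ (y * w) = ψ₀ y * ψ₀ w)
          (hmem_top b) ?_ (by simp) ?_
        · intro t z hz
          exact hmulhom s t y z hy hz
        · intro z1 z2 h1 h2
          rw [mul_add, map_add, h1, h2, map_add, mul_add]
      · intro a1 a2 h1 h2 b
        rw [add_mul, map_add, h1, h2, map_add, add_mul]
    set e : D ≃ₗ[L] D := LinearEquiv.ofLinear ψ₀ φ₀ (LinearMap.ext hψφ) (LinearMap.ext hφψ)
      with hedef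
    have hone' : e 1 = 1 := hψ1
    have hmul' : ∀ a b : D, e (a * b) = e a * e b := hmul_all
    have hspan : ∀ g : G, 𝒜 g = Submodule.span L {x g} := by
      intro g
      apply le_antisymm
      · intro y hy
        obtain ⟨c, rfl⟩ := hrep g y hy
        exact Submodule.smul_mem _ c (Submodule.mem_span_singleton_self _)
      · rw [Submodule.span_singleton_le_iff_mem]
        exact hxmem g
    refine ⟨AlgEquiv.ofLinearEquiv e hone' hmul', fun g => ?_⟩
    have htl : (AlgEquiv.ofLinearEquiv e hone' hmul').toLinearMap = ψ₀ :=
      LinearMap.ext fun v => rfl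
    rw [htl, hspan g, hspan (α g), Submodule.map_span, Set.image_singleton, hψx g]
    exact Submodule.span_singleton_smul_eq (((ν g)⁻¹ : Lˣ).isUnit) _
end
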